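/- arXiv:1604.02225 — 10 statements merged into one kernel-verified Lean document; each statement's English description precedes it below -/
import Mathlib

section
/- Let 𝔏 = ⊕_{n∈ℤ} 𝔏_n and 𝔏' = ⊕_{n∈ℤ} 𝔏'_n be graded Lie algebras over ℂ, equipped with bilinear forms B and B' on their local parts, each satisfying conditions (i)–(v). Then every isomorphism of local Lie algebras σ̂ : 𝔏_{−1} ⊕ 𝔏₀ ⊕ 𝔏₁ → 𝔏'_{−1} ⊕ 𝔏'₀ ⊕ 𝔏'₁ (i.e. a degree-preserving linear isomorphism commuting with all brackets between local components) extends to an isomorphism of graded Lie algebras 𝔏 ≅ 𝔏'. In particular, for a given local part satisfying these conditions, the graded Lie algebra satisfying conditions (i)–(v) is unique up to isomorphism. -/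
/-- A graded Lie algebra `L = ⊕ G i` together with a bilinear form `B` on its local part
(encoded as a bilinear form on `L`, only its restriction to the local part matters),
satisfying conditions (i)–(v) of the paper. -/
def GoodGrading (L : Type) [LieRing L] [LieAlgebra ℂ L] (G : ℤ → Submodule ℂ L)
    (B : LinearMap.BilinForm ℂ L) : Prop :=
  -- internal direct sum decomposition
  iSupIndep G ∧ (⨆ i, G i) = ⊤ ∧
  -- gradation
  (∀ i j : ℤ, ∀ x ∈ G i, ∀ y ∈ G j, ⁅x, y⁆ ∈ G (i + j)) ∧
  -- generated by the local part
  (LieSubalgebra.lieSpan ℂ L ((G (-1) : Set L) ∪ (G 0 : Set L) ∪ (G 1 : Set L)) = ⊤) ∧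
  -- (i)
  (∀ i : ℤ, 1 ≤ i →
    G (i + 1) = Submodule.span ℂ {z : L | ∃ x ∈ G 1, ∃ y ∈ G i, z = ⁅x, y⁆} ∧
    G (-(i + 1)) = Submodule.span ℂ {z : L | ∃ x ∈ G (-1), ∃ y ∈ G (-i), z = ⁅x, y⁆}) ∧
  -- (ii) : nondegeneracy and 𝔏₀-invariance on G i × G (-i), i = 0, 1
  (∀ i : ℤ, (i = 0 ∨ i = 1) →
    (∀ x ∈ G i, (∀ y ∈ G (-i), B x y = 0) → x = 0) ∧
    (∀ y ∈ G (-i), (∀ x ∈ G i, B x y = 0) → y = 0) ∧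
    (∀ a ∈ G 0, ∀ x ∈ G i, ∀ y ∈ G (-i), B ⁅a, x⁆ y + B x ⁅a, y⁆ = 0)) ∧
  -- (iii)
  (∀ a ∈ G 0, ∀ x ∈ G 1, ∀ y ∈ G (-1), B a ⁅x, y⁆ = B ⁅a, x⁆ y) ∧
  -- (iv)
  (∀ i : ℤ, 2 ≤ i → ∀ x ∈ G i, (∀ y ∈ G (-1), ⁅x, y⁆ = 0) → x = 0) ∧
  -- (v)
  (∀ i : ℤ, i ≤ -2 → ∀ x ∈ G i, (∀ y ∈ G 1, ⁅x, y⁆ = 0) → x = 0)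

/-!
The isomorphism is built degree by degree from `σ`. For `n ≥ 1`, transitivity (iv) in `𝔏'` says
that `y ∈ 𝔏'_{n+1}` is determined by the map `z ↦ ⁅y, σ z⁆` on `𝔏₋₁`, so `τ_{n+1} u` is defined
as the `y` with `⁅y, σ z⁆ = τ_n ⁅u, z⁆` for all `z`. Such a `y` exists because, by (i),
`𝔏_{n+1}` is spanned by brackets `⁅x, w⁆` with `x ∈ 𝔏₁`, and for those `⁅σ x, τ_n w⁆` works by the
Jacobi identity. Transitivity in `𝔏` makes `τ_{n+1}` injective and (i) in `𝔏'` makes it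
surjective. Negative degrees are handled by the same construction for the reversed gradings, and
`τ_{m+n} ⁅x, y⁆ = ⁅τ_m x, τ_n y⁆` follows by induction on `|m|` from `m ∈ {-1, 0, 1}`, using (i).
-/

open Submodule

section Assembly

variable {R ι M N : Type*} [Ring R] [AddCommGroup M] [Module R M] [AddCommGroup N] [Module R N]
  {G : ι → Submodule R M} {G' : ι → Submodule R N}

theorem exists_linearEquiv_of_homogeneous (hind : iSupIndep G) (htop : ⨆ i, G i = ⊤)
    (hind' : iSupIndep G') (htop' : ⨆ i, G' i = ⊤) (τ : ι → M →ₗ[R] N)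
    (hmap : ∀ i, (G i).map (τ i) = G' i) (hinj : ∀ i {x}, x ∈ G i → τ i x = 0 → x = 0) :
    ∃ e : M ≃ₗ[R] N, ∀ i, ∀ x ∈ G i, e x = τ i x := by
  classical
  have hmapsTo i : ∀ x ∈ G i, τ i x ∈ G' i := fun x hx => hmap i ▸ mem_map_of_mem hx
  let τG i : G i →ₗ[R] G' i := (τ i).restrict (hmapsTo i)
  have hτG : Function.Bijective (DirectSum.lmap τG) := by
    refine ⟨(DirectSum.lmap_injective _).2 fun i => ?_, (DirectSum.lmap_surjective _).2 fun i => ?_⟩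
    · refine (injective_iff_map_eq_zero _).2 fun x hx => Subtype.ext (hinj i x.2 ?_)
      simpa [τG] using congrArg Subtype.val hx
    · rintro ⟨y, hy⟩
      obtain ⟨x, hx, rfl⟩ := (hmap i).symm ▸ hy
      exact ⟨⟨x, hx⟩, rfl⟩
  have hG : Function.Bijective (DirectSum.coeLinearMap G) :=
    DirectSum.isInternal_submodule_of_iSupIndep_of_iSup_eq_top hind htop
  have hG' : Function.Bijective (DirectSum.coeLinearMap G') :=
    DirectSum.isInternal_submodule_of_iSupIndep_of_iSup_eq_top hind' htop'
  refine ⟨(LinearEquiv.ofBijective _ hG).symm ≪≫ₗ LinearEquiv.ofBijective _ hτG ≪≫ₗ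
    LinearEquiv.ofBijective _ hG', fun i x hx => ?_⟩
  have hsymm : (LinearEquiv.ofBijective _ hG).symm x = DirectSum.of (fun i => G i) i ⟨x, hx⟩ := by
    rw [LinearEquiv.symm_apply_eq, LinearEquiv.ofBijective_apply, DirectSum.coeLinearMap_of]
  simp [hsymm, τG]

end Assembly

theorem exists_lieEquiv_of_homogeneous {R ι L L' : Type*} [CommRing R] [Add ι]
    [LieRing L] [LieAlgebra R L] [LieRing L'] [LieAlgebra R L']
    {G : ι → Submodule R L} {G' : ι → Submodule R L'}
    (hind : iSupIndep G) (htop : ⨆ i, G i = ⊤) (hind' : iSupIndep G') (htop' : ⨆ i, G' i = ⊤)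
    (hgr : ∀ i j, ∀ x ∈ G i, ∀ y ∈ G j, ⁅x, y⁆ ∈ G (i + j))
    (τ : ι → L →ₗ[R] L') (hmap : ∀ i, (G i).map (τ i) = G' i)
    (hinj : ∀ i {x}, x ∈ G i → τ i x = 0 → x = 0)
    (hlie : ∀ i j {x y}, x ∈ G i → y ∈ G j → τ (i + j) ⁅x, y⁆ = ⁅τ i x, τ j y⁆) :
    ∃ e : L ≃ₗ⁅R⁆ L', (∀ i, ∀ x ∈ G i, e x = τ i x) ∧
      ∀ i, (G i).map (e.toLinearEquiv : L →ₗ[R] L') = G' i := by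
  obtain ⟨e, he⟩ := exists_linearEquiv_of_homogeneous hind htop hind' htop' τ hmap hinj
  have hlie' (x y : L) : e ⁅x, y⁆ = ⁅e x, e y⁆ := by
    induction (htop ▸ mem_top : x ∈ ⨆ i, G i) using iSup_induction' with
    | mem i x hx =>
      induction (htop ▸ mem_top : y ∈ ⨆ i, G i) using iSup_induction' with
      | mem j y hy => rw [he _ _ (hgr _ _ _ hx _ hy), he _ _ hx, he _ _ hy, hlie _ _ hx hy]
      | zero => simp
      | add y₁ y₂ _ _ h₁ h₂ => rw [lie_add, map_add, h₁, h₂, map_add, lie_add]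
    | zero => simp
    | add x₁ x₂ _ _ h₁ h₂ => rw [add_lie, map_add, h₁, h₂, map_add, add_lie]
  refine ⟨LieEquiv.ofBijective ⟨e.toLinearMap, hlie' _ _⟩ e.bijective, he, fun i => ?_⟩
  refine SetLike.coe_injective ?_
  rw [map_coe, ← hmap i, map_coe]
  exact Set.EqOn.image_eq (he i)

def lieProbe {R L M ι : Type*} [CommRing R] [LieRing L] [LieAlgebra R L] [AddCommGroup M]
    [Module R M] (f : L →ₗ[R] M) (v : ι → L) : L →ₗ[R] ι → M where
  toFun u i := f ⁅u, v i⁆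
  map_add' _ _ := by ext; simp [add_lie]
  map_smul' _ _ := by ext; simp [smul_lie]

@[simp]
lemma lieProbe_apply {R L M ι : Type*} [CommRing R] [LieRing L] [LieAlgebra R L] [AddCommGroup M]
    [Module R M] (f : L →ₗ[R] M) (v : ι → L) (u : L) (i : ι) :
    lieProbe f v u i = f ⁅u, v i⁆ := rfl

section Compat

variable {R L L' : Type*} [CommRing R] [LieRing L] [LieAlgebra R L] [LieRing L'] [LieAlgebra R L']
  {G : ℤ → Submodule R L} (τ : ℤ → L →ₗ[R] L')
  (hgr : ∀ i j, ∀ x ∈ G i, ∀ y ∈ G j, ⁅x, y⁆ ∈ G (i + j))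
  (hspan : ∀ i, 1 ≤ i → G (i + 1) ≤ span R {z | ∃ x ∈ G 1, ∃ y ∈ G i, z = ⁅x, y⁆})

include hgr hspan in
theorem map_lie_of_one_le
    (h1 : ∀ j {x y}, x ∈ G 1 → y ∈ G j → τ (1 + j) ⁅x, y⁆ = ⁅τ 1 x, τ j y⁆)
    {i : ℤ} (hi : 1 ≤ i) (j : ℤ) {x y : L} (hx : x ∈ G i) (hy : y ∈ G j) :
    τ (i + j) ⁅x, y⁆ = ⁅τ i x, τ j y⁆ := by
  induction i, hi using Int.leInduction generalizing j x y with
  | base => exact h1 j hx hy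
  | succ i hi ih =>
    revert j y
    refine span_induction ?_ (by simp) (fun x₁ x₂ _ _ h₁ h₂ j _ hy => ?_)
      (fun c x _ h j _ hy => ?_) (hspan i hi hx)
    · rintro _ ⟨p, hp, w, hw, rfl⟩ j y hy
      have hpw : τ (i + 1 + j) ⁅p, ⁅w, y⁆⁆ = ⁅τ 1 p, ⁅τ i w, τ j y⁆⁆ := by
        rw [show i + 1 + j = 1 + (i + j) by ring, h1 _ hp (hgr i j w hw y hy),
          ih j hw hy]
      have hwp : τ (i + 1 + j) ⁅w, ⁅p, y⁆⁆ = ⁅τ i w, ⁅τ 1 p, τ j y⁆⁆ := by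
        rw [show i + 1 + j = i + (1 + j) by ring, ih _ hw (hgr 1 j p hp y hy),
          h1 j hp hy]
      rw [lie_lie, map_sub, hpw, hwp, ← lie_lie, ← h1 i hp hw, add_comm 1 i]
    · rw [add_lie, map_add, h₁ j hy, h₂ j hy, map_add, add_lie]
    · rw [smul_lie, map_smul, h j hy, map_smul, smul_lie]

include hgr hspan in
theorem map_lie_of_local
    (hspan_neg : ∀ i, 1 ≤ i → G (-(i + 1)) ≤ span R {z | ∃ x ∈ G (-1), ∃ y ∈ G (-i), z = ⁅x, y⁆})
    (h0 : ∀ j {x y}, x ∈ G 0 → y ∈ G j → τ j ⁅x, y⁆ = ⁅τ 0 x, τ j y⁆)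
    (h1 : ∀ j {x y}, x ∈ G 1 → y ∈ G j → τ (1 + j) ⁅x, y⁆ = ⁅τ 1 x, τ j y⁆)
    (hm1 : ∀ j {x y}, x ∈ G (-1) → y ∈ G j → τ (-1 + j) ⁅x, y⁆ = ⁅τ (-1) x, τ j y⁆)
    (i j : ℤ) {x y : L} (hx : x ∈ G i) (hy : y ∈ G j) :
    τ (i + j) ⁅x, y⁆ = ⁅τ i x, τ j y⁆ := by
  obtain hi | rfl | hi : 1 ≤ i ∨ i = 0 ∨ 1 ≤ -i := by omega
  · exact map_lie_of_one_le τ hgr hspan h1 hi j hx hy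
  · rw [zero_add]; exact h0 j hx hy
  · have := map_lie_of_one_le (G := fun n => G (-n)) (fun n => τ (-n))
      (fun i j x hx y hy => by simpa only [neg_add] using hgr _ _ x hx y hy) hspan_neg
      (fun j _ _ hx hy => by simpa only [neg_add] using hm1 (-j) hx hy) hi (-j)
      (x := x) (y := y) (by simpa using hx) (by simpa using hy)
    simpa only [neg_add, neg_neg] using this

end Compat

section Upper

variable {K L L' : Type*} [Field K] [LieRing L] [LieAlgebra K L] [LieRing L'] [LieAlgebra K L']

/-- Conditions (i) and (iv) of a `ℤ`-graded Lie algebra, for the positive degrees. -/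
structure IsUpperTransitive (G : ℤ → Submodule K L) : Prop where
  lie_mem : ∀ i j, ∀ x ∈ G i, ∀ y ∈ G j, ⁅x, y⁆ ∈ G (i + j)
  le_span : ∀ i, 1 ≤ i → G (i + 1) ≤ span K {z | ∃ x ∈ G 1, ∃ y ∈ G i, z = ⁅x, y⁆}
  eq_zero_of_lie_eq_zero : ∀ i, 2 ≤ i → ∀ x ∈ G i, (∀ y ∈ G (-1), ⁅x, y⁆ = 0) → x = 0

structure IsLocalIso (G : ℤ → Submodule K L) (G' : ℤ → Submodule K L') (σ : L →ₗ[K] L') :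
    Prop where
  map_eq : ∀ i ∈ ({-1, 0, 1} : Set ℤ), (G i).map σ = G' i
  eq_zero : ∀ i ∈ ({-1, 0, 1} : Set ℤ), ∀ x ∈ G i, σ x = 0 → x = 0
  map_lie : ∀ i ∈ ({-1, 0, 1} : Set ℤ), ∀ j ∈ ({-1, 0, 1} : Set ℤ),
    i + j ∈ ({-1, 0, 1} : Set ℤ) → ∀ x ∈ G i, ∀ y ∈ G j, σ ⁅x, y⁆ = ⁅σ x, σ y⁆

variable {G : ℤ → Submodule K L} {G' : ℤ → Submodule K L'} {σ : L →ₗ[K] L'}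

lemma IsUpperTransitive.lie_mem_of_add_eq (hG : IsUpperTransitive G) {i j k : ℤ} {x y : L}
    (hx : x ∈ G i) (hy : y ∈ G j) (h : i + j = k) : ⁅x, y⁆ ∈ G k :=
  h ▸ hG.lie_mem i j x hx y hy

lemma IsLocalIso.map_mem (hσ : IsLocalIso G G' σ) {i : ℤ} {x : L} (hx : x ∈ G i)
    (hi : i ∈ ({-1, 0, 1} : Set ℤ) := by simp) : σ x ∈ G' i :=
  hσ.map_eq i hi ▸ mem_map_of_mem hx

lemma IsLocalIso.exists_eq (hσ : IsLocalIso G G' σ) {i : ℤ} {y : L'} (hy : y ∈ G' i)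
    (hi : i ∈ ({-1, 0, 1} : Set ℤ) := by simp) : ∃ x ∈ G i, σ x = y :=
  mem_map.1 (hσ.map_eq i hi ▸ hy)

lemma IsLocalIso.eq_zero_of_mem (hσ : IsLocalIso G G' σ) {i : ℤ} {x : L} (hx : x ∈ G i)
    (h : σ x = 0) (hi : i ∈ ({-1, 0, 1} : Set ℤ) := by simp) : x = 0 :=
  hσ.eq_zero i hi x hx h

lemma IsLocalIso.map_lie_of_mem (hσ : IsLocalIso G G' σ) {i j : ℤ} {x y : L} (hx : x ∈ G i)
    (hy : y ∈ G j) (hi : i ∈ ({-1, 0, 1} : Set ℤ) := by simp)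
    (hj : j ∈ ({-1, 0, 1} : Set ℤ) := by simp) (hij : i + j ∈ ({-1, 0, 1} : Set ℤ) := by simp) :
    σ ⁅x, y⁆ = ⁅σ x, σ y⁆ :=
  hσ.map_lie i hi j hj hij x hx y hy

/-- The invariant carried from degree `n` to `n + 1`. If `f'` is the map of degree `n - 1`,
`lie_lie_eq` combines `f ⁅x, v⁆ = ⁅σ x, f' v⁆` and `⁅f u, σ z⁆ = f' ⁅u, z⁆` with `f'` eliminated. -/
structure IsCompatibleAt (G : ℤ → Submodule K L) (G' : ℤ → Submodule K L') (σ : L →ₗ[K] L')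
    (n : ℤ) (f : L →ₗ[K] L') : Prop where
  mapsTo : ∀ u ∈ G n, f u ∈ G' n
  map_lie_zero : ∀ a ∈ G 0, ∀ u ∈ G n, f ⁅a, u⁆ = ⁅σ a, f u⁆
  lie_lie_eq : ∀ x ∈ G 1, ∀ u ∈ G n, ∀ z ∈ G (-1), ⁅σ x, ⁅f u, σ z⁆⁆ = f ⁅x, ⁅u, z⁆⁆

variable (hG : IsUpperTransitive G) (hG' : IsUpperTransitive G') (hσ : IsLocalIso G G' σ)

include hG' hσ in
lemma ker_lieProbe_comp_subtype {k : ℤ} (hk : 2 ≤ k) :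
    LinearMap.ker (lieProbe (LinearMap.id (R := K)) (fun z : G (-1) => σ z) ∘ₗ (G' k).subtype) =
      ⊥ := by
  refine LinearMap.ker_eq_bot'.2 fun y hy => Subtype.ext <|
    hG'.eq_zero_of_lie_eq_zero k hk y y.2 fun y' hy' => ?_
  obtain ⟨z, hz, rfl⟩ := hσ.exists_eq hy'
  simpa using congrFun hy ⟨z, hz⟩

noncomputable def lieProbeInv {k : ℤ} (hk : 2 ≤ k) : (G (-1) → L') →ₗ[K] G' k :=
  (LinearMap.exists_leftInverse_of_injective _ (ker_lieProbe_comp_subtype hG' hσ hk)).choose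

lemma lieProbeInv_lieProbe {k : ℤ} (hk : 2 ≤ k) (y : G' k) :
    lieProbeInv hG' hσ hk (lieProbe (LinearMap.id (R := K)) (fun z : G (-1) => σ z) y) = y :=
  LinearMap.congr_fun (LinearMap.exists_leftInverse_of_injective _
    (ker_lieProbe_comp_subtype hG' hσ hk)).choose_spec y

/-- For `n ≥ 2`, `upperExtension n u` is the `y ∈ G' n` with
`⁅y, σ z⁆ = upperExtension (n - 1) ⁅u, z⁆` for all `z ∈ G (-1)`, whenever such a `y` exists.
For `n ≤ 1` (negative `n` included) it is `σ`. -/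
noncomputable def upperExtension (n : ℤ) : L →ₗ[K] L' :=
  if hn : n ≤ 1 then σ
  else (G' n).subtype ∘ₗ lieProbeInv hG' hσ (k := n) (by omega) ∘ₗ
    lieProbe (upperExtension (n - 1)) (fun z : G (-1) => (z : L))
termination_by n.toNat

lemma upperExtension_of_le_one {n : ℤ} (hn : n ≤ 1) : upperExtension hG' hσ n = σ := by
  rw [upperExtension, dif_pos hn]

lemma upperExtension_add_one {n : ℤ} (hn : 1 ≤ n) : upperExtension hG' hσ (n + 1) =
    (G' (n + 1)).subtype ∘ₗ lieProbeInv hG' hσ (k := n + 1) (by omega) ∘ₗ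
      lieProbe (upperExtension hG' hσ n) (fun z : G (-1) => (z : L)) := by
  rw [upperExtension, dif_neg (by omega), add_sub_cancel_right]

lemma upperExtension_add_one_mem {n : ℤ} (hn : 1 ≤ n) (u : L) :
    upperExtension hG' hσ (n + 1) u ∈ G' (n + 1) := by
  rw [upperExtension_add_one hG' hσ hn]
  exact Subtype.prop _

lemma upperExtension_add_one_eq {n : ℤ} (hn : 1 ≤ n) {u : L} {y : L'} (hy : y ∈ G' (n + 1))
    (h : ∀ z ∈ G (-1), ⁅y, σ z⁆ = upperExtension hG' hσ n ⁅u, z⁆) :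
    upperExtension hG' hσ (n + 1) u = y := by
  have hprobe : lieProbe (upperExtension hG' hσ n) (fun z : G (-1) => (z : L)) u =
      lieProbe (LinearMap.id (R := K)) (fun z : G (-1) => σ z) (⟨y, hy⟩ : G' (n + 1)) := by
    ext z; simp [h z z.2]
  rw [upperExtension_add_one hG' hσ hn, LinearMap.comp_apply, LinearMap.comp_apply, hprobe,
    lieProbeInv_lieProbe]
  rfl

include hG hσ in
lemma IsCompatibleAt.map_lie_lie {n : ℤ} {f : L →ₗ[K] L'} (hf : IsCompatibleAt G G' σ n f)
    {x w z : L} (hx : x ∈ G 1) (hw : w ∈ G n) (hz : z ∈ G (-1)) :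
    f ⁅⁅x, w⁆, z⁆ = ⁅⁅σ x, f w⁆, σ z⁆ := by
  have hxz : ⁅x, z⁆ ∈ G 0 := hG.lie_mem_of_add_eq hx hz (by norm_num)
  calc f ⁅⁅x, w⁆, z⁆ = f ⁅x, ⁅w, z⁆⁆ + f ⁅⁅x, z⁆, w⁆ := by
        rw [← map_add, lie_lie x w z, sub_eq_add_neg, lie_skew ⁅x, z⁆ w]
    _ = ⁅σ x, ⁅f w, σ z⁆⁆ - ⁅f w, σ ⁅x, z⁆⁆ := by
        rw [hf.lie_lie_eq x hx w hw z hz, hf.map_lie_zero _ hxz w hw, ← lie_skew (f w),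
          sub_neg_eq_add]
    _ = ⁅⁅σ x, f w⁆, σ z⁆ := by rw [hσ.map_lie_of_mem hx hz, lie_lie]

include hG hG' hσ in
lemma IsCompatibleAt.exists_lie_eq {n : ℤ} (hn : 1 ≤ n) {f : L →ₗ[K] L'}
    (hf : IsCompatibleAt G G' σ n f) {u : L} (hu : u ∈ G (n + 1)) :
    ∃ y ∈ G' (n + 1), ∀ z ∈ G (-1), ⁅y, σ z⁆ = f ⁅u, z⁆ := by
  suffices G (n + 1) ≤ ((G' (n + 1)).map (lieProbe (LinearMap.id (R := K))
      (fun z : G (-1) => σ z))).comap (lieProbe f (fun z : G (-1) => (z : L))) by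
    obtain ⟨y, hy, hyu⟩ := this hu
    exact ⟨y, hy, fun z hz => by simpa using congrFun hyu ⟨z, hz⟩⟩
  refine (hG.le_span n hn).trans (span_le.2 ?_)
  rintro _ ⟨x, hx, w, hw, rfl⟩
  refine ⟨⁅σ x, f w⁆, hG'.lie_mem_of_add_eq (hσ.map_mem hx) (hf.mapsTo w hw) (add_comm _ _), ?_⟩
  ext z
  simpa using (hf.map_lie_lie hG hσ hx hw z.2).symm

include hG in
lemma IsCompatibleAt.lie_upperExtension_add_one {n : ℤ} (hn : 1 ≤ n)
    (hf : IsCompatibleAt G G' σ n (upperExtension hG' hσ n)) {u z : L} (hu : u ∈ G (n + 1))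
    (hz : z ∈ G (-1)) :
    ⁅upperExtension hG' hσ (n + 1) u, σ z⁆ = upperExtension hG' hσ n ⁅u, z⁆ := by
  obtain ⟨y, hy, hyu⟩ := hf.exists_lie_eq hG hG' hσ hn hu
  rw [upperExtension_add_one_eq hG' hσ hn hy hyu, hyu z hz]

include hG in
lemma IsCompatibleAt.upperExtension_add_one_lie {n : ℤ} (hn : 1 ≤ n)
    (hf : IsCompatibleAt G G' σ n (upperExtension hG' hσ n)) {x w : L} (hx : x ∈ G 1)
    (hw : w ∈ G n) :
    upperExtension hG' hσ (n + 1) ⁅x, w⁆ = ⁅σ x, upperExtension hG' hσ n w⁆ :=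
  upperExtension_add_one_eq hG' hσ hn
    (hG'.lie_mem_of_add_eq (hσ.map_mem hx) (hf.mapsTo w hw) (add_comm _ _))
    fun _ hz => (hf.map_lie_lie hG hσ hx hw hz).symm

include hG in
lemma IsCompatibleAt.upperExtension_add_one {n : ℤ} (hn : 1 ≤ n)
    (hf : IsCompatibleAt G G' σ n (upperExtension hG' hσ n)) :
    IsCompatibleAt G G' σ (n + 1) (upperExtension hG' hσ (n + 1)) where
  mapsTo u _ := upperExtension_add_one_mem hG' hσ hn u
  map_lie_zero a ha u hu := by
    refine upperExtension_add_one_eq hG' hσ hn (hG'.lie_mem_of_add_eq (hσ.map_mem ha)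
      (upperExtension_add_one_mem hG' hσ hn u) (zero_add _)) fun z hz => ?_
    have hu' : ⁅u, z⁆ ∈ G n := hG.lie_mem_of_add_eq hu hz (by ring)
    have haz : ⁅a, z⁆ ∈ G (-1) := hG.lie_mem_of_add_eq ha hz (by ring)
    calc ⁅⁅σ a, upperExtension hG' hσ (n + 1) u⁆, σ z⁆
        = ⁅σ a, ⁅upperExtension hG' hσ (n + 1) u, σ z⁆⁆ -
            ⁅upperExtension hG' hσ (n + 1) u, ⁅σ a, σ z⁆⁆ :=
          lie_lie _ _ _
      _ = ⁅σ a, upperExtension hG' hσ n ⁅u, z⁆⁆ - ⁅upperExtension hG' hσ (n + 1) u, σ ⁅a, z⁆⁆ := by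
          rw [hf.lie_upperExtension_add_one hG hG' hσ hn hu hz,
            hσ.map_lie_of_mem ha hz]
      _ = upperExtension hG' hσ n ⁅a, ⁅u, z⁆⁆ - upperExtension hG' hσ n ⁅u, ⁅a, z⁆⁆ := by
          rw [hf.map_lie_zero a ha _ hu', hf.lie_upperExtension_add_one hG hG' hσ hn hu haz]
      _ = upperExtension hG' hσ n ⁅⁅a, u⁆, z⁆ := by rw [← map_sub, lie_lie]
  lie_lie_eq x hx u hu z hz := by
    rw [hf.lie_upperExtension_add_one hG hG' hσ hn hu hz,
      hf.upperExtension_add_one_lie hG hG' hσ hn hx (hG.lie_mem_of_add_eq hu hz (by ring))]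

include hG in
lemma isCompatibleAt_upperExtension {n : ℤ} (hn : 1 ≤ n) :
    IsCompatibleAt G G' σ n (upperExtension hG' hσ n) := by
  induction n, hn using Int.leInduction with
  | base =>
    rw [upperExtension_of_le_one hG' hσ le_rfl]
    refine ⟨fun u hu => hσ.map_mem hu,
      fun a ha u hu => hσ.map_lie_of_mem ha hu,
      fun x hx u hu z hz => ?_⟩
    rw [← hσ.map_lie_of_mem hu hz,
      hσ.map_lie_of_mem hx (hG.lie_mem_of_add_eq (k := 0) hu hz (by norm_num))]
  | succ n hn ih => exact ih.upperExtension_add_one hG hG' hσ hn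

include hG in
lemma upperExtension_mem {n : ℤ} (hn : 0 ≤ n) {u : L} (hu : u ∈ G n) :
    upperExtension hG' hσ n u ∈ G' n := by
  obtain rfl | hn : n = 0 ∨ 1 ≤ n := by omega
  · rw [upperExtension_of_le_one hG' hσ zero_le_one]
    exact hσ.map_mem hu
  · exact (isCompatibleAt_upperExtension hG hG' hσ hn).mapsTo u hu

include hG in
lemma upperExtension_lie_zero {n : ℤ} (hn : 0 ≤ n) {a u : L} (ha : a ∈ G 0) (hu : u ∈ G n) :
    upperExtension hG' hσ n ⁅a, u⁆ = ⁅σ a, upperExtension hG' hσ n u⁆ := by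
  obtain rfl | hn : n = 0 ∨ 1 ≤ n := by omega
  · rw [upperExtension_of_le_one hG' hσ zero_le_one]
    exact hσ.map_lie_of_mem ha hu
  · exact (isCompatibleAt_upperExtension hG hG' hσ hn).map_lie_zero a ha u hu

include hG in
lemma lie_upperExtension_add_one {n : ℤ} (hn : 0 ≤ n) {u z : L} (hu : u ∈ G (n + 1))
    (hz : z ∈ G (-1)) :
    ⁅upperExtension hG' hσ (n + 1) u, σ z⁆ = upperExtension hG' hσ n ⁅u, z⁆ := by
  obtain rfl | hn : n = 0 ∨ 1 ≤ n := by omega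
  · rw [zero_add, upperExtension_of_le_one hG' hσ le_rfl,
      upperExtension_of_le_one hG' hσ zero_le_one]
    exact (hσ.map_lie_of_mem hu hz).symm
  · exact (isCompatibleAt_upperExtension hG hG' hσ hn).lie_upperExtension_add_one hG hG' hσ hn hu hz

include hG in
lemma upperExtension_add_one_lie {n : ℤ} (hn : 0 ≤ n) {x w : L} (hx : x ∈ G 1) (hw : w ∈ G n) :
    upperExtension hG' hσ (n + 1) ⁅x, w⁆ = ⁅σ x, upperExtension hG' hσ n w⁆ := by
  obtain rfl | hn : n = 0 ∨ 1 ≤ n := by omega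
  · rw [zero_add, upperExtension_of_le_one hG' hσ le_rfl,
      upperExtension_of_le_one hG' hσ zero_le_one]
    exact hσ.map_lie_of_mem hx hw
  · exact (isCompatibleAt_upperExtension hG hG' hσ hn).upperExtension_add_one_lie hG hG' hσ hn hx hw

include hG in
lemma map_upperExtension {n : ℤ} (hn : 0 ≤ n) : (G n).map (upperExtension hG' hσ n) = G' n := by
  refine le_antisymm (map_le_iff_le_comap.2 fun u hu => upperExtension_mem hG hG' hσ hn hu) ?_
  induction n, hn using Int.leInduction with
  | base =>
    rw [upperExtension_of_le_one hG' hσ zero_le_one, hσ.map_eq 0 (by simp)]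
  | succ n hn ih =>
    obtain rfl | hn : n = 0 ∨ 1 ≤ n := by omega
    · rw [zero_add, upperExtension_of_le_one hG' hσ le_rfl, hσ.map_eq 1 (by simp)]
    refine (hG'.le_span n hn).trans (span_le.2 ?_)
    rintro _ ⟨_, hx', _, hw', rfl⟩
    obtain ⟨x, hx, rfl⟩ := hσ.exists_eq hx'
    obtain ⟨w, hw, rfl⟩ := ih hw'
    exact ⟨⁅x, w⁆, hG.lie_mem_of_add_eq hx hw (add_comm _ _),
      upperExtension_add_one_lie hG hG' hσ (by omega) hx hw⟩

include hG in
lemma upperExtension_eq_zero {n : ℤ} (hn : 0 ≤ n) {x : L} (hx : x ∈ G n)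
    (h : upperExtension hG' hσ n x = 0) : x = 0 := by
  induction n, hn using Int.leInduction generalizing x with
  | base =>
    rw [upperExtension_of_le_one hG' hσ zero_le_one] at h
    exact hσ.eq_zero_of_mem hx h
  | succ n hn ih =>
    obtain rfl | hn : n = 0 ∨ 1 ≤ n := by omega
    · rw [zero_add, upperExtension_of_le_one hG' hσ le_rfl] at *
      exact hσ.eq_zero_of_mem hx h
    refine hG.eq_zero_of_lie_eq_zero (n + 1) (by omega) x hx fun z hz => ?_
    refine ih (hG.lie_mem_of_add_eq hx hz (by ring)) ?_
    rw [← lie_upperExtension_add_one hG hG' hσ (by omega) hx hz, h, zero_lie]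

end Upper

section TwoSided

variable {K L L' : Type*} [Field K] [LieRing L] [LieAlgebra K L] [LieRing L'] [LieAlgebra K L']
  {G : ℤ → Submodule K L} {G' : ℤ → Submodule K L'} {σ : L →ₗ[K] L'}

lemma neg_mem_local {i : ℤ} (hi : i ∈ ({-1, 0, 1} : Set ℤ)) : -i ∈ ({-1, 0, 1} : Set ℤ) := by
  simp only [Set.mem_insert_iff, Set.mem_singleton_iff] at hi ⊢
  omega

lemma IsLocalIso.neg (hσ : IsLocalIso G G' σ) :
    IsLocalIso (fun n => G (-n)) (fun n => G' (-n)) σ where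
  map_eq i hi := hσ.map_eq (-i) (neg_mem_local hi)
  eq_zero i hi := hσ.eq_zero (-i) (neg_mem_local hi)
  map_lie i hi j hj hij := hσ.map_lie (-i) (neg_mem_local hi) (-j) (neg_mem_local hj)
    (neg_add i j ▸ neg_mem_local hij)

variable (hG : IsUpperTransitive G) (hGn : IsUpperTransitive fun n => G (-n))
  (hG' : IsUpperTransitive G') (hGn' : IsUpperTransitive fun n => G' (-n))
  (hσ : IsLocalIso G G' σ)

noncomputable def gradedExtension (n : ℤ) : L →ₗ[K] L' :=
  if 0 ≤ n then upperExtension hG' hσ n else upperExtension hGn' hσ.neg (-n)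

lemma gradedExtension_of_nonneg {n : ℤ} (hn : 0 ≤ n) :
    gradedExtension hG' hGn' hσ n = upperExtension hG' hσ n :=
  if_pos hn

lemma gradedExtension_neg {n : ℤ} (hn : 0 ≤ n) :
    gradedExtension hG' hGn' hσ (-n) = upperExtension hGn' hσ.neg n := by
  obtain rfl | hn : n = 0 ∨ 0 < n := by omega
  · rw [neg_zero, gradedExtension_of_nonneg hG' hGn' hσ le_rfl,
      upperExtension_of_le_one _ _ zero_le_one,
      upperExtension_of_le_one _ _ zero_le_one]
  · rw [gradedExtension, if_neg (by omega), neg_neg]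

lemma gradedExtension_of_mem_local {i : ℤ} (hi : i ∈ ({-1, 0, 1} : Set ℤ)) :
    gradedExtension hG' hGn' hσ i = σ := by
  simp only [Set.mem_insert_iff, Set.mem_singleton_iff] at hi
  obtain rfl | rfl | rfl := hi
  · rw [gradedExtension_neg hG' hGn' hσ zero_le_one, upperExtension_of_le_one _ _ le_rfl]
  all_goals rw [gradedExtension_of_nonneg hG' hGn' hσ (by norm_num),
    upperExtension_of_le_one _ _ (by norm_num)]

include hG hGn in
lemma map_gradedExtension (i : ℤ) : (G i).map (gradedExtension hG' hGn' hσ i) = G' i := by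
  rcases le_or_gt 0 i with hi | hi
  · rw [gradedExtension_of_nonneg hG' hGn' hσ hi]
    exact map_upperExtension hG hG' hσ hi
  · obtain ⟨m, hm, rfl⟩ : ∃ m, 0 ≤ m ∧ i = -m := ⟨-i, by omega, by ring⟩
    rw [gradedExtension_neg hG' hGn' hσ hm]
    exact map_upperExtension hGn hGn' hσ.neg hm

include hG hGn in
lemma gradedExtension_eq_zero (i : ℤ) {x : L} (hx : x ∈ G i)
    (h : gradedExtension hG' hGn' hσ i x = 0) : x = 0 := by
  rcases le_or_gt 0 i with hi | hi
  · rw [gradedExtension_of_nonneg hG' hGn' hσ hi] at h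
    exact upperExtension_eq_zero hG hG' hσ hi hx h
  · obtain ⟨m, hm, rfl⟩ : ∃ m, 0 ≤ m ∧ i = -m := ⟨-i, by omega, by ring⟩
    rw [gradedExtension_neg hG' hGn' hσ hm] at h
    exact upperExtension_eq_zero hGn hGn' hσ.neg hm hx h

include hG hGn in
lemma gradedExtension_lie_zero (j : ℤ) {x y : L} (hx : x ∈ G 0) (hy : y ∈ G j) :
    gradedExtension hG' hGn' hσ j ⁅x, y⁆ =
      ⁅gradedExtension hG' hGn' hσ 0 x, gradedExtension hG' hGn' hσ j y⁆ := by
  rw [gradedExtension_of_mem_local hG' hGn' hσ (i := 0) (by simp)]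
  rcases le_or_gt 0 j with hj | hj
  · rw [gradedExtension_of_nonneg hG' hGn' hσ hj]
    exact upperExtension_lie_zero hG hG' hσ hj hx hy
  · obtain ⟨m, hm, rfl⟩ : ∃ m, 0 ≤ m ∧ j = -m := ⟨-j, by omega, by ring⟩
    rw [gradedExtension_neg hG' hGn' hσ hm]
    exact upperExtension_lie_zero hGn hGn' hσ.neg hm hx hy

include hG hGn in
lemma gradedExtension_lie_one (j : ℤ) {x y : L} (hx : x ∈ G 1) (hy : y ∈ G j) :
    gradedExtension hG' hGn' hσ (1 + j) ⁅x, y⁆ =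
      ⁅gradedExtension hG' hGn' hσ 1 x, gradedExtension hG' hGn' hσ j y⁆ := by
  rw [gradedExtension_of_mem_local hG' hGn' hσ (i := 1) (by simp)]
  rcases le_or_gt 0 j with hj | hj
  · rw [add_comm, gradedExtension_of_nonneg hG' hGn' hσ (by omega),
      gradedExtension_of_nonneg hG' hGn' hσ hj]
    exact upperExtension_add_one_lie hG hG' hσ hj hx hy
  · obtain ⟨m, hm, rfl⟩ : ∃ m, 0 ≤ m ∧ j = -(m + 1) := ⟨-j - 1, by omega, by ring⟩
    rw [show 1 + -(m + 1) = -m by ring, gradedExtension_neg hG' hGn' hσ hm,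
      gradedExtension_neg hG' hGn' hσ (by omega), ← lie_skew, map_neg,
      ← lie_upperExtension_add_one hGn hGn' hσ.neg hm hy hx, lie_skew]

include hG hGn in
lemma gradedExtension_lie_neg_one (j : ℤ) {x y : L} (hx : x ∈ G (-1)) (hy : y ∈ G j) :
    gradedExtension hG' hGn' hσ (-1 + j) ⁅x, y⁆ =
      ⁅gradedExtension hG' hGn' hσ (-1) x, gradedExtension hG' hGn' hσ j y⁆ := by
  rw [gradedExtension_of_mem_local hG' hGn' hσ (i := -1) (by simp)]
  rcases le_or_gt j 0 with hj | hj
  · obtain ⟨m, hm, rfl⟩ : ∃ m, 0 ≤ m ∧ j = -m := ⟨-j, by omega, by ring⟩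
    rw [show -1 + -m = -(m + 1) by ring, gradedExtension_neg hG' hGn' hσ (by omega),
      gradedExtension_neg hG' hGn' hσ hm]
    exact upperExtension_add_one_lie hGn hGn' hσ.neg hm hx hy
  · obtain ⟨m, hm, rfl⟩ : ∃ m, 0 ≤ m ∧ j = m + 1 := ⟨j - 1, by omega, by ring⟩
    rw [show -1 + (m + 1) = m by ring, gradedExtension_of_nonneg hG' hGn' hσ hm,
      gradedExtension_of_nonneg hG' hGn' hσ (by omega), ← lie_skew, map_neg,
      ← lie_upperExtension_add_one hG hG' hσ hm hy hx, lie_skew]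

include hG hGn hG' hGn' hσ in
theorem exists_lieEquiv_extending (hind : iSupIndep G) (htop : ⨆ i, G i = ⊤)
    (hind' : iSupIndep G') (htop' : ⨆ i, G' i = ⊤) :
    ∃ e : L ≃ₗ⁅K⁆ L', (∀ i ∈ ({-1, 0, 1} : Set ℤ), ∀ x ∈ G i, e x = σ x) ∧
      ∀ i, (G i).map (e.toLinearEquiv : L →ₗ[K] L') = G' i := by
  obtain ⟨e, he, hmap⟩ := exists_lieEquiv_of_homogeneous hind htop hind' htop' hG.lie_mem
    (gradedExtension hG' hGn' hσ) (map_gradedExtension hG hGn hG' hGn' hσ)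
    (gradedExtension_eq_zero hG hGn hG' hGn' hσ)
    (map_lie_of_local _ hG.lie_mem hG.le_span hGn.le_span
      (gradedExtension_lie_zero hG hGn hG' hGn' hσ) (gradedExtension_lie_one hG hGn hG' hGn' hσ)
      (gradedExtension_lie_neg_one hG hGn hG' hGn' hσ))
  refine ⟨e, fun i hi x hx => ?_, hmap⟩
  rw [he i x hx, gradedExtension_of_mem_local hG' hGn' hσ hi]

end TwoSided

lemma GoodGrading.isUpperTransitive {L : Type} [LieRing L] [LieAlgebra ℂ L]
    {G : ℤ → Submodule ℂ L} {B : LinearMap.BilinForm ℂ L} (h : GoodGrading L G B) :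
    IsUpperTransitive G := by
  obtain ⟨-, -, hgr, -, hspan, -, -, htrans, -⟩ := h
  exact ⟨hgr, fun i hi => (hspan i hi).1.le, htrans⟩

lemma GoodGrading.isUpperTransitive_neg {L : Type} [LieRing L] [LieAlgebra ℂ L]
    {G : ℤ → Submodule ℂ L} {B : LinearMap.BilinForm ℂ L} (h : GoodGrading L G B) :
    IsUpperTransitive fun n => G (-n) := by
  obtain ⟨-, -, hgr, -, hspan, -, -, -, htrans⟩ := h
  refine ⟨fun i j x hx y hy => by simpa only [neg_add] using hgr _ _ x hx y hy,
    fun i hi => (hspan i hi).2.le, fun i hi x hx h0 => ?_⟩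
  exact htrans (-i) (by omega) x hx fun y hy => h0 y (by simpa using hy)

/-- Any isomorphism of local parts of two graded Lie algebras satisfying
conditions (i)–(v) extends to an isomorphism of graded Lie algebras. -/
theorem stmt_2
    (L : Type) [LieRing L] [LieAlgebra ℂ L]
    (L' : Type) [LieRing L'] [LieAlgebra ℂ L']
    (G : ℤ → Submodule ℂ L) (G' : ℤ → Submodule ℂ L')
    (B : LinearMap.BilinForm ℂ L) (B' : LinearMap.BilinForm ℂ L')
    (hG : GoodGrading L G B) (hG' : GoodGrading L' G' B')
    -- an isomorphism of the local parts, given as (the restriction of) a linear map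
    (σ : L →ₗ[ℂ] L')
    (hσmap : ∀ i ∈ ({-1, 0, 1} : Set ℤ), Submodule.map σ (G i) = G' i)
    (hσinj : ∀ x ∈ G (-1) ⊔ G 0 ⊔ G 1, σ x = 0 → x = 0)
    (hσbrack : ∀ i ∈ ({-1, 0, 1} : Set ℤ), ∀ j ∈ ({-1, 0, 1} : Set ℤ),
      i + j ∈ ({-1, 0, 1} : Set ℤ) →
      ∀ x ∈ G i, ∀ y ∈ G j, σ ⁅x, y⁆ = ⁅σ x, σ y⁆) :
    ∃ e : L ≃ₗ⁅ℂ⁆ L',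
      (∀ i ∈ ({-1, 0, 1} : Set ℤ), ∀ x ∈ G i, e x = σ x) ∧
      (∀ i : ℤ, Submodule.map (e.toLinearEquiv : L →ₗ[ℂ] L') (G i) = G' i) := by
  have hσ : IsLocalIso G G' σ := by
    refine ⟨hσmap, fun i hi x hx => hσinj x ?_, hσbrack⟩
    simp only [Set.mem_insert_iff, Set.mem_singleton_iff] at hi
    obtain rfl | rfl | rfl := hi
    · exact mem_sup_left (mem_sup_left hx)
    · exact mem_sup_left (mem_sup_right hx)
    · exact mem_sup_right hx
  exact exists_lieEquiv_extending hG.isUpperTransitive hG.isUpperTransitive_neg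
    hG'.isUpperTransitive hG'.isUpperTransitive_neg hσ hG.1 hG.2.1 hG'.1 hG'.2.1
end

section
/- Let 𝔏 = ⊕_{n∈ℤ} 𝔏_n be a graded Lie algebra over ℂ with a bilinear form B on its local part satisfying conditions (i)–(v). (a) If the adjoint action of 𝔏₀ on 𝔏₁ and the adjoint action of 𝔏₀ on 𝔏_{−1} are both faithful (x ∈ 𝔏₀ with [x, 𝔏₁] = 0 implies x = 0, and likewise for 𝔏_{−1}) and surjective ([𝔏₀, 𝔏₁] = 𝔏₁ and [𝔏₀, 𝔏_{−1}] = 𝔏_{−1}), then 𝔏 is transitive. (b) If moreover 𝔏₁ and 𝔏_{−1} are finite-dimensional, then 𝔏 is transitive if and only if both adjoint actions of 𝔏₀ on 𝔏₁ and on 𝔏_{−1} are faithful and surjective. -/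
/-- Transitivity of a graded Lie algebra in the sense of Kac. -/
def TransitiveGr (L : Type) [LieRing L] [LieAlgebra ℂ L] (G : ℤ → Submodule ℂ L) : Prop :=
  (∀ i : ℤ, 0 ≤ i → ∀ x ∈ G i, (∀ y ∈ G (-1), ⁅x, y⁆ = 0) → x = 0) ∧
  (∀ i : ℤ, i ≤ 0 → ∀ x ∈ G i, (∀ y ∈ G 1, ⁅x, y⁆ = 0) → x = 0)

/-- The adjoint actions of `G 0` on `G 1` and `G (-1)` are faithful and surjective. -/
def FaithfulSurj (L : Type) [LieRing L] [LieAlgebra ℂ L] (G : ℤ → Submodule ℂ L) : Prop :=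
  (∀ x ∈ G 0, (∀ y ∈ G 1, ⁅x, y⁆ = 0) → x = 0) ∧
  (∀ x ∈ G 0, (∀ y ∈ G (-1), ⁅x, y⁆ = 0) → x = 0) ∧
  Submodule.span ℂ {z : L | ∃ x ∈ G 0, ∃ y ∈ G 1, z = ⁅x, y⁆} = G 1 ∧
  Submodule.span ℂ {z : L | ∃ x ∈ G 0, ∃ y ∈ G (-1), z = ⁅x, y⁆} = G (-1)


/-!
For `x ∈ 𝔏₁`, `y ∈ 𝔏₋₁` and `a ∈ 𝔏₀` the invariance of `B` gives
`B(a, [x, y]) = B([a, x], y) = -B(x, [a, y])`, and `[x, y] ∈ 𝔏₀`, where `B` is nondegenerate.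
Hence `[x, 𝔏₋₁] = 0` exactly when `x` is `B`-orthogonal to `[𝔏₀, 𝔏₋₁]`, and `[𝔏₁, y] = 0` exactly
when `y` is `B`-orthogonal to `[𝔏₀, 𝔏₁]`. If these spans are all of `𝔏₋₁` and `𝔏₁`, nondegeneracy
of `B` on `𝔏₁ × 𝔏₋₁` gives transitivity in degrees `±1`; degree `0` is faithfulness and degrees
`|i| ≥ 2` are (iv), (v). Conversely, in finite dimension a proper subspace of `𝔏₁` has a nonzero
`B`-orthogonal vector in `𝔏₋₁` (and symmetrically), which transitivity forbids.
-/

open Module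

namespace LinearMap

variable {K M : Type*} [Field K] [AddCommGroup M] [Module K M]
  (B : M →ₗ[K] M →ₗ[K] K) {U V W : Submodule K M}

theorem domRestrict₁₂_injective (hB : ∀ x ∈ V, (∀ y ∈ W, B x y = 0) → x = 0) :
    Function.Injective (B.domRestrict₁₂ V W) := by
  rw [← ker_eq_bot, ker_eq_bot']
  rintro ⟨x, hx⟩ hx0
  exact Subtype.ext (hB x hx fun y hy => LinearMap.congr_fun hx0 ⟨y, hy⟩)

theorem exists_ne_zero_forall_apply_eq_zero_of_lt [FiniteDimensional K W]
    (hB : ∀ x ∈ V, (∀ y ∈ W, B x y = 0) → x = 0) (hUV : U < V) :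
    ∃ y ∈ W, y ≠ 0 ∧ ∀ x ∈ U, B x y = 0 := by
  have hV := B.domRestrict₁₂_injective hB
  have : FiniteDimensional K V := Module.Finite.of_injective _ hV
  have : FiniteDimensional K U := Submodule.finiteDimensional_of_le hUV.le
  by_contra! hU
  have hW : Function.Injective (B.flip.domRestrict₁₂ W U) :=
    B.flip.domRestrict₁₂_injective fun y hy hy0 => by
      by_contra hne
      obtain ⟨x, hx, hxy⟩ := hU y hy hne
      exact hxy (hy0 x hx)
  have hVW : finrank K V ≤ finrank K (Dual K W) := finrank_le_finrank_of_injective hV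
  have hWU : finrank K W ≤ finrank K (Dual K U) := finrank_le_finrank_of_injective hW
  rw [Subspace.dual_finrank_eq] at hVW hWU
  have := Submodule.finrank_lt_finrank_of_lt hUV
  omega

end LinearMap

variable {L : Type} [LieRing L] [LieAlgebra ℂ L]

def adImage (G : ℤ → Submodule ℂ L) (i : ℤ) : Submodule ℂ L :=
  Submodule.span ℂ {z : L | ∃ a ∈ G 0, ∃ y ∈ G i, z = ⁅a, y⁆}

namespace GoodGrading

variable {G : ℤ → Submodule ℂ L} {B : LinearMap.BilinForm ℂ L} (hG : GoodGrading L G B)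
  {a x y : L}
include hG

theorem lie_mem {i j k : ℤ} (hx : x ∈ G i) (hy : y ∈ G j) (hk : i + j = k) : ⁅x, y⁆ ∈ G k :=
  hk ▸ hG.2.2.1 i j x hx y hy

theorem adImage_le (i : ℤ) : adImage G i ≤ G i := by
  rw [adImage, Submodule.span_le]
  rintro _ ⟨a, ha, y, hy, rfl⟩
  exact hG.lie_mem ha hy (zero_add i)

theorem eq_zero_of_mem_zero (hy : y ∈ G 0) (h : ∀ a ∈ G 0, B a y = 0) : y = 0 :=
  (hG.2.2.2.2.2.1 0 (Or.inl rfl)).2.1 y (by rwa [neg_zero]) h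

theorem eq_zero_of_mem_one (hx : x ∈ G 1) (h : ∀ y ∈ G (-1), B x y = 0) : x = 0 :=
  (hG.2.2.2.2.2.1 1 (Or.inr rfl)).1 x hx h

theorem eq_zero_of_mem_neg_one (hy : y ∈ G (-1)) (h : ∀ x ∈ G 1, B x y = 0) : y = 0 :=
  (hG.2.2.2.2.2.1 1 (Or.inr rfl)).2.1 y hy h

theorem eq_zero_of_two_le {i : ℤ} (hi : 2 ≤ i) (hx : x ∈ G i) (h : ∀ y ∈ G (-1), ⁅x, y⁆ = 0) :
    x = 0 :=
  hG.2.2.2.2.2.2.2.1 i hi x hx h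

theorem eq_zero_of_le_neg_two {i : ℤ} (hi : i ≤ -2) (hy : y ∈ G i) (h : ∀ x ∈ G 1, ⁅y, x⁆ = 0) :
    y = 0 :=
  hG.2.2.2.2.2.2.2.2 i hi y hy h

theorem apply_lie_eq_apply_lie_left (ha : a ∈ G 0) (hx : x ∈ G 1) (hy : y ∈ G (-1)) :
    B a ⁅x, y⁆ = B ⁅a, x⁆ y :=
  hG.2.2.2.2.2.2.1 a ha x hx y hy

theorem apply_lie_eq_neg_apply_lie_right (ha : a ∈ G 0) (hx : x ∈ G 1) (hy : y ∈ G (-1)) :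
    B a ⁅x, y⁆ = -B x ⁅a, y⁆ := by
  rw [hG.apply_lie_eq_apply_lie_left ha hx hy, eq_neg_iff_add_eq_zero]
  exact (hG.2.2.2.2.2.1 1 (Or.inr rfl)).2.2 a ha x hx y hy

theorem forall_lie_neg_one_eq_zero_iff (hx : x ∈ G 1) :
    (∀ y ∈ G (-1), ⁅x, y⁆ = 0) ↔ ∀ y ∈ adImage G (-1), B x y = 0 := by
  constructor
  · intro h y hy
    refine (Submodule.span_le (p := LinearMap.ker (B x)) |>.2 ?_) hy
    rintro _ ⟨a, ha, y, hy, rfl⟩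
    rw [SetLike.mem_coe, LinearMap.mem_ker, ← neg_eq_zero,
      ← hG.apply_lie_eq_neg_apply_lie_right ha hx hy, h y hy, map_zero]
  · intro h y hy
    refine hG.eq_zero_of_mem_zero (hG.lie_mem hx hy (add_neg_cancel 1)) fun a ha => ?_
    rw [hG.apply_lie_eq_neg_apply_lie_right ha hx hy,
      h _ (Submodule.subset_span ⟨a, ha, y, hy, rfl⟩), neg_zero]

theorem forall_lie_one_eq_zero_iff (hy : y ∈ G (-1)) :
    (∀ x ∈ G 1, ⁅y, x⁆ = 0) ↔ ∀ x ∈ adImage G 1, B x y = 0 := by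
  have hskew : ∀ x : L, ⁅y, x⁆ = 0 ↔ ⁅x, y⁆ = 0 := fun x => by rw [← lie_skew, neg_eq_zero]
  simp only [hskew]
  constructor
  · intro h x hx
    refine (Submodule.span_le (p := LinearMap.ker (B.flip y)) |>.2 ?_) hx
    rintro _ ⟨a, ha, x, hx, rfl⟩
    change B ⁅a, x⁆ y = 0
    rw [← hG.apply_lie_eq_apply_lie_left ha hx hy, h x hx, map_zero]
  · intro h x hx
    refine hG.eq_zero_of_mem_zero (hG.lie_mem hx hy (add_neg_cancel 1)) fun a ha => ?_
    rw [hG.apply_lie_eq_apply_lie_left ha hx hy, h _ (Submodule.subset_span ⟨a, ha, x, hx, rfl⟩)]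

theorem transitiveGr_of_faithfulSurj (hF : FaithfulSurj L G) : TransitiveGr L G := by
  obtain ⟨faithful_one, faithful_neg_one, surj_one, surj_neg_one⟩ := hF
  change adImage G 1 = G 1 at surj_one
  change adImage G (-1) = G (-1) at surj_neg_one
  constructor
  · intro i hi x hx h
    obtain rfl | rfl | hi := show i = 0 ∨ i = 1 ∨ 2 ≤ i by omega
    · exact faithful_neg_one x hx h
    · refine hG.eq_zero_of_mem_one hx fun y hy => ?_
      exact (hG.forall_lie_neg_one_eq_zero_iff hx).1 h y (surj_neg_one ▸ hy)
    · exact hG.eq_zero_of_two_le hi hx h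
  · intro i hi y hy h
    obtain rfl | rfl | hi := show i = 0 ∨ i = -1 ∨ i ≤ -2 by omega
    · exact faithful_one y hy h
    · refine hG.eq_zero_of_mem_neg_one hy fun x hx => ?_
      exact (hG.forall_lie_one_eq_zero_iff hy).1 h x (surj_one ▸ hx)
    · exact hG.eq_zero_of_le_neg_two hi hy h

theorem adImage_one_eq_of_transitiveGr [FiniteDimensional ℂ (G (-1))] (hT : TransitiveGr L G) :
    adImage G 1 = G 1 := by
  by_contra hne
  obtain ⟨y, hy, hy0, hBy⟩ := B.exists_ne_zero_forall_apply_eq_zero_of_lt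
    (fun x hx => hG.eq_zero_of_mem_one hx) (lt_of_le_of_ne (hG.adImage_le 1) hne)
  exact hy0 (hT.2 (-1) (by norm_num) y hy ((hG.forall_lie_one_eq_zero_iff hy).2 hBy))

theorem adImage_neg_one_eq_of_transitiveGr [FiniteDimensional ℂ (G 1)] (hT : TransitiveGr L G) :
    adImage G (-1) = G (-1) := by
  by_contra hne
  obtain ⟨x, hx, hx0, hBx⟩ := B.flip.exists_ne_zero_forall_apply_eq_zero_of_lt
    (fun y hy => hG.eq_zero_of_mem_neg_one hy) (lt_of_le_of_ne (hG.adImage_le (-1)) hne)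
  exact hx0 (hT.1 1 zero_le_one x hx ((hG.forall_lie_neg_one_eq_zero_iff hx).2 hBx))

theorem faithfulSurj_of_transitiveGr [FiniteDimensional ℂ (G 1)] [FiniteDimensional ℂ (G (-1))]
    (hT : TransitiveGr L G) : FaithfulSurj L G :=
  ⟨hT.2 0 le_rfl, hT.1 0 le_rfl, hG.adImage_one_eq_of_transitiveGr hT,
    hG.adImage_neg_one_eq_of_transitiveGr hT⟩

end GoodGrading

/-- (a) If the adjoint actions of `𝔏₀` on `𝔏₁` and on `𝔏₋₁` are faithful
and surjective, then `𝔏` is transitive.  (b) If moreover `𝔏₁` and `𝔏₋₁` are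
finite-dimensional, then transitivity is equivalent to faithfulness and surjectivity of
these two actions. -/
theorem stmt_3
    (L : Type) [LieRing L] [LieAlgebra ℂ L]
    (G : ℤ → Submodule ℂ L)
    (B : LinearMap.BilinForm ℂ L)
    (hG : GoodGrading L G B) :
    (FaithfulSurj L G → TransitiveGr L G) ∧
    (FiniteDimensional ℂ ↥(G 1) → FiniteDimensional ℂ ↥(G (-1)) →
      (TransitiveGr L G ↔ FaithfulSurj L G)) :=
  ⟨hG.transitiveGr_of_faithfulSurj, fun _ _ =>
    ⟨hG.faithfulSurj_of_transitiveGr, hG.transitiveGr_of_faithfulSurj⟩⟩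
end

section
/- The pentad of Cartan type P(r,n;A,D,Γ) is a standard pentad: the pairing ⟨·,·⟩_D^Γ : ℂ_D^Γ × ℂ_{−D}^Γ → ℂ is nondegenerate, and the linear map Φ : ℂ_D^Γ ⊗ ℂ_{−D}^Γ → ℂ^r defined on basis vectors by Φ(e_i ⊗ f_j) = δ_{ij}·h_i (where h_i is the i-th column of ᵗA·D·Γ) satisfies B_A(a, Φ(v⊗φ)) = ⟨□_D^r(a⊗v), φ⟩_D^Γ for all a ∈ ℂ^r, v ∈ ℂ_D^Γ, φ ∈ ℂ_{−D}^Γ. Moreover, Φ is the unique linear map with this property. -/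
noncomputable section

open Matrix

/-- The representation `□_D^r` of the abelian Lie algebra `ℂ^r` on `ℂ_D^Γ = ℂⁿ`:
`□_D^r(ε_i ⊗ e_j) = d_{ij} e_j`. -/
def boxD {r n : ℕ} (D : Matrix (Fin r) (Fin n) ℂ) (a : Fin r → ℂ) (v : Fin n → ℂ) :
    Fin n → ℂ :=
  fun j => (∑ i, a i * D i j) * v j

/-- The representation `□_{-D}^r` of `ℂ^r` on `ℂ_{-D}^Γ = ℂⁿ`:
`□_{-D}^r(ε_i ⊗ f_j) = -d_{ij} f_j`. -/
def boxNegD {r n : ℕ} (D : Matrix (Fin r) (Fin n) ℂ) (a : Fin r → ℂ) (φ : Fin n → ℂ) :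
    Fin n → ℂ :=
  fun j => -((∑ i, a i * D i j) * φ j)

/-- The pairing `⟨e_i, f_j⟩_D^Γ = δ_{ij} γ_i`. -/
def pairG {n : ℕ} (γ : Fin n → ℂ) (v φ : Fin n → ℂ) : ℂ :=
  ∑ j, γ j * (v j * φ j)

/-- The bilinear form `B_A(x, y) = ᵗx · ᵗA⁻¹ · y` on `ℂ^r`. -/
def bilinA {r : ℕ} (A : Matrix (Fin r) (Fin r) ℂ) (x y : Fin r → ℂ) : ℂ :=
  x ⬝ᵥ ((A⁻¹)ᵀ *ᵥ y)

/-- `h_i`, the `i`-th column of `ᵗA · D · Γ`. -/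
def hvec {r n : ℕ} (A : Matrix (Fin r) (Fin r) ℂ) (D : Matrix (Fin r) (Fin n) ℂ)
    (γ : Fin n → ℂ) (i : Fin n) : Fin r → ℂ :=
  fun k => (Aᵀ * D * Matrix.diagonal γ) k i

/-- The Cartan matrix `C(A, D, Γ) = Γ · ᵗD · A · D` of the pentad of Cartan type
`P(r, n; A, D, Γ)`. -/
def cartanC {r n : ℕ} (A : Matrix (Fin r) (Fin r) ℂ) (D : Matrix (Fin r) (Fin n) ℂ)
    (γ : Fin n → ℂ) : Matrix (Fin n) (Fin n) ℂ :=
  Matrix.diagonal γ * Dᵀ * A * D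

/-- The permutation matrix `E_π = (δ_{j, π i})_{ij}`. -/
def permMat {n : ℕ} (π : Equiv.Perm (Fin n)) : Matrix (Fin n) (Fin n) ℂ :=
  fun i j => if j = π i then 1 else 0

/-- The annihilator `Ann ℂ_D^Γ = {a ∈ ℂ^r : □_D^r(a ⊗ v) = 0 for all v}`. -/
def annD {r n : ℕ} (D : Matrix (Fin r) (Fin n) ℂ) : Submodule ℂ (Fin r → ℂ) where
  carrier := {a | ∀ v, boxD D a v = 0}
  add_mem' := by
    intro a b ha hb v
    funext j
    have h1 := congrFun (ha v) j
    have h2 := congrFun (hb v) j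
    simp only [boxD, Pi.zero_apply] at h1 h2 ⊢
    simp only [Pi.add_apply, add_mul, Finset.sum_add_distrib]
    rw [h1, h2, add_zero]
  zero_mem' := by
    intro v
    funext j
    simp [boxD]
  smul_mem' := by
    intro c a ha v
    funext j
    have h := congrFun (ha v) j
    simp only [boxD, Pi.zero_apply] at h ⊢
    have hsum : ∑ i, (c • a) i * D i j = c * ∑ i, a i * D i j := by
      rw [Finset.mul_sum]
      refine Finset.sum_congr rfl fun i _ => ?_
      simp [mul_assoc]
    rw [hsum, mul_assoc, h, mul_zero]


/-- The pentad of Cartan type `P(r,n;A,D,Γ)` is a standard pentad: the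
pairing is nondegenerate, and the bilinear map `Φ` with `Φ(e_i ⊗ f_j) = δ_{ij} h_i`
satisfies `B_A(a, Φ(v ⊗ φ)) = ⟨□_D^r(a ⊗ v), φ⟩_D^Γ`; moreover `Φ` is unique with this
property. -/
theorem stmt_5 (r n : ℕ) (hr : 0 < r) (hn : 0 < n)
    (A : Matrix (Fin r) (Fin r) ℂ) (hA : IsUnit A.det)
    (D : Matrix (Fin r) (Fin n) ℂ)
    (γ : Fin n → ℂ) (hγ : ∀ j, γ j ≠ 0) :
    ((∀ v : Fin n → ℂ, (∀ φ : Fin n → ℂ, pairG γ v φ = 0) → v = 0) ∧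
     (∀ φ : Fin n → ℂ, (∀ v : Fin n → ℂ, pairG γ v φ = 0) → φ = 0)) ∧
    (∃ Φ : (Fin n → ℂ) →ₗ[ℂ] (Fin n → ℂ) →ₗ[ℂ] (Fin r → ℂ),
      (∀ i j : Fin n, Φ (Pi.single i 1) (Pi.single j 1)
          = if i = j then hvec A D γ i else 0) ∧
      (∀ (a : Fin r → ℂ) (v φ : Fin n → ℂ),
        bilinA A a (Φ v φ) = pairG γ (boxD D a v) φ) ∧
      (∀ Ψ : (Fin n → ℂ) →ₗ[ℂ] (Fin n → ℂ) →ₗ[ℂ] (Fin r → ℂ),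
        (∀ (a : Fin r → ℂ) (v φ : Fin n → ℂ),
          bilinA A a (Ψ v φ) = pairG γ (boxD D a v) φ) → Ψ = Φ)) := by
  have hinv1 : (A⁻¹)ᵀ * Aᵀ = 1 := by
    rw [← Matrix.transpose_mul, Matrix.mul_nonsing_inv A hA, Matrix.transpose_one]
  have hinv2 : Aᵀ * (A⁻¹)ᵀ = 1 := by
    rw [← Matrix.transpose_mul, Matrix.nonsing_inv_mul A hA, Matrix.transpose_one]
  constructor
  · constructor
    · intro v hv
      funext j
      have h := hv (Pi.single j 1)
      simp only [pairG, Pi.single_apply, mul_ite, mul_one, mul_zero,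
        Finset.sum_ite_eq', Finset.mem_univ, if_true] at h
      rcases mul_eq_zero.mp h with h1 | h1
      · exact absurd h1 (hγ j)
      · exact h1
    · intro φ hφ
      funext j
      have h := hφ (Pi.single j 1)
      simp only [pairG, Pi.single_apply, ite_mul, one_mul, zero_mul, mul_ite, mul_zero,
        Finset.sum_ite_eq', Finset.mem_univ, if_true] at h
      rcases mul_eq_zero.mp h with h1 | h1
      · exact absurd h1 (hγ j)
      · exact h1
  · set Φ : (Fin n → ℂ) →ₗ[ℂ] (Fin n → ℂ) →ₗ[ℂ] (Fin r → ℂ) :=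
      LinearMap.mk₂ ℂ (fun v φ => fun k => ∑ j, v j * φ j * hvec A D γ j k)
        (by
          intro v₁ v₂ φ; funext k
          simp only [Pi.add_apply, add_mul, Finset.sum_add_distrib])
        (by
          intro c v φ; funext k
          simp only [Pi.smul_apply, smul_eq_mul, Finset.mul_sum, mul_assoc])
        (by
          intro v φ₁ φ₂; funext k
          simp only [Pi.add_apply, mul_add, add_mul, Finset.sum_add_distrib])
        (by
          intro c v φ; funext k
          simp only [Pi.smul_apply, smul_eq_mul, Finset.mul_sum]
          exact Finset.sum_congr rfl fun j _ => by ring) with hΦdef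
    have key : ∀ (j : Fin n) (k : Fin r),
        (∑ m, (A⁻¹)ᵀ k m * hvec A D γ j m) = γ j * D k j := by
      intro j k
      have h1 : (∑ m, (A⁻¹)ᵀ k m * hvec A D γ j m)
          = ((A⁻¹)ᵀ * (Aᵀ * D * Matrix.diagonal γ)) k j := by
        simp [Matrix.mul_apply, hvec]
      rw [h1, ← Matrix.mul_assoc, ← Matrix.mul_assoc, hinv1, Matrix.one_mul,
        Matrix.mul_diagonal]
      ring
    have hmain : ∀ (a : Fin r → ℂ) (v φ : Fin n → ℂ),
        bilinA A a (Φ v φ) = pairG γ (boxD D a v) φ := by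
      intro a v φ
      have step1 : ∀ k, (∑ m, (A⁻¹)ᵀ k m * ∑ j, v j * φ j * hvec A D γ j m)
          = ∑ j, v j * φ j * (γ j * D k j) := by
        intro k
        calc ∑ m, (A⁻¹)ᵀ k m * ∑ j, v j * φ j * hvec A D γ j m
            = ∑ m, ∑ j, v j * φ j * ((A⁻¹)ᵀ k m * hvec A D γ j m) := by
              refine Finset.sum_congr rfl fun m _ => ?_
              rw [Finset.mul_sum]
              exact Finset.sum_congr rfl fun j _ => by ring
          _ = ∑ j, ∑ m, v j * φ j * ((A⁻¹)ᵀ k m * hvec A D γ j m) := Finset.sum_comm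
          _ = ∑ j, v j * φ j * (γ j * D k j) := by
              refine Finset.sum_congr rfl fun j _ => ?_
              rw [← Finset.mul_sum, key j k]
      calc bilinA A a (Φ v φ)
          = ∑ k, a k * ∑ j, v j * φ j * (γ j * D k j) := by
            simp only [bilinA, dotProduct, Matrix.mulVec, hΦdef, LinearMap.mk₂_apply,
              dotProduct]
            exact Finset.sum_congr rfl fun k _ => by rw [step1 k]
        _ = ∑ k, ∑ j, a k * (v j * φ j * (γ j * D k j)) := by
            exact Finset.sum_congr rfl fun k _ => Finset.mul_sum _ _ _
        _ = ∑ j, ∑ k, a k * (v j * φ j * (γ j * D k j)) := Finset.sum_comm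
        _ = pairG γ (boxD D a v) φ := by
            unfold pairG boxD
            refine Finset.sum_congr rfl fun j _ => ?_
            rw [show (∑ k, a k * (v j * φ j * (γ j * D k j)))
              = (∑ k, a k * D k j) * (v j * φ j * γ j) by
                rw [Finset.sum_mul]; exact Finset.sum_congr rfl fun k _ => by ring]
            ring
    refine ⟨Φ, ?_, hmain, ?_⟩
    · intro i j
      funext k
      simp only [hΦdef, LinearMap.mk₂_apply, Pi.single_apply]
      by_cases hij : i = j
      · subst hij
        rw [if_pos rfl, Finset.sum_eq_single i]
        · simp
        · intro l _ hl; simp [hl]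
        · simp
      · rw [if_neg hij, Finset.sum_eq_zero]
        · simp
        · intro l _
          by_cases hl : l = i
          · subst hl; simp [hij]
          · simp [hl]
    · intro Ψ hΨ
      apply LinearMap.ext; intro v
      apply LinearMap.ext; intro φ
      have h2 : (A⁻¹)ᵀ *ᵥ (Ψ v φ) = (A⁻¹)ᵀ *ᵥ (Φ v φ) := by
        funext k
        have h := (hΨ (Pi.single k 1) v φ).trans (hmain (Pi.single k 1) v φ).symm
        simpa [bilinA, dotProduct, Pi.single_apply, ite_mul, one_mul, zero_mul,
          Finset.sum_ite_eq', Finset.mem_univ] using h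
      have h3 := congrArg (fun x => Aᵀ *ᵥ x) h2
      simpa [Matrix.mulVec_mulVec, hinv2] using h3

end
end

section
/- Let P(r,n;A,D,Γ) and P(r',n';A',D',Γ') be pentads of Cartan type such that rank D = n and rank D' = n'. If these pentads are equivalent, then r = r', n = n', and there exist a nonzero complex number c, a permutation π of {1,…,n} with permutation matrix E_π = (δ_{i,π(i)}), and an invertible matrix T ∈ M(r,r;ℂ) such that A = (1/c)·ᵗT^{−1}·A'·T^{−1} and D = T·D'·ᵗE_π. -/
/-!
In coordinates, `□_D^r(a ⊗ v)` is the pointwise product `(ᵗD a) · v`, and since `rank D = n` the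
weights `ᵗD a` run through all of `ℂⁿ`. So `σ` intertwines the multiplication action of the algebra
`ℂⁿ` with a multiplication action on `ℂ^{n'}`; it must carry the orthogonal idempotents `e_j` to
vectors with pairwise disjoint supports, and as `σ` is bijective these supports are singletons
`{π j}`. Comparing weights at `π j` gives `ᵗD = E_π · ᵗD' · M` for the matrix `M` of `τ`, i.e.
`D = T D' ᵗE_π` with `T = ᵗM`, and invariance of `B_A` up to `c` reads `A⁻¹ = c · T A'⁻¹ ᵗT`.
-/

noncomputable section

open Matrix

section MonomialEquiv

variable {K ι κ α : Type*} [Field K] [DecidableEq ι]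

theorem LinearEquiv.exists_map_single_apply_ne_zero [Fintype ι] [DecidableEq κ]
    (σ : (ι → K) ≃ₗ[K] (κ → K)) (k : κ) : ∃ j, σ (Pi.single j 1) k ≠ 0 := by
  by_contra! h
  have hzero : LinearMap.proj k ∘ₗ σ.toLinearMap = 0 :=
    (Pi.basisFun K ι).ext fun j => by simpa using h j
  simpa using LinearMap.congr_fun hzero (σ.symm (Pi.single k 1))

theorem LinearEquiv.eq_of_map_single_apply_ne_zero (σ : (ι → K) ≃ₗ[K] (κ → K))
    {u : α → ι → K} {u' : α → κ → K} (hu : Function.Surjective u)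
    (hσ : ∀ a v, σ (u a * v) = u' a * σ v) {j j' : ι} {k : κ}
    (hj : σ (Pi.single j 1) k ≠ 0) (hj' : σ (Pi.single j' 1) k ≠ 0) : j = j' := by
  by_contra hne
  obtain ⟨a, ha⟩ := hu (Pi.single j 1)
  have hidem : u' a k * σ (Pi.single j 1) k = σ (Pi.single j 1) k := by
    have hsq : (Pi.single j 1 * Pi.single j 1 : ι → K) = Pi.single j 1 := by
      rw [← Pi.single_mul, mul_one]
    simpa [ha, hsq] using (congrFun (hσ a (Pi.single j 1)) k).symm
  have hortho : u' a k * σ (Pi.single j' 1) k = 0 := by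
    have hzero : (Pi.single j 1 * Pi.single j' 1 : ι → K) = 0 := by
      rw [← Pi.single_mul_right]
      simp [Ne.symm hne]
    simpa [ha, hzero] using (congrFun (hσ a (Pi.single j' 1)) k).symm
  rw [mul_eq_right₀ hj] at hidem
  simp [hidem, hj'] at hortho

theorem LinearEquiv.exists_equiv_apply_eq_of_map_mul [Fintype ι] [Fintype κ] [DecidableEq κ]
    (σ : (ι → K) ≃ₗ[K] (κ → K)) {u : α → ι → K} {u' : α → κ → K}
    (hu : Function.Surjective u) (hσ : ∀ a v, σ (u a * v) = u' a * σ v) :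
    ∃ π : ι ≃ κ, ∀ a j, u a j = u' a (π j) := by
  choose ρ hρ using σ.exists_map_single_apply_ne_zero
  have hρ_surj : Function.Surjective ρ := fun j => by
    obtain ⟨k, hk⟩ := Function.ne_iff.mp <|
      σ.map_ne_zero_iff.mpr (Pi.single_ne_zero_iff.mpr (one_ne_zero (α := K)))
    exact ⟨k, σ.eq_of_map_single_apply_ne_zero hu hσ (hρ k) hk⟩
  have hcard : Fintype.card κ = Fintype.card ι := by
    simpa using σ.finrank_eq.symm
  let π := (Equiv.ofBijective ρ
    ((Fintype.bijective_iff_surjective_and_card ρ).mpr ⟨hρ_surj, hcard⟩)).symm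
  refine ⟨π, fun a j => ?_⟩
  have hne : σ (Pi.single j 1) (π j) ≠ 0 := by
    simpa [π, Equiv.ofBijective_apply_symm_apply] using hρ (π j)
  have h := congrFun (hσ a (Pi.single j 1)) (π j)
  rw [← Pi.single_mul_right, mul_one, ← mul_one (u a j), ← smul_eq_mul, Pi.single_smul,
    map_smul, Pi.smul_apply, smul_eq_mul, Pi.mul_apply] at h
  exact mul_right_cancel₀ hne h

end MonomialEquiv

theorem boxD_eq_mul {r n : ℕ} (D : Matrix (Fin r) (Fin n) ℂ) (a : Fin r → ℂ) (v : Fin n → ℂ) :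
    boxD D a v = (Dᵀ *ᵥ a) * v := by
  funext j
  simp [boxD, mulVec, dotProduct, mul_comm]

theorem bilinA_eq_dotProduct_mulVec {r : ℕ} (A : Matrix (Fin r) (Fin r) ℂ) (a b : Fin r → ℂ) :
    bilinA A a b = b ⬝ᵥ (A⁻¹ *ᵥ a) := by
  rw [bilinA, mulVec_transpose, dotProduct_comm, dotProduct_mulVec]

theorem Matrix.surjective_transpose_mulVec_of_rank_eq_card {K m n : Type*} [Field K]
    [Fintype m] [Fintype n] (D : Matrix m n K) (hD : D.rank = Fintype.card n) :
    Function.Surjective (Dᵀ *ᵥ ·) := by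
  change Function.Surjective Dᵀ.mulVecLin
  rw [← LinearMap.range_eq_top]
  apply Submodule.eq_top_of_finrank_eq
  rw [show Module.finrank K (LinearMap.range Dᵀ.mulVecLin) = Dᵀ.rank from rfl, rank_transpose,
    hD, Module.finrank_fintype_fun_eq_card]

theorem permMat_eq_toMatrix_toPEquiv {n : ℕ} (π : Equiv.Perm (Fin n)) :
    permMat π = π.toPEquiv.toMatrix := by
  ext i j
  simp [permMat, PEquiv.toMatrix_apply, eq_comm]

theorem eq_mul_mul_permMat_transpose_of_mulVec {m : Type*} [Fintype m] {n : ℕ}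
    {D D' : Matrix m (Fin n) ℂ} {T : Matrix m m ℂ} {π : Equiv.Perm (Fin n)}
    (h : ∀ a j, (Dᵀ *ᵥ a) j = (D'ᵀ *ᵥ (Tᵀ *ᵥ a)) (π j)) :
    D = T * D' * (permMat π)ᵀ := by
  have hDT : Dᵀ = permMat π * D'ᵀ * Tᵀ := by
    refine ext_iff_mulVec.mpr fun a => funext fun j => ?_
    rw [← mulVec_mulVec, ← mulVec_mulVec, permMat_eq_toMatrix_toPEquiv,
      PEquiv.toMatrix_toPEquiv_mulVec]
    exact h a j
  rw [← transpose_transpose D, hDT, transpose_mul, transpose_mul, transpose_transpose,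
    transpose_transpose, Matrix.mul_assoc]

theorem eq_smul_inv_mul_mul_inv_of_bilinA_eq {r : ℕ} {A A' T : Matrix (Fin r) (Fin r) ℂ}
    {c : ℂ}
    (hA : IsUnit A.det) (hA' : IsUnit A'.det) (hT : IsUnit T.det) (hc : c ≠ 0)
    (h : ∀ a b, bilinA A a b = c * bilinA A' (Tᵀ *ᵥ a) (Tᵀ *ᵥ b)) :
    A = c⁻¹ • ((Tᵀ)⁻¹ * A' * T⁻¹) := by
  have hinv : A⁻¹ = c • (T * A'⁻¹ * Tᵀ) := by
    refine ext_iff_mulVec.mpr fun a => dotProduct_eq _ _ fun b => ?_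
    rw [dotProduct_comm, ← bilinA_eq_dotProduct_mulVec, h, bilinA_eq_dotProduct_mulVec,
      mulVec_transpose T b, ← dotProduct_mulVec, smul_mulVec, smul_dotProduct, smul_eq_mul,
      dotProduct_comm b, mulVec_mulVec, mulVec_mulVec]
  have hdet : IsUnit (T * A'⁻¹ * Tᵀ).det := by
    rw [det_mul, det_mul, det_transpose]
    exact (hT.mul (isUnit_nonsing_inv_det A' hA')).mul hT
  have : Invertible c := invertibleOfNonzero hc
  rw [← nonsing_inv_nonsing_inv A hA, hinv, Matrix.inv_smul _ c hdet, invOf_eq_inv,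
    Matrix.mul_inv_rev, Matrix.mul_inv_rev, nonsing_inv_nonsing_inv A' hA', Matrix.mul_assoc]

theorem stmt_11_general (r n r' n' : ℕ)
    (A : Matrix (Fin r) (Fin r) ℂ) (hA : IsUnit A.det)
    (D : Matrix (Fin r) (Fin n) ℂ)
    (A' : Matrix (Fin r') (Fin r') ℂ) (hA' : IsUnit A'.det)
    (D' : Matrix (Fin r') (Fin n') ℂ)
    (hD : D.rank = n)
    -- the pentads are equivalent:
    (c₀ : ℂ) (hc₀ : c₀ ≠ 0)
    (τ : (Fin r → ℂ) ≃ₗ[ℂ] (Fin r' → ℂ))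
    (σ : (Fin n → ℂ) ≃ₗ[ℂ] (Fin n' → ℂ))
    (hσ : ∀ (a : Fin r → ℂ) (v : Fin n → ℂ), σ (boxD D a v) = boxD D' (τ a) (σ v))
    (hτB : ∀ a b : Fin r → ℂ, bilinA A a b = c₀ * bilinA A' (τ a) (τ b)) :
    ∃ (hrr : r = r') (hnn : n = n') (c : ℂ), c ≠ 0 ∧
      ∃ (π : Equiv.Perm (Fin n)) (T : Matrix (Fin r) (Fin r) ℂ),
        IsUnit T.det ∧
        A = c⁻¹ • ((Tᵀ)⁻¹
            * (Matrix.reindex (finCongr hrr.symm) (finCongr hrr.symm) A') * T⁻¹) ∧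
        D = T * (Matrix.reindex (finCongr hrr.symm) (finCongr hnn.symm) D') * (permMat π)ᵀ := by
  obtain rfl : r = r' := by simpa using τ.finrank_eq
  obtain rfl : n = n' := by simpa using σ.finrank_eq
  simp only [finCongr_refl, reindex_refl_refl, exists_const]
  set T := (LinearMap.toMatrix' (τ : (Fin r → ℂ) →ₗ[ℂ] (Fin r → ℂ)))ᵀ
  have hτT : ∀ a, τ a = Tᵀ *ᵥ a := fun a => by
    rw [transpose_transpose, LinearMap.toMatrix'_mulVec, LinearEquiv.coe_coe]
  have hT : IsUnit T.det := by
    rw [det_transpose, LinearMap.det_toMatrix']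
    exact τ.isUnit_det'
  obtain ⟨π, hπ⟩ := σ.exists_equiv_apply_eq_of_map_mul
    (D.surjective_transpose_mulVec_of_rank_eq_card (by simpa using hD))
    (u' := fun a => D'ᵀ *ᵥ τ a) fun a v => by simpa only [boxD_eq_mul] using hσ a v
  refine ⟨c₀, hc₀, π, T, hT, eq_smul_inv_mul_mul_inv_of_bilinA_eq hA hA' hT hc₀ ?_,
    eq_mul_mul_permMat_transpose_of_mulVec ?_⟩
  · simpa only [hτT] using hτB
  · simpa only [hτT] using hπ

/-- If pentads of Cartan type `P(r,n;A,D,Γ)` and `P(r',n';A',D',Γ')` with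
`rank D = n`, `rank D' = n'` are equivalent, then `r = r'`, `n = n'`, and there are a
nonzero `c`, a permutation `π` and an invertible `T` with `A = (1/c)·ᵗT⁻¹·A'·T⁻¹` and
`D = T·D'·ᵗE_π`. -/
theorem stmt_11 (r n r' n' : ℕ) (hr : 0 < r) (hn : 0 < n) (hr' : 0 < r') (hn' : 0 < n')
    (A : Matrix (Fin r) (Fin r) ℂ) (hA : IsUnit A.det)
    (D : Matrix (Fin r) (Fin n) ℂ)
    (γ : Fin n → ℂ) (hγ : ∀ j, γ j ≠ 0)
    (A' : Matrix (Fin r') (Fin r') ℂ) (hA' : IsUnit A'.det)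
    (D' : Matrix (Fin r') (Fin n') ℂ)
    (γ' : Fin n' → ℂ) (hγ' : ∀ j, γ' j ≠ 0)
    (hD : D.rank = n) (hD' : D'.rank = n')
    -- the pentads are equivalent:
    (c₀ : ℂ) (hc₀ : c₀ ≠ 0)
    (τ : (Fin r → ℂ) ≃ₗ[ℂ] (Fin r' → ℂ))
    (σ : (Fin n → ℂ) ≃ₗ[ℂ] (Fin n' → ℂ))
    (ς : (Fin n → ℂ) ≃ₗ[ℂ] (Fin n' → ℂ))
    (hσ : ∀ (a : Fin r → ℂ) (v : Fin n → ℂ), σ (boxD D a v) = boxD D' (τ a) (σ v))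
    (hς : ∀ (a : Fin r → ℂ) (φ : Fin n → ℂ), ς (boxNegD D a φ) = boxNegD D' (τ a) (ς φ))
    (hτB : ∀ a b : Fin r → ℂ, bilinA A a b = c₀ * bilinA A' (τ a) (τ b))
    (hpair : ∀ (v φ : Fin n → ℂ), pairG γ v φ = pairG γ' (σ v) (ς φ)) :
    ∃ (hrr : r = r') (hnn : n = n') (c : ℂ), c ≠ 0 ∧
      ∃ (π : Equiv.Perm (Fin n)) (T : Matrix (Fin r) (Fin r) ℂ),
        IsUnit T.det ∧
        A = c⁻¹ • ((Tᵀ)⁻¹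
            * (Matrix.reindex (finCongr hrr.symm) (finCongr hrr.symm) A') * T⁻¹) ∧
        D = T * (Matrix.reindex (finCongr hrr.symm) (finCongr hnn.symm) D') * (permMat π)ᵀ :=
  stmt_11_general r n r' n' A hA D A' hA' D' hD c₀ hc₀ τ σ hσ hτB
end
end

section
/- Let P(r,n;A,D,Γ) and P(r',n';A',D',Γ') be pentads of Cartan type with rank D = n and rank D' = n'. If these pentads are equivalent, then their Cartan matrices are equivalent: there exist an invertible diagonal matrix Γ̃ ∈ M(n,n;ℂ) and a permutation matrix E_π ∈ M(n,n;ℂ) such that C(A,D,Γ) = Γ̃ · ᵗE_π · C(A',D',Γ') · E_π. -/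
noncomputable section

open Matrix

/-!
Since `σ` intertwines the diagonal actions, each `σ eⱼ` is a common eigenvector of the operators
`□_{D'}(τ a)`, with eigenvalue `(a ᵥ* D) j`. As `rank D' = n'`, the columns of `D'` (the weights)
are pairwise distinct, so `σ eⱼ` is a nonzero multiple of a single `e_{π j}`, and `π` is injective
because `σ` is. Comparing eigenvalues gives `D = ᵗT · D'E_π` with `T` the matrix of `τ`.
Compatibility of `τ` with the forms reads `A⁻¹ = c₀ · ᵗT A'⁻¹ T`, i.e. `T A ᵗT = c₀⁻¹ A'`, and
substituting both into `Γ ᵗD A D` yields `C(A', D', Γ')` with rows and columns permuted by `π`,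
up to the diagonal factor `γⱼ / (c₀ γ'_{π j})`.
-/

theorem injective_col_of_rank_eq {m n K : Type*} [Field K] [Fintype m] [Fintype n]
    {D : Matrix m n K} (hD : D.rank = Fintype.card n) : Function.Injective D.col :=
  (linearIndependent_iff_card_eq_finrank_span.mpr
    (by rw [← hD, rank_eq_finrank_span_cols]; rfl)).injective

section WeightMatching

variable {α ι κ K : Type*} [Field K] [Fintype ι] [DecidableEq ι] [DecidableEq κ]

theorem exists_injective_weight_eq (w : α → ι → K) (w' : α → κ → K)
    (hw' : Function.Injective fun k a => w' a k)
    (σ : (ι → K) ≃ₗ[K] (κ → K)) (hσ : ∀ a v, σ (w a * v) = w' a * σ v) :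
    ∃ π : ι → κ, Function.Injective π ∧ ∀ a j, w a j = w' a (π j) := by
  set u : ι → κ → K := fun j => σ (Pi.single j 1)
  have eigen : ∀ a j k, w' a k * u j k = w a j * u j k := by
    intro a j k
    have hsingle : w a * Pi.single j 1 = w a j • Pi.single j 1 := by
      ext i
      by_cases hij : i = j <;> simp [hij]
    simpa [hsingle] using (congrFun (hσ a (Pi.single j 1)) k).symm
  have hex : ∀ j, ∃ k, u j k ≠ 0 := fun j =>
    Function.ne_iff.mp (σ.map_ne_zero_iff.mpr (Pi.single_ne_zero_iff.mpr one_ne_zero))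
  choose π hπ using hex
  have weight : ∀ a j, w a j = w' a (π j) := fun a j =>
    (mul_right_cancel₀ (hπ j) (eigen a j (π j))).symm
  have support : ∀ j k, u j k ≠ 0 → k = π j := fun j k hk =>
    hw' (funext fun a => (mul_right_cancel₀ hk (eigen a j k)).trans (weight a j))
  have normalize : ∀ j, (u j (π j))⁻¹ • u j = Pi.single (π j) 1 := by
    intro j
    ext k
    rcases eq_or_ne k (π j) with rfl | hk
    · simp [hπ j]
    · simp [hk, not_imp_comm.mp (support j k) hk]
  have hli : LinearIndependent K fun j => (Pi.single (π j) 1 : κ → K) := by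
    have hu : LinearIndependent K u := by
      simpa [u, Function.comp_def] using
        (Pi.basisFun K ι).linearIndependent.map' σ.toLinearMap σ.ker
    simp_rw [← normalize]
    exact hu.units_smul fun j => Units.mk0 _ (inv_ne_zero (hπ j))
  exact ⟨π, fun j j' h => hli.injective (by simp only [h]), weight⟩

end WeightMatching

section MatrixAlgebra

variable {m m' n R K : Type*} [Fintype m] [Fintype m']

theorem eq_of_forall_dotProduct_mulVec [Fintype n] [DecidableEq m] [DecidableEq n]
    [CommSemiring R] {M N : Matrix m n R} (h : ∀ a b, a ⬝ᵥ M *ᵥ b = a ⬝ᵥ N *ᵥ b) : M = N := by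
  ext i j
  simpa using h (Pi.single i 1) (Pi.single j 1)

theorem mulVec_dotProduct_mulVec_mulVec [CommSemiring R] (T : Matrix m' m R)
    (M : Matrix m' m' R) (a b : m → R) :
    T *ᵥ a ⬝ᵥ M *ᵥ (T *ᵥ b) = a ⬝ᵥ (Tᵀ * M * T) *ᵥ b := by
  rw [← mulVec_mulVec, ← mulVec_mulVec, dotProduct_mulVec a, vecMul_transpose]

theorem mul_mul_transpose_eq_smul_of_inv_eq [DecidableEq m] [DecidableEq m'] [Field K]
    {A : Matrix m m K} {A' : Matrix m' m' K} {T : Matrix m' m K} {S : Matrix m m' K} {c : K}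
    (hTS : T * S = 1) (hA : IsUnit A.det) (hA' : IsUnit A'.det) (hc : c ≠ 0)
    (h : A⁻¹ = c • (Tᵀ * A'⁻¹ * T)) :
    T * A * Tᵀ = c⁻¹ • A' := by
  have hinv : T * A * Tᵀ * A'⁻¹ = c⁻¹ • 1 := by
    calc T * A * Tᵀ * A'⁻¹ = c⁻¹ • (T * (A * (c • (Tᵀ * A'⁻¹ * T))) * S) := by
          simp [smul_smul, inv_mul_cancel₀ hc, Matrix.mul_assoc, hTS]
      _ = c⁻¹ • 1 := by rw [← h, mul_nonsing_inv _ hA, Matrix.mul_one, hTS]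
  calc T * A * Tᵀ = T * A * Tᵀ * A'⁻¹ * A' := by
        rw [Matrix.mul_assoc _ A'⁻¹, nonsing_inv_mul _ hA', Matrix.mul_one]
    _ = c⁻¹ • A' := by rw [hinv, Matrix.smul_mul, Matrix.one_mul]

end MatrixAlgebra

theorem bilinA_eq_dotProduct_inv_mulVec {r : ℕ} (A : Matrix (Fin r) (Fin r) ℂ) (a b : Fin r → ℂ) :
    bilinA A a b = b ⬝ᵥ A⁻¹ *ᵥ a := by
  rw [bilinA, mulVec_transpose, dotProduct_comm, dotProduct_mulVec]

theorem inv_eq_smul_of_bilinA_eq {r r' : ℕ} {A : Matrix (Fin r) (Fin r) ℂ}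
    {A' : Matrix (Fin r') (Fin r') ℂ} {T : Matrix (Fin r') (Fin r) ℂ} {c : ℂ}
    (h : ∀ a b, bilinA A a b = c * bilinA A' (T *ᵥ a) (T *ᵥ b)) :
    A⁻¹ = c • (Tᵀ * A'⁻¹ * T) := by
  refine eq_of_forall_dotProduct_mulVec fun a b => ?_
  rw [← bilinA_eq_dotProduct_inv_mulVec, h, bilinA_eq_dotProduct_inv_mulVec,
    mulVec_dotProduct_mulVec_mulVec, smul_mulVec, dotProduct_smul, smul_eq_mul]

theorem permMat_transpose_mul_mul_permMat {n : ℕ} (ρ : Equiv.Perm (Fin n))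
    (M : Matrix (Fin n) (Fin n) ℂ) :
    (permMat ρ)ᵀ * M * permMat ρ = M.submatrix ρ.symm ρ.symm := by
  ext j k
  simp [Matrix.mul_apply, permMat, ← Equiv.symm_apply_eq, ite_mul, mul_ite]

theorem cartanC_eq_diagonal_mul {r n : ℕ} (A : Matrix (Fin r) (Fin r) ℂ)
    (D : Matrix (Fin r) (Fin n) ℂ) (γ : Fin n → ℂ) :
    cartanC A D γ = diagonal γ * (Dᵀ * A * D) := by
  simp only [cartanC, Matrix.mul_assoc]

theorem cartanC_eq_diagonal_mul_submatrix {r r' n n' : ℕ} {A : Matrix (Fin r) (Fin r) ℂ}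
    {A' : Matrix (Fin r') (Fin r') ℂ} {T : Matrix (Fin r') (Fin r) ℂ}
    {D : Matrix (Fin r) (Fin n) ℂ} {D' : Matrix (Fin r') (Fin n') ℂ} {c : ℂ} (γ : Fin n → ℂ)
    {γ' : Fin n' → ℂ} (π : Fin n → Fin n') (hD : D = Tᵀ * D'.submatrix id π)
    (hA : T * A * Tᵀ = c⁻¹ • A') (hc : c ≠ 0) (hγ' : ∀ k, γ' k ≠ 0) :
    cartanC A D γ =
      diagonal (fun j => γ j / (c * γ' (π j))) * (cartanC A' D' γ').submatrix π π := by
  have hgram : Dᵀ * A * D = c⁻¹ • (D'ᵀ * A' * D').submatrix π π := by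
    calc Dᵀ * A * D = (D'.submatrix id π)ᵀ * (T * A * Tᵀ) * D'.submatrix id π := by
          simp only [hD, transpose_mul, transpose_transpose, Matrix.mul_assoc]
      _ = c⁻¹ • (D'ᵀ * A' * D').submatrix π π := by
          rw [hA, transpose_submatrix, Matrix.mul_smul, Matrix.smul_mul,
            submatrix_mul _ _ _ id _ Function.bijective_id,
            submatrix_mul _ _ _ id _ Function.bijective_id, submatrix_id_id]
  ext j k
  simp only [cartanC_eq_diagonal_mul, hgram, diagonal_mul, submatrix_apply,
    Matrix.smul_apply, smul_eq_mul]
  field_simp [hγ' (π j)]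

theorem exists_injective_vecMul_eq_of_boxD {r r' n n' : ℕ} (D : Matrix (Fin r) (Fin n) ℂ)
    {D' : Matrix (Fin r') (Fin n') ℂ} (hD' : Function.Injective D'.col)
    (τ : (Fin r → ℂ) ≃ₗ[ℂ] (Fin r' → ℂ)) (σ : (Fin n → ℂ) ≃ₗ[ℂ] (Fin n' → ℂ))
    (hσ : ∀ a v, σ (boxD D a v) = boxD D' (τ a) (σ v)) :
    ∃ π : Fin n → Fin n', Function.Injective π ∧ ∀ a, a ᵥ* D = τ a ᵥ* D'.submatrix id π := by
  have hw' : Function.Injective fun k a => (τ a ᵥ* D') k := by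
    intro k k' h
    apply hD'
    funext i
    simpa using congrFun h (τ.symm (Pi.single i 1))
  obtain ⟨π, hπ, hweight⟩ :=
    exists_injective_weight_eq (fun a => a ᵥ* D) (fun a => τ a ᵥ* D') hw' σ hσ
  exact ⟨π, hπ, fun a => funext (hweight a)⟩

theorem stmt_12_general (r n r' n' : ℕ)
    (A : Matrix (Fin r) (Fin r) ℂ) (hA : IsUnit A.det)
    (D : Matrix (Fin r) (Fin n) ℂ)
    (γ : Fin n → ℂ) (hγ : ∀ j, γ j ≠ 0)
    (A' : Matrix (Fin r') (Fin r') ℂ) (hA' : IsUnit A'.det)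
    (D' : Matrix (Fin r') (Fin n') ℂ)
    (γ' : Fin n' → ℂ) (hγ' : ∀ j, γ' j ≠ 0)
    (hD' : D'.rank = n')
    -- the pentads are equivalent:
    (c₀ : ℂ) (hc₀ : c₀ ≠ 0)
    (τ : (Fin r → ℂ) ≃ₗ[ℂ] (Fin r' → ℂ))
    (σ : (Fin n → ℂ) ≃ₗ[ℂ] (Fin n' → ℂ))
    (hσ : ∀ (a : Fin r → ℂ) (v : Fin n → ℂ), σ (boxD D a v) = boxD D' (τ a) (σ v))
    (hτB : ∀ a b : Fin r → ℂ, bilinA A a b = c₀ * bilinA A' (τ a) (τ b)) :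
    ∃ (hnn : n = n') (δ : Fin n → ℂ), (∀ j, δ j ≠ 0) ∧
      ∃ π : Equiv.Perm (Fin n),
        cartanC A D γ = Matrix.diagonal δ * (permMat π)ᵀ
          * (Matrix.reindex (finCongr hnn.symm) (finCongr hnn.symm) (cartanC A' D' γ'))
          * permMat π := by
  obtain rfl : n = n' := by simpa using σ.finrank_eq
  obtain ⟨π, hπ, hweight⟩ := exists_injective_vecMul_eq_of_boxD D
    (injective_col_of_rank_eq (by simpa using hD')) τ σ hσ
  set T := LinearMap.toMatrix' τ.toLinearMap
  have hτT : ∀ a, τ a = T *ᵥ a := fun a => (LinearMap.toMatrix'_mulVec _ a).symm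
  have hD_eq : D = Tᵀ * D'.submatrix id π :=
    ext_iff_vecMul.mpr fun a => by rw [hweight, hτT, vecMul_mulVec]
  have hTS : T * LinearMap.toMatrix' τ.symm.toLinearMap = 1 := by
    rw [← LinearMap.toMatrix'_comp]
    simp
  have hA_eq : T * A * Tᵀ = c₀⁻¹ • A' :=
    mul_mul_transpose_eq_smul_of_inv_eq hTS hA hA' hc₀
      (inv_eq_smul_of_bilinA_eq fun a b => by simpa only [hτT] using hτB a b)
  let e := Equiv.ofBijective π (Finite.injective_iff_bijective.mp hπ)
  refine ⟨rfl, fun j => γ j / (c₀ * γ' (π j)),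
    fun j => div_ne_zero (hγ j) (mul_ne_zero hc₀ (hγ' _)), e.symm, ?_⟩
  rw [finCongr_refl, reindex_refl_refl, Matrix.mul_assoc (diagonal _),
    Matrix.mul_assoc (diagonal _), permMat_transpose_mul_mul_permMat, Equiv.symm_symm]
  exact cartanC_eq_diagonal_mul_submatrix γ π hD_eq hA_eq hc₀ hγ'

/-- If pentads of Cartan type `P(r,n;A,D,Γ)` and `P(r',n';A',D',Γ')` with
`rank D = n`, `rank D' = n'` are equivalent, then their Cartan matrices are equivalent:
`C(A,D,Γ) = Γ̃ · ᵗE_π · C(A',D',Γ') · E_π` for some invertible diagonal `Γ̃` and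
permutation matrix `E_π`. -/
theorem stmt_12 (r n r' n' : ℕ) (hr : 0 < r) (hn : 0 < n) (hr' : 0 < r') (hn' : 0 < n')
    (A : Matrix (Fin r) (Fin r) ℂ) (hA : IsUnit A.det)
    (D : Matrix (Fin r) (Fin n) ℂ)
    (γ : Fin n → ℂ) (hγ : ∀ j, γ j ≠ 0)
    (A' : Matrix (Fin r') (Fin r') ℂ) (hA' : IsUnit A'.det)
    (D' : Matrix (Fin r') (Fin n') ℂ)
    (γ' : Fin n' → ℂ) (hγ' : ∀ j, γ' j ≠ 0)
    (hD : D.rank = n) (hD' : D'.rank = n')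
    -- the pentads are equivalent:
    (c₀ : ℂ) (hc₀ : c₀ ≠ 0)
    (τ : (Fin r → ℂ) ≃ₗ[ℂ] (Fin r' → ℂ))
    (σ : (Fin n → ℂ) ≃ₗ[ℂ] (Fin n' → ℂ))
    (ς : (Fin n → ℂ) ≃ₗ[ℂ] (Fin n' → ℂ))
    (hσ : ∀ (a : Fin r → ℂ) (v : Fin n → ℂ), σ (boxD D a v) = boxD D' (τ a) (σ v))
    (hς : ∀ (a : Fin r → ℂ) (φ : Fin n → ℂ), ς (boxNegD D a φ) = boxNegD D' (τ a) (ς φ))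
    (hτB : ∀ a b : Fin r → ℂ, bilinA A a b = c₀ * bilinA A' (τ a) (τ b))
    (hpair : ∀ (v φ : Fin n → ℂ), pairG γ v φ = pairG γ' (σ v) (ς φ)) :
    ∃ (hnn : n = n') (δ : Fin n → ℂ), (∀ j, δ j ≠ 0) ∧
      ∃ π : Equiv.Perm (Fin n),
        cartanC A D γ = Matrix.diagonal δ * (permMat π)ᵀ
          * (Matrix.reindex (finCongr hnn.symm) (finCongr hnn.symm) (cartanC A' D' γ'))
          * permMat π :=
  stmt_12_general r n r' n' A hA D γ hγ A' hA' D' γ' hγ' hD' c₀ hc₀ τ σ hσ hτB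

end
end

section
/- Let P(r,n;A,D,Γ) be a regular pentad of Cartan type, i.e. C(A,D,Γ) = Γ·ᵗD·A·D is invertible (so necessarily n ≤ r and rank D = n). Then: the elements h₁,…,h_n ∈ ℂ^r are linearly independent; the restriction of B_A to span{h₁,…,h_n} is nondegenerate; and ℂ^r decomposes as the direct sum ℂ^r = Ann ℂ_D^Γ ⊕ span{h₁,…,h_n}, where Ann ℂ_D^Γ has dimension r − n and is the B_A-orthogonal complement of span{h₁,…,h_n}. -/
/-!
The Gram matrix of `h₁, …, h_n` for `B_A` is `Γ ᵗD A D Γ = C(A, D, Γ) Γ`, which is invertible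
(regularity also forces `Γ` to be invertible, as `det C = det Γ · det (ᵗD A D)`). An invertible
Gram matrix makes the `h_i` independent and `B_A` nondegenerate on their span. Moreover
`B_A(a, h_j) = γ_j (ᵗD a)_j`, so the `B_A`-orthogonal of the span is `ker ᵗD = Ann ℂ_D^Γ`,
which meets the span trivially and has the complementary dimension `r - rank D = r - n`.
-/

noncomputable section

open Matrix

namespace Matrix

theorem dotProduct_mulVec_mulVec_mulVec {R m n : Type*} [CommSemiring R] [Fintype m]
    [Fintype n] (M : Matrix m n R) (P : Matrix m m R) (c d : n → R) :
    (M *ᵥ c) ⬝ᵥ (P *ᵥ (M *ᵥ d)) = c ⬝ᵥ ((Mᵀ * P * M) *ᵥ d) := by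
  simp only [← mulVec_mulVec]
  rw [mulVec_transpose, dotProduct_comm (M *ᵥ c), dotProduct_mulVec, dotProduct_comm]

variable {K m n : Type*} [Field K] [Fintype m] [Fintype n] [DecidableEq n]

theorem mulVec_injective_of_isUnit_det_mul {M : Matrix m n K} {N : Matrix n m K}
    (h : IsUnit (N * M).det) : Function.Injective M.mulVec := by
  refine Function.Injective.of_comp (f := N.mulVec) ?_
  have := mulVec_injective_iff_isUnit.mpr ((isUnit_iff_isUnit_det _).mpr h)
  simpa only [Function.comp_def, mulVec_mulVec] using this

theorem forall_dotProduct_mulVec_eq_zero_iff {N : Matrix n n K} (hN : IsUnit N.det)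
    {w : n → K} : (∀ d, w ⬝ᵥ (N *ᵥ d) = 0) ↔ w = 0 := by
  simp only [dotProduct_mulVec, dotProduct_eq_zero_iff]
  exact ⟨fun h => vecMul_injective_iff_isUnit.mpr ((isUnit_iff_isUnit_det _).mpr hN)
    (h.trans (zero_vecMul N).symm), fun h => h ▸ zero_vecMul N⟩

theorem forall_dotProduct_mulVec_eq_zero_iff' {N : Matrix n n K} (hN : IsUnit N.det)
    {d : n → K} : (∀ c, c ⬝ᵥ (N *ᵥ d) = 0) ↔ d = 0 := by
  simp only [dotProduct_comm _ (N *ᵥ d), dotProduct_eq_zero_iff]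
  exact ⟨fun h => mulVec_injective_iff_isUnit.mpr ((isUnit_iff_isUnit_det _).mpr hN)
    (h.trans (mulVec_zero N).symm), fun h => h ▸ mulVec_zero N⟩

theorem inv_transpose_mul_transpose_mul_cancel {A : Matrix n n K} (hA : IsUnit A.det)
    {l : Type*} (B : Matrix n l K) : (A⁻¹)ᵀ * (Aᵀ * B) = B := by
  rw [transpose_nonsing_inv]
  exact nonsing_inv_mul_cancel_left _ B (isUnit_det_transpose A hA)

theorem eq_zero_of_forall_mem_range_dotProduct_mulVec_left {M : Matrix m n K}
    {P : Matrix m m K} (hG : IsUnit (Mᵀ * P * M).det) {x : m → K}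
    (hx : x ∈ LinearMap.range M.mulVecLin)
    (h : ∀ y ∈ LinearMap.range M.mulVecLin, x ⬝ᵥ (P *ᵥ y) = 0) : x = 0 := by
  obtain ⟨c, rfl⟩ := hx
  have hc : c = 0 := (forall_dotProduct_mulVec_eq_zero_iff hG).mp fun d => by
    rw [← dotProduct_mulVec_mulVec_mulVec]
    exact h (M *ᵥ d) ⟨d, rfl⟩
  simp [hc]

theorem eq_zero_of_forall_mem_range_dotProduct_mulVec_right {M : Matrix m n K}
    {P : Matrix m m K} (hG : IsUnit (Mᵀ * P * M).det) {y : m → K}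
    (hy : y ∈ LinearMap.range M.mulVecLin)
    (h : ∀ x ∈ LinearMap.range M.mulVecLin, x ⬝ᵥ (P *ᵥ y) = 0) : y = 0 := by
  obtain ⟨d, rfl⟩ := hy
  have hd : d = 0 := (forall_dotProduct_mulVec_eq_zero_iff' hG).mp fun c => by
    rw [← dotProduct_mulVec_mulVec_mulVec]
    exact h (M *ᵥ c) ⟨c, rfl⟩
  simp [hd]

end Matrix

section CartanPentad

variable {r n : ℕ} {A : Matrix (Fin r) (Fin r) ℂ} {D : Matrix (Fin r) (Fin n) ℂ} {γ : Fin n → ℂ}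

theorem isUnit_det_diagonal_of_isUnit_det_cartanC (hreg : IsUnit (cartanC A D γ).det) :
    IsUnit (diagonal γ).det := by
  rw [cartanC, Matrix.mul_assoc, Matrix.mul_assoc, det_mul] at hreg
  exact isUnit_of_mul_isUnit_left hreg

theorem span_range_hvec :
    Submodule.span ℂ (Set.range (hvec A D γ)) = LinearMap.range (Aᵀ * D * diagonal γ).mulVecLin :=
  (range_mulVecLin _).symm

theorem gram_hvec_eq_cartanC_mul_diagonal (hA : IsUnit A.det) :
    (Aᵀ * D * diagonal γ)ᵀ * (A⁻¹)ᵀ * (Aᵀ * D * diagonal γ) = cartanC A D γ * diagonal γ := by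
  rw [Matrix.mul_assoc, Matrix.mul_assoc Aᵀ, inv_transpose_mul_transpose_mul_cancel hA, cartanC]
  simp only [transpose_mul, transpose_transpose, diagonal_transpose, Matrix.mul_assoc]

theorem annD_eq_ker_transpose : annD D = LinearMap.ker Dᵀ.mulVecLin := by
  ext a
  change (∀ v, boxD D a v = 0) ↔ Dᵀ *ᵥ a = 0
  have hcoord : ∀ j, (Dᵀ *ᵥ a) j = ∑ i, a i * D i j := fun j => by
    rw [mulVec_transpose]
    rfl
  constructor
  · intro h
    funext j
    simpa [boxD, hcoord] using congrFun (h 1) j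
  · intro h v
    funext j
    simp [boxD, ← hcoord, h]

theorem bilinA_mulVec_hvec (hA : IsUnit A.det) (a : Fin r → ℂ) (d : Fin n → ℂ) :
    bilinA A a ((Aᵀ * D * diagonal γ) *ᵥ d) = (Dᵀ *ᵥ a) ⬝ᵥ (diagonal γ *ᵥ d) := by
  rw [bilinA, mulVec_mulVec, Matrix.mul_assoc Aᵀ, inv_transpose_mul_transpose_mul_cancel hA, ← mulVec_mulVec, dotProduct_mulVec,
    mulVec_transpose]

theorem mem_annD_iff_forall_bilinA_eq_zero (hA : IsUnit A.det) (hΓ : IsUnit (diagonal γ).det)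
    (a : Fin r → ℂ) :
    a ∈ annD D ↔ ∀ y ∈ Submodule.span ℂ (Set.range (hvec A D γ)), bilinA A a y = 0 := by
  rw [span_range_hvec, annD_eq_ker_transpose, LinearMap.mem_ker, mulVecLin_apply,
    ← forall_dotProduct_mulVec_eq_zero_iff hΓ]
  simp only [LinearMap.mem_range, forall_exists_index, forall_apply_eq_imp_iff, mulVecLin_apply,
    bilinA_mulVec_hvec hA]

theorem finrank_annD : Module.finrank ℂ (annD D) = r - D.rank := by
  have h := LinearMap.finrank_range_add_finrank_ker Dᵀ.mulVecLin
  rw [← rank, rank_transpose, Module.finrank_fin_fun] at h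
  rw [annD_eq_ker_transpose]
  omega

theorem rank_eq_of_isUnit_det_cartanC (hreg : IsUnit (cartanC A D γ).det) : D.rank = n := by
  rw [rank, LinearMap.finrank_range_of_inj
    (mulVec_injective_of_isUnit_det_mul (N := diagonal γ * Dᵀ * A) hreg), Module.finrank_fin_fun]

end CartanPentad

theorem stmt_13_general (r n : ℕ)
    (A : Matrix (Fin r) (Fin r) ℂ) (hA : IsUnit A.det)
    (D : Matrix (Fin r) (Fin n) ℂ)
    (γ : Fin n → ℂ)
    (hreg : IsUnit (cartanC A D γ).det) :
    n ≤ r ∧ D.rank = n ∧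
    LinearIndependent ℂ (hvec A D γ) ∧
    (∀ x ∈ Submodule.span ℂ (Set.range (hvec A D γ)),
      (∀ y ∈ Submodule.span ℂ (Set.range (hvec A D γ)), bilinA A x y = 0) → x = 0) ∧
    (∀ y ∈ Submodule.span ℂ (Set.range (hvec A D γ)),
      (∀ x ∈ Submodule.span ℂ (Set.range (hvec A D γ)), bilinA A x y = 0) → y = 0) ∧
    annD D ⊓ Submodule.span ℂ (Set.range (hvec A D γ)) = ⊥ ∧
    annD D ⊔ Submodule.span ℂ (Set.range (hvec A D γ)) = ⊤ ∧
    Module.finrank ℂ ↥(annD D) = r - n ∧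
    (annD D : Set (Fin r → ℂ))
      = {a : Fin r → ℂ | ∀ y ∈ Submodule.span ℂ (Set.range (hvec A D γ)), bilinA A a y = 0} := by
  have hΓ := isUnit_det_diagonal_of_isUnit_det_cartanC hreg
  have hG : IsUnit ((Aᵀ * D * diagonal γ)ᵀ * (A⁻¹)ᵀ * (Aᵀ * D * diagonal γ)).det := by
    rw [gram_hvec_eq_cartanC_mul_diagonal hA, det_mul]
    exact hreg.mul hΓ
  have hrank := rank_eq_of_isUnit_det_cartanC hreg
  have hli : LinearIndependent ℂ (hvec A D γ) :=
    mulVec_injective_iff.mp (mulVec_injective_of_isUnit_det_mul hG)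
  have horth := mem_annD_iff_forall_bilinA_eq_zero (D := D) hA hΓ
  rw [span_range_hvec] at horth ⊢
  have hinf : annD D ⊓ LinearMap.range (Aᵀ * D * diagonal γ).mulVecLin = ⊥ := by
    rw [eq_bot_iff]
    rintro x ⟨hann, hspan⟩
    exact eq_zero_of_forall_mem_range_dotProduct_mulVec_left hG hspan ((horth x).mp hann)
  have hfinrank : Module.finrank ℂ (annD D) = r - n := by rw [finrank_annD, hrank]
  have hsup : annD D ⊔ LinearMap.range (Aᵀ * D * diagonal γ).mulVecLin = ⊤ := by
    refine Submodule.eq_top_of_disjoint _ _ ?_ (disjoint_iff.mpr hinf)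
    rw [hfinrank, ← span_range_hvec, finrank_span_eq_card hli, Fintype.card_fin,
      Module.finrank_fin_fun]
    omega
  exact ⟨hrank ▸ D.rank_le_height, hrank, hli,
    fun _ => eq_zero_of_forall_mem_range_dotProduct_mulVec_left hG,
    fun _ => eq_zero_of_forall_mem_range_dotProduct_mulVec_right hG,
    hinf, hsup, hfinrank, Set.ext horth⟩

/-- For a regular pentad of Cartan type (`C(A,D,Γ)` invertible):
`n ≤ r`, `rank D = n`, the `h_i` are linearly independent, `B_A` restricted to
`span{h₁,…,h_n}` is nondegenerate, and `ℂ^r = Ann ℂ_D^Γ ⊕ span{h₁,…,h_n}` with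
`Ann ℂ_D^Γ` of dimension `r − n` equal to the `B_A`-orthogonal of the span. -/
theorem stmt_13 (r n : ℕ) (hr : 0 < r) (hn : 0 < n)
    (A : Matrix (Fin r) (Fin r) ℂ) (hA : IsUnit A.det)
    (D : Matrix (Fin r) (Fin n) ℂ)
    (γ : Fin n → ℂ) (hγ : ∀ j, γ j ≠ 0)
    (hreg : IsUnit (cartanC A D γ).det) :
    n ≤ r ∧ D.rank = n ∧
    LinearIndependent ℂ (hvec A D γ) ∧
    (∀ x ∈ Submodule.span ℂ (Set.range (hvec A D γ)),
      (∀ y ∈ Submodule.span ℂ (Set.range (hvec A D γ)), bilinA A x y = 0) → x = 0) ∧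
    (∀ y ∈ Submodule.span ℂ (Set.range (hvec A D γ)),
      (∀ x ∈ Submodule.span ℂ (Set.range (hvec A D γ)), bilinA A x y = 0) → y = 0) ∧
    annD D ⊓ Submodule.span ℂ (Set.range (hvec A D γ)) = ⊥ ∧
    annD D ⊔ Submodule.span ℂ (Set.range (hvec A D γ)) = ⊤ ∧
    Module.finrank ℂ ↥(annD D) = r - n ∧
    (annD D : Set (Fin r → ℂ))
      = {a : Fin r → ℂ | ∀ y ∈ Submodule.span ℂ (Set.range (hvec A D γ)), bilinA A a y = 0} :=
  stmt_13_general r n A hA D γ hreg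

end
end

section
/- Let 𝔏 = ⊕_{m∈ℤ} 𝔏_m be a graded Lie algebra over ℂ with a bilinear form B on its local part satisfying conditions (i)–(v), whose local part realizes the pentad of Cartan type P(r,n;A,D,Γ), and suppose the Cartan matrix C = C(A,D,Γ) = (C_{ij}) is invertible. Then 𝔏 is the direct sum of Lie algebra ideals 𝔏 = Z ⊕ 𝔏', where: Z is the (r−n)-dimensional subspace {x ∈ 𝔏₀ : [x, 𝔏₁] = 0 and [x, 𝔏_{−1}] = 0}, which is central in 𝔏; and 𝔏' is the Lie subalgebra generated by 𝔏₁ ∪ 𝔏_{−1}, which is a graded ideal with degree-0 component span{h₁,…,h_n}, is generated by its local part, is transitive, and satisfies [h_i, e_j] = C_{ij} e_j, [h_i, f_j] = −C_{ij} f_j, [e_i, f_j] = δ_{ij} h_i for all 1 ≤ i, j ≤ n (so 𝔏' is a transitive graded Lie algebra whose local part is the contragredient local Lie algebra of the Cartan matrix C(A,D,Γ)). -/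
noncomputable section

open Matrix

/-- The local part of the graded Lie algebra `L` realizes the pentad of Cartan type
`P(r,n;A,D,Γ)` (with `Γ = diagonal γ`) via the bases `ε`, `e`, `f`. -/
def RealizesPentad (L : Type) [LieRing L] [LieAlgebra ℂ L] (G : ℤ → Submodule ℂ L)
    (B : LinearMap.BilinForm ℂ L) {r n : ℕ}
    (A : Matrix (Fin r) (Fin r) ℂ) (D : Matrix (Fin r) (Fin n) ℂ) (γ : Fin n → ℂ)
    (ε : Fin r → L) (e : Fin n → L) (f : Fin n → L) : Prop :=
  (LinearIndependent ℂ ε ∧ Submodule.span ℂ (Set.range ε) = G 0) ∧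
  (LinearIndependent ℂ e ∧ Submodule.span ℂ (Set.range e) = G 1) ∧
  (LinearIndependent ℂ f ∧ Submodule.span ℂ (Set.range f) = G (-1)) ∧
  (∀ x ∈ G 0, ∀ y ∈ G 0, ⁅x, y⁆ = 0) ∧
  (∀ (i : Fin r) (j : Fin n), ⁅ε i, e j⁆ = D i j • e j) ∧
  (∀ (i : Fin r) (j : Fin n), ⁅ε i, f j⁆ = (-D i j) • f j) ∧
  (∀ i j : Fin n, ⁅e i, f j⁆
    = if i = j then ∑ k, (Aᵀ * D * Matrix.diagonal γ) k i • ε k else 0) ∧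
  (∀ i j : Fin r, B (ε i) (ε j) = (A⁻¹)ᵀ i j) ∧
  (∀ i j : Fin n, B (e i) (f j) = if i = j then γ i else 0) ∧
  (∀ i ∈ ({-1, 0, 1} : Set ℤ), ∀ j ∈ ({-1, 0, 1} : Set ℤ), i + j ≠ 0 →
    ∀ x ∈ G i, ∀ y ∈ G j, B x y = 0)

/-- `Z = {x ∈ G0 : [x, G1] = 0 and [x, Gm1] = 0}` as a submodule. -/
def zCenter (L : Type) [LieRing L] [LieAlgebra ℂ L]
    (G0 G1 Gm1 : Submodule ℂ L) : Submodule ℂ L where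
  carrier := {x | x ∈ G0 ∧ (∀ y ∈ G1, ⁅x, y⁆ = 0) ∧ (∀ y ∈ Gm1, ⁅x, y⁆ = 0)}
  add_mem' := by
    rintro a b ⟨ha0, ha1, ham⟩ ⟨hb0, hb1, hbm⟩
    exact ⟨G0.add_mem ha0 hb0,
      fun y hy => by rw [add_lie, ha1 y hy, hb1 y hy, add_zero],
      fun y hy => by rw [add_lie, ham y hy, hbm y hy, add_zero]⟩
  zero_mem' := ⟨G0.zero_mem, fun y _ => zero_lie y, fun y _ => zero_lie y⟩
  smul_mem' := by
    rintro c a ⟨ha0, ha1, ham⟩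
    exact ⟨G0.smul_mem c ha0,
      fun y hy => by rw [smul_lie, ha1 y hy, smul_zero],
      fun y hy => by rw [smul_lie, ham y hy, smul_zero]⟩

/-! In the coordinates given by the basis `ε` of `𝔏₀`, the subspace `Z` corresponds to the
kernel of `ᵗD` and `span {hᵢ}` to the column space of `ᵗA D Γ`. Since `ᵗD (ᵗA D Γ) = ᵗC` is
invertible, these are complementary: `dim Z = r - n` and `𝔏₀ = Z ⊕ span {hᵢ}`. `Z` is central
because it commutes with the generators `𝔏₋₁ ⊕ 𝔏₀ ⊕ 𝔏₁`. Condition (i) and the Jacobi identity give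
`[𝔏ᵢ, 𝔏₋ᵢ] ⊆ [𝔏₁, 𝔏₋₁] ⊆ span {hᵢ}`, so `span {hᵢ} ⊕ ⨁_{i ≠ 0} 𝔏ᵢ` is a subalgebra, hence equals
`𝔏'`, and `𝔏' ∩ 𝔏₀ = span {hᵢ}` by independence of the grading. Transitivity of `𝔏'` holds in
degree `0` because `Z ∩ span {hᵢ} = 0`, in degrees `±1` because `hᵢ ≠ 0`, and in the other degrees
by (iv) and (v). -/

section LinearAlgebra

theorem LinearMap.isCompl_ker_range_of_bijective_comp {R V W : Type*} [Ring R]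
    [AddCommGroup V] [Module R V] [AddCommGroup W] [Module R W]
    {P : V →ₗ[R] W} {Q : W →ₗ[R] V} (h : Function.Bijective (P ∘ₗ Q)) :
    IsCompl (LinearMap.ker P) (LinearMap.range Q) := by
  let E := LinearEquiv.ofBijective (P ∘ₗ Q) h
  constructor
  · rw [Submodule.disjoint_def]
    rintro _ hPx ⟨w, rfl⟩
    have hw : w = 0 := h.1 (by simpa using hPx)
    rw [hw, map_zero]
  · rw [codisjoint_iff, eq_top_iff]
    intro x _
    refine Submodule.mem_sup.2 ⟨x - Q (E.symm (P x)), ?_, _, ⟨_, rfl⟩, sub_add_cancel _ _⟩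
    rw [LinearMap.mem_ker, map_sub, sub_eq_zero]
    exact (E.apply_symm_apply (P x)).symm

variable {K m n : Type*} [Field K] [Fintype m] [Fintype n] [DecidableEq n]

theorem Matrix.mulVec_injective_of_isUnit_det_mul_s14 {P : Matrix n m K} {Q : Matrix m n K}
    (h : IsUnit (P * Q).det) : Function.Injective Q.mulVec := fun v w hvw => by
  refine (mulVec_injective_iff_isUnit.2 ((isUnit_iff_isUnit_det _).2 h)) ?_
  simp only [← mulVec_mulVec, hvw]

theorem Matrix.isCompl_ker_range_of_isUnit_det_mul {P : Matrix n m K} {Q : Matrix m n K}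
    (h : IsUnit (P * Q).det) :
    IsCompl (LinearMap.ker P.mulVecLin) (LinearMap.range Q.mulVecLin) := by
  have hunit : IsUnit (P * Q) := (isUnit_iff_isUnit_det _).2 h
  refine LinearMap.isCompl_ker_range_of_bijective_comp ⟨?_, ?_⟩ <;>
    rw [← mulVecLin_mul, coe_mulVecLin]
  exacts [mulVec_injective_iff_isUnit.2 hunit, mulVec_surjective_iff_isUnit.2 hunit]

theorem Matrix.finrank_ker_mulVecLin_of_isUnit_det_mul {P : Matrix n m K} {Q : Matrix m n K}
    (h : IsUnit (P * Q).det) :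
    Module.finrank K (LinearMap.ker P.mulVecLin) = Fintype.card m - Fintype.card n := by
  have hsum := Submodule.finrank_add_eq_of_isCompl (isCompl_ker_range_of_isUnit_det_mul h)
  rw [LinearMap.finrank_range_of_inj (mulVec_injective_of_isUnit_det_mul_s14 h)] at hsum
  simp only [Module.finrank_fintype_fun_eq_card] at hsum
  omega

end LinearAlgebra

theorem IsModularLattice.iSup_inf_eq_of_iSupIndep {α ι : Type*} [CompleteLattice α]
    [IsModularLattice α] {G S : ι → α} (hG : iSupIndep G) (hSG : ∀ i, S i ≤ G i) (j : ι) :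
    (⨆ i, S i) ⊓ G j = S j := by
  have hrest : (⨆ (i) (_ : i ≠ j), S i) ⊓ G j = ⊥ :=
    ((hG j).symm.mono_left (iSup₂_mono fun i _ => hSG i)).eq_bot
  rw [iSup_split_single S j, sup_inf_assoc_of_le _ (hSG j), hrest, sup_bot_eq]

section LieAlgebra

variable {R L : Type*} [CommRing R] [LieRing L] [LieAlgebra R L]

theorem lie_mem_of_mem_span {s t : Set L} {H : Submodule R L}
    (h : ∀ x ∈ s, ∀ y ∈ t, ⁅x, y⁆ ∈ H) {x y : L} (hx : x ∈ Submodule.span R s)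
    (hy : y ∈ Submodule.span R t) : ⁅x, y⁆ ∈ H := by
  have hle : Submodule.map₂ (LieModule.toEnd R L L : L →ₗ[R] Module.End R L)
      (Submodule.span R s) (Submodule.span R t) ≤ H := by
    rw [Submodule.map₂_span_span, Submodule.span_le]
    rintro _ ⟨a, ha, b, hb, rfl⟩
    exact h a ha b hb
  exact Submodule.map₂_le.1 hle x hx y hy

theorem forall_mem_span_range_lie_eq_zero_iff {ι : Type*} {x : L} {v : ι → L} :
    (∀ y ∈ Submodule.span R (Set.range v), ⁅x, y⁆ = 0) ↔ ∀ j, ⁅x, v j⁆ = 0 := by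
  refine ⟨fun h j => h _ (Submodule.subset_span ⟨j, rfl⟩), fun h y hy => ?_⟩
  refine (Submodule.mem_bot R).1 (lie_mem_of_mem_span ?_ (Submodule.mem_span_singleton_self x) hy)
  rintro _ rfl _ ⟨j, rfl⟩
  exact (h j).symm ▸ Submodule.zero_mem _

theorem lie_eq_zero_of_mem_lieSpan {s : Set L} {z : L} (hz : ∀ y ∈ s, ⁅z, y⁆ = 0) {x : L}
    (hx : x ∈ LieSubalgebra.lieSpan R L s) : ⁅z, x⁆ = 0 := by
  induction hx using LieSubalgebra.lieSpan_induction with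
  | mem y hy => exact hz y hy
  | zero => exact lie_zero z
  | add x y _ _ hx hy => rw [lie_add, hx, hy, add_zero]
  | smul a x _ hx => rw [lie_smul, hx, smul_zero]
  | lie x y _ _ hx hy => rw [leibniz_lie, hx, hy, zero_lie, lie_zero, add_zero]

theorem LieSubalgebra.lie_mem_of_sup_eq_top {Z : Submodule R L} {L' : LieSubalgebra R L}
    (hZ : ∀ z ∈ Z, ∀ x : L, ⁅z, x⁆ = 0) (h : Z ⊔ L'.toSubmodule = ⊤) (x : L) {y : L} (hy : y ∈ L') :
    ⁅x, y⁆ ∈ L' := by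
  obtain ⟨z, hz, l, hl, rfl⟩ := Submodule.mem_sup.1 (h ▸ Submodule.mem_top : x ∈ Z ⊔ L'.toSubmodule)
  rw [add_lie, hZ z hz, zero_add]
  exact L'.lie_mem hl hy

def IsTransitiveGrading (G : ℤ → Submodule R L) : Prop :=
  (∀ i : ℤ, 0 ≤ i → ∀ x ∈ G i, (∀ y ∈ G (-1), ⁅x, y⁆ = 0) → x = 0) ∧
  (∀ i : ℤ, i ≤ 0 → ∀ x ∈ G i, (∀ y ∈ G 1, ⁅x, y⁆ = 0) → x = 0)

end LieAlgebra

section Weights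

variable {K L m n : Type*} [Field K] [LieRing L] [LieAlgebra K L] [Fintype m]
  {D : Matrix m n K} {ε : m → L} {e : n → L}

theorem eq_zero_of_forall_lie_eq_zero_of_lie_eq_ite {ι : Type*} [Fintype ι] [DecidableEq ι]
    {u v w : ι → L} (huv : ∀ a j, ⁅u a, v j⁆ = if a = j then w a else 0) (hw : ∀ j, w j ≠ 0)
    {x : L} (hx : x ∈ Submodule.span K (Set.range u)) (hxv : ∀ j, ⁅x, v j⁆ = 0) : x = 0 := by
  rw [← Fintype.range_linearCombination] at hx
  obtain ⟨c, rfl⟩ := hx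
  have hc : ∀ j, c j = 0 := fun j => by
    have := hxv j
    simp only [Fintype.linearCombination_apply, sum_lie, smul_lie, huv, smul_ite, smul_zero,
      Finset.sum_ite_eq', Finset.mem_univ, if_true] at this
    exact (smul_eq_zero.1 this).resolve_right (hw j)
  simp [Fintype.linearCombination_apply, hc]

theorem lie_linearCombination_eq_smul (hεe : ∀ i j, ⁅ε i, e j⁆ = D i j • e j) (c : m → K)
    (j : n) : ⁅Fintype.linearCombination K ε c, e j⁆ = (Dᵀ *ᵥ c) j • e j := by
  simp only [Fintype.linearCombination_apply, sum_lie, smul_lie, hεe, smul_smul,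
    ← Finset.sum_smul, mulVec, dotProduct, transpose_apply, mul_comm]

theorem mem_map_ker_iff (hεe : ∀ i j, ⁅ε i, e j⁆ = D i j • e j) (he : ∀ j, e j ≠ 0) {x : L} :
    x ∈ (LinearMap.ker Dᵀ.mulVecLin).map (Fintype.linearCombination K ε) ↔
      x ∈ Submodule.span K (Set.range ε) ∧ ∀ j, ⁅x, e j⁆ = 0 := by
  have hcoord : ∀ c, Dᵀ *ᵥ c = 0 ↔ ∀ j, ⁅Fintype.linearCombination K ε c, e j⁆ = 0 := fun c => by
    simp only [lie_linearCombination_eq_smul hεe, smul_eq_zero, he, or_false, funext_iff,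
      Pi.zero_apply]
  rw [← Fintype.range_linearCombination]
  constructor
  · rintro ⟨c, hc, rfl⟩
    exact ⟨⟨c, rfl⟩, (hcoord c).1 hc⟩
  · rintro ⟨⟨c, rfl⟩, hx⟩
    exact ⟨c, (hcoord c).2 hx, rfl⟩

end Weights

section Grading

variable {R L : Type*} [CommRing R] [LieRing L] [LieAlgebra R L] {G : ℤ → Submodule R L}

theorem le_toSubmodule_of_one_le
    (hstep : ∀ i : ℤ, 1 ≤ i → G (i + 1) = Submodule.span R {z | ∃ x ∈ G 1, ∃ y ∈ G i, z = ⁅x, y⁆})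
    {S : LieSubalgebra R L} (h1 : G 1 ≤ S.toSubmodule) {i : ℤ} (hi : 1 ≤ i) :
    G i ≤ S.toSubmodule := by
  induction i, hi using Int.leInduction with
  | base => exact h1
  | succ i hi ih =>
    rw [hstep i hi, Submodule.span_le]
    rintro _ ⟨x, hx, y, hy, rfl⟩
    exact S.lie_mem (h1 hx) (ih hy)

theorem lie_mem_of_mem_of_mem_neg (hgr : ∀ i j : ℤ, ∀ x ∈ G i, ∀ y ∈ G j, ⁅x, y⁆ ∈ G (i + j))
    (hstep : ∀ i : ℤ, 1 ≤ i → G (i + 1) = Submodule.span R {z | ∃ x ∈ G 1, ∃ y ∈ G i, z = ⁅x, y⁆})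
    {H : Submodule R L} (h1 : ∀ x ∈ G 1, ∀ y ∈ G (-1), ⁅x, y⁆ ∈ H) {i : ℤ} (hi : 1 ≤ i) :
    ∀ x ∈ G i, ∀ y ∈ G (-i), ⁅x, y⁆ ∈ H := by
  induction i, hi using Int.leInduction with
  | base => exact h1
  | succ i hi ih =>
    intro x hx y hy
    rw [hstep i hi] at hx
    refine lie_mem_of_mem_span ?_ hx (Submodule.mem_span_singleton_self y)
    rintro _ ⟨u, hu, v, hv, rfl⟩ y' hy'
    rw [Set.mem_singleton_iff.1 hy']
    have hvy : ⁅v, y⁆ ∈ G (-1) := by simpa using hgr i (-(i + 1)) v hv y hy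
    have huy : ⁅u, y⁆ ∈ G (-i) := by simpa [add_comm] using hgr 1 (-(i + 1)) u hu y hy
    rw [lie_lie]
    exact H.sub_mem (h1 u hu _ hvy) (ih v hv _ huy)

theorem lie_mem_iSup_update (hgr : ∀ i j : ℤ, ∀ x ∈ G i, ∀ y ∈ G j, ⁅x, y⁆ ∈ G (i + j))
    (hstep : ∀ i : ℤ, 1 ≤ i → G (i + 1) = Submodule.span R {z | ∃ x ∈ G 1, ∃ y ∈ G i, z = ⁅x, y⁆})
    {H : Submodule R L} (hH : H ≤ G 0) (hHab : ∀ x ∈ H, ∀ y ∈ H, ⁅x, y⁆ = 0)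
    (h1 : ∀ x ∈ G 1, ∀ y ∈ G (-1), ⁅x, y⁆ ∈ H) {x y : L}
    (hx : x ∈ ⨆ i, Function.update G 0 H i) (hy : y ∈ ⨆ i, Function.update G 0 H i) :
    ⁅x, y⁆ ∈ ⨆ i, Function.update G 0 H i := by
  set S := Function.update G 0 H
  have hSG : ∀ i, S i ≤ G i := fun i => by
    rcases eq_or_ne i 0 with rfl | hi
    · simpa [S] using hH
    · simp [S, hi]
  rw [Submodule.iSup_eq_span] at hx hy ⊢
  refine lie_mem_of_mem_span ?_ hx hy
  simp only [Set.mem_iUnion, SetLike.mem_coe]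
  rintro x ⟨i, hx⟩ y ⟨j, hy⟩
  rw [← Submodule.iSup_eq_span]
  by_cases hij : i + j = 0
  · refine Submodule.mem_iSup_of_mem 0 ?_
    simp only [S, Function.update_self]
    rcases lt_trichotomy i 0 with hi | rfl | hi
    · obtain rfl : j = -i := by omega
      rw [← lie_skew]
      exact H.neg_mem (lie_mem_of_mem_of_mem_neg hgr hstep h1 (by omega) y (hSG _ hy) x
        (by simpa using hSG i hx))
    · obtain rfl : j = 0 := by omega
      simp only [S, Function.update_self] at hx hy
      exact hHab x hx y hy ▸ H.zero_mem
    · obtain rfl : j = -i := by omega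
      exact lie_mem_of_mem_of_mem_neg hgr hstep h1 hi x (hSG i hx) y (hSG _ hy)
  · refine Submodule.mem_iSup_of_mem (i + j) ?_
    simpa [S, hij] using hgr i j x (hSG i hx) y (hSG j hy)

theorem coe_lieSpan_eq_iSup_update (hgr : ∀ i j : ℤ, ∀ x ∈ G i, ∀ y ∈ G j, ⁅x, y⁆ ∈ G (i + j))
    (hstep : ∀ i : ℤ, 1 ≤ i →
      G (i + 1) = Submodule.span R {z | ∃ x ∈ G 1, ∃ y ∈ G i, z = ⁅x, y⁆} ∧
      G (-(i + 1)) = Submodule.span R {z | ∃ x ∈ G (-1), ∃ y ∈ G (-i), z = ⁅x, y⁆})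
    {H : Submodule R L} (hH : H ≤ G 0) (hHab : ∀ x ∈ H, ∀ y ∈ H, ⁅x, y⁆ = 0)
    (h1 : ∀ x ∈ G 1, ∀ y ∈ G (-1), ⁅x, y⁆ ∈ H)
    (hHle : H ≤ (LieSubalgebra.lieSpan R L ((G 1 : Set L) ∪ G (-1))).toSubmodule) :
    (LieSubalgebra.lieSpan R L ((G 1 : Set L) ∪ G (-1))).toSubmodule =
      ⨆ i, Function.update G 0 H i := by
  set L' := LieSubalgebra.lieSpan R L ((G 1 : Set L) ∪ G (-1))
  let S : LieSubalgebra R L :=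
    { (⨆ i, Function.update G 0 H i) with
      lie_mem' := lie_mem_iSup_update hgr (fun i hi => (hstep i hi).1) hH hHab h1 }
  apply le_antisymm
  · change L' ≤ S
    rw [LieSubalgebra.lieSpan_le]
    rintro x (hx | hx)
    · exact Submodule.mem_iSup_of_mem 1 (by simpa using hx)
    · exact Submodule.mem_iSup_of_mem (-1) (by simpa using hx)
  · refine iSup_le fun i => ?_
    rcases lt_trichotomy i 0 with hi | rfl | hi
    · simpa [hi.ne] using le_toSubmodule_of_one_le (G := fun i => G (-i))
        (fun i hi => (hstep i hi).2) (S := L')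
        (fun x hx => LieSubalgebra.subset_lieSpan (Or.inr hx)) (i := -i) (by omega)
    · simpa using hHle
    · simpa [hi.ne'] using le_toSubmodule_of_one_le (fun i hi => (hstep i hi).1) (S := L')
        (fun x hx => LieSubalgebra.subset_lieSpan (Or.inl hx)) hi

end Grading

section Pentad

variable {L : Type} [LieRing L] [LieAlgebra ℂ L] {r n : ℕ} {A : Matrix (Fin r) (Fin r) ℂ}
  {D : Matrix (Fin r) (Fin n) ℂ} {γ : Fin n → ℂ} {ε : Fin r → L} {e f : Fin n → L}

/-- The element `hᵢ` of the paper. -/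
def cartanCoroot (A : Matrix (Fin r) (Fin r) ℂ) (D : Matrix (Fin r) (Fin n) ℂ) (γ : Fin n → ℂ)
    (ε : Fin r → L) (i : Fin n) : L :=
  Fintype.linearCombination ℂ ε ((Aᵀ * D * diagonal γ).col i)

theorem cartanC_transpose : (cartanC A D γ)ᵀ = Dᵀ * (Aᵀ * D * diagonal γ) := by
  simp [cartanC, transpose_mul, Matrix.mul_assoc]

theorem isUnit_det_transpose_mul (hC : IsUnit (cartanC A D γ).det) :
    IsUnit (Dᵀ * (Aᵀ * D * diagonal γ)).det := by
  rwa [← cartanC_transpose, det_transpose]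

theorem cartanCoroot_ne_zero (hε : LinearIndependent ℂ ε) (hC : IsUnit (cartanC A D γ).det)
    (i : Fin n) : cartanCoroot A D γ ε i ≠ 0 := by
  rw [cartanCoroot, ← mulVec_single_one, ← map_zero (Fintype.linearCombination ℂ ε),
    hε.fintypeLinearCombination_injective.ne_iff, ← mulVec_zero (Aᵀ * D * diagonal γ),
    (mulVec_injective_of_isUnit_det_mul_s14 (isUnit_det_transpose_mul hC)).ne_iff]
  exact Pi.single_ne_zero_iff.2 one_ne_zero

theorem lie_cartanCoroot_eq_smul {D' : Matrix (Fin r) (Fin n) ℂ}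
    (hεe : ∀ i j, ⁅ε i, e j⁆ = D' i j • e j) (i j : Fin n) :
    ⁅cartanCoroot A D γ ε i, e j⁆ = (D'ᵀ * (Aᵀ * D * diagonal γ)) j i • e j := by
  rw [cartanCoroot, lie_linearCombination_eq_smul hεe, ← mulVec_single_one, mulVec_mulVec,
    mulVec_single_one, col_apply]

theorem span_range_cartanCoroot :
    Submodule.span ℂ (Set.range (cartanCoroot A D γ ε)) =
      (LinearMap.range (Aᵀ * D * diagonal γ).mulVecLin).map (Fintype.linearCombination ℂ ε) := by
  rw [range_mulVecLin, Submodule.map_span, ← Set.range_comp]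
  rfl

theorem mem_map_ker_iff_of_lie_eq_neg_smul {x : L} (hεf : ∀ i j, ⁅ε i, f j⁆ = (-D i j) • f j)
    (hf : ∀ j, f j ≠ 0) :
    x ∈ (LinearMap.ker Dᵀ.mulVecLin).map (Fintype.linearCombination ℂ ε) ↔
      x ∈ Submodule.span ℂ (Set.range ε) ∧ ∀ j, ⁅x, f j⁆ = 0 := by
  have hneg : (-D)ᵀ.mulVecLin = -Dᵀ.mulVecLin := LinearMap.ext fun v => by simp
  rw [← mem_map_ker_iff (D := -D) (fun i j => hεf i j) hf, hneg, LinearMap.ker_neg]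

theorem zCenter_eq_map_ker (hεe : ∀ i j, ⁅ε i, e j⁆ = D i j • e j)
    (hεf : ∀ i j, ⁅ε i, f j⁆ = (-D i j) • f j) (he : ∀ j, e j ≠ 0) (hf : ∀ j, f j ≠ 0) :
    zCenter L (Submodule.span ℂ (Set.range ε)) (Submodule.span ℂ (Set.range e))
        (Submodule.span ℂ (Set.range f)) =
      (LinearMap.ker Dᵀ.mulVecLin).map (Fintype.linearCombination ℂ ε) := by
  ext x
  change (_ ∧ _ ∧ _) ↔ _
  simp only [forall_mem_span_range_lie_eq_zero_iff]
  have hcoe := mem_map_ker_iff (x := x) hεe he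
  have hcof := mem_map_ker_iff_of_lie_eq_neg_smul (x := x) hεf hf
  tauto

end Pentad

namespace RealizesPentad

variable {L : Type} [LieRing L] [LieAlgebra ℂ L] {G : ℤ → Submodule ℂ L}
  {B : LinearMap.BilinForm ℂ L} {r n : ℕ} {A : Matrix (Fin r) (Fin r) ℂ}
  {D : Matrix (Fin r) (Fin n) ℂ} {γ : Fin n → ℂ} {ε : Fin r → L} {e f : Fin n → L}

theorem zCenter_eq_map_ker (hreal : RealizesPentad L G B A D γ ε e f) :
    zCenter L (G 0) (G 1) (G (-1)) =
      (LinearMap.ker Dᵀ.mulVecLin).map (Fintype.linearCombination ℂ ε) := by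
  obtain ⟨⟨-, hε⟩, ⟨he, he'⟩, ⟨hf, hf'⟩, -, hεe, hεf, -⟩ := hreal
  rw [← hε, ← he', ← hf']
  exact _root_.zCenter_eq_map_ker hεe hεf he.ne_zero hf.ne_zero

theorem finrank_zCenter (hreal : RealizesPentad L G B A D γ ε e f)
    (hC : IsUnit (cartanC A D γ).det) :
    Module.finrank ℂ (zCenter L (G 0) (G 1) (G (-1))) = r - n := by
  rw [hreal.zCenter_eq_map_ker, ← (Submodule.equivMapOfInjective _
    hreal.1.1.fintypeLinearCombination_injective _).finrank_eq,
    finrank_ker_mulVecLin_of_isUnit_det_mul (isUnit_det_transpose_mul hC)]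
  simp

theorem zCenter_inf_span_cartanCoroot (hreal : RealizesPentad L G B A D γ ε e f)
    (hC : IsUnit (cartanC A D γ).det) :
    zCenter L (G 0) (G 1) (G (-1)) ⊓ Submodule.span ℂ (Set.range (cartanCoroot A D γ ε)) = ⊥ := by
  rw [hreal.zCenter_eq_map_ker, span_range_cartanCoroot,
    ← Submodule.map_inf _ hreal.1.1.fintypeLinearCombination_injective,
    (isCompl_ker_range_of_isUnit_det_mul (isUnit_det_transpose_mul hC)).inf_eq_bot,
    Submodule.map_bot]

theorem zCenter_sup_span_cartanCoroot (hreal : RealizesPentad L G B A D γ ε e f)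
    (hC : IsUnit (cartanC A D γ).det) :
    zCenter L (G 0) (G 1) (G (-1)) ⊔ Submodule.span ℂ (Set.range (cartanCoroot A D γ ε)) =
      G 0 := by
  rw [hreal.zCenter_eq_map_ker, span_range_cartanCoroot, ← Submodule.map_sup,
    (isCompl_ker_range_of_isUnit_det_mul (isUnit_det_transpose_mul hC)).sup_eq_top,
    Submodule.map_top, Fintype.range_linearCombination, hreal.1.2]

theorem span_cartanCoroot_le (hreal : RealizesPentad L G B A D γ ε e f) :
    Submodule.span ℂ (Set.range (cartanCoroot A D γ ε)) ≤ G 0 := by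
  rw [span_range_cartanCoroot, ← hreal.1.2, ← Fintype.range_linearCombination]
  exact LinearMap.map_le_range

theorem lie_mem_span_cartanCoroot (hreal : RealizesPentad L G B A D γ ε e f) {x y : L}
    (hx : x ∈ G 1) (hy : y ∈ G (-1)) :
    ⁅x, y⁆ ∈ Submodule.span ℂ (Set.range (cartanCoroot A D γ ε)) := by
  obtain ⟨-, ⟨-, he⟩, ⟨-, hf⟩, -, -, -, hef, -⟩ := hreal
  rw [← he] at hx
  rw [← hf] at hy
  refine lie_mem_of_mem_span ?_ hx hy
  rintro _ ⟨i, rfl⟩ _ ⟨j, rfl⟩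
  rw [hef i j]
  split_ifs
  exacts [Submodule.subset_span ⟨i, rfl⟩, Submodule.zero_mem _]

theorem eq_zero_of_mem_span_cartanCoroot_of_lie_one (hreal : RealizesPentad L G B A D γ ε e f)
    (hC : IsUnit (cartanC A D γ).det) {x : L}
    (hx : x ∈ Submodule.span ℂ (Set.range (cartanCoroot A D γ ε)))
    (hxe : ∀ y ∈ G 1, ⁅x, y⁆ = 0) : x = 0 := by
  have hxZ : x ∈ zCenter L (G 0) (G 1) (G (-1)) := by
    have ⟨⟨_, hε⟩, ⟨he, he'⟩, _, _, hεe, _⟩ := hreal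
    rw [hreal.zCenter_eq_map_ker, mem_map_ker_iff hεe he.ne_zero, hε]
    exact ⟨hreal.span_cartanCoroot_le hx, fun j => hxe _ (he' ▸ Submodule.subset_span ⟨j, rfl⟩)⟩
  exact (Submodule.mem_bot ℂ).1
    (hreal.zCenter_inf_span_cartanCoroot hC ▸ Submodule.mem_inf.2 ⟨hxZ, hx⟩)

theorem eq_zero_of_mem_span_cartanCoroot_of_lie_neg_one
    (hreal : RealizesPentad L G B A D γ ε e f) (hC : IsUnit (cartanC A D γ).det) {x : L}
    (hx : x ∈ Submodule.span ℂ (Set.range (cartanCoroot A D γ ε)))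
    (hxf : ∀ y ∈ G (-1), ⁅x, y⁆ = 0) : x = 0 := by
  have hxZ : x ∈ zCenter L (G 0) (G 1) (G (-1)) := by
    have ⟨⟨_, hε⟩, _, ⟨hf, hf'⟩, _, _, hεf, _⟩ := hreal
    rw [hreal.zCenter_eq_map_ker, mem_map_ker_iff_of_lie_eq_neg_smul hεf hf.ne_zero, hε]
    exact ⟨hreal.span_cartanCoroot_le hx, fun j => hxf _ (hf' ▸ Submodule.subset_span ⟨j, rfl⟩)⟩
  exact (Submodule.mem_bot ℂ).1
    (hreal.zCenter_inf_span_cartanCoroot hC ▸ Submodule.mem_inf.2 ⟨hxZ, hx⟩)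

theorem eq_zero_of_mem_one_of_lie_neg_one (hreal : RealizesPentad L G B A D γ ε e f)
    (hC : IsUnit (cartanC A D γ).det) {x : L} (hx : x ∈ G 1)
    (hxf : ∀ y ∈ G (-1), ⁅x, y⁆ = 0) : x = 0 := by
  obtain ⟨⟨hε, -⟩, ⟨-, he⟩, ⟨-, hf⟩, -, -, -, hef, -⟩ := hreal
  rw [← he] at hx
  exact eq_zero_of_forall_lie_eq_zero_of_lie_eq_ite hef (cartanCoroot_ne_zero hε hC) hx
    fun j => hxf _ (hf ▸ Submodule.subset_span ⟨j, rfl⟩)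

theorem eq_zero_of_mem_neg_one_of_lie_one (hreal : RealizesPentad L G B A D γ ε e f)
    (hC : IsUnit (cartanC A D γ).det) {x : L} (hx : x ∈ G (-1))
    (hxe : ∀ y ∈ G 1, ⁅x, y⁆ = 0) : x = 0 := by
  obtain ⟨⟨hε, -⟩, ⟨-, he⟩, ⟨-, hf⟩, -, -, -, hef, -⟩ := hreal
  have hfe : ∀ a j, ⁅f a, e j⁆ = if a = j then -cartanCoroot A D γ ε a else 0 := fun a j => by
    rw [← lie_skew, hef j a]
    by_cases h : a = j
    · subst h; simp only [if_true]; rfl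
    · simp [h, Ne.symm h]
  rw [← hf] at hx
  exact eq_zero_of_forall_lie_eq_zero_of_lie_eq_ite hfe
    (fun j => neg_ne_zero.2 (cartanCoroot_ne_zero hε hC j)) hx
    fun j => hxe _ (he ▸ Submodule.subset_span ⟨j, rfl⟩)

theorem lie_cartanCoroot_e (hreal : RealizesPentad L G B A D γ ε e f) (i j : Fin n) :
    ⁅cartanCoroot A D γ ε i, e j⁆ = cartanC A D γ i j • e j := by
  obtain ⟨-, -, -, -, hεe, -⟩ := hreal
  rw [lie_cartanCoroot_eq_smul hεe, ← cartanC_transpose, transpose_apply]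

theorem lie_cartanCoroot_f (hreal : RealizesPentad L G B A D γ ε e f) (i j : Fin n) :
    ⁅cartanCoroot A D γ ε i, f j⁆ = (-cartanC A D γ i j) • f j := by
  obtain ⟨-, -, -, -, -, hεf, -⟩ := hreal
  rw [lie_cartanCoroot_eq_smul (D' := -D) hεf, transpose_neg, Matrix.neg_mul,
    ← cartanC_transpose, neg_apply, transpose_apply]

end RealizesPentad

namespace GoodGrading

variable {L : Type} [LieRing L] [LieAlgebra ℂ L] {G : ℤ → Submodule ℂ L}
  {B : LinearMap.BilinForm ℂ L} {r n : ℕ} {A : Matrix (Fin r) (Fin r) ℂ}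
  {D : Matrix (Fin r) (Fin n) ℂ} {γ : Fin n → ℂ} {ε : Fin r → L} {e f : Fin n → L}

theorem lie_eq_zero_of_mem_zCenter (hG : GoodGrading L G B)
    (hreal : RealizesPentad L G B A D γ ε e f) (z : L)
    (hz : z ∈ zCenter L (G 0) (G 1) (G (-1))) (x : L) : ⁅z, x⁆ = 0 := by
  obtain ⟨hz0, hz1, hzm⟩ := hz
  obtain ⟨-, -, -, hgen, -⟩ := hG
  refine lie_eq_zero_of_mem_lieSpan ?_ (hgen ▸ LieSubalgebra.mem_top x)
  rintro y ((hy | hy) | hy)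
  exacts [hzm y hy, hreal.2.2.2.1 z hz0 y hy, hz1 y hy]

theorem coe_lieSpan_eq_iSup_update (hG : GoodGrading L G B)
    (hreal : RealizesPentad L G B A D γ ε e f) :
    (LieSubalgebra.lieSpan ℂ L ((G 1 : Set L) ∪ G (-1))).toSubmodule =
      ⨆ i, Function.update G 0 (Submodule.span ℂ (Set.range (cartanCoroot A D γ ε))) i := by
  have hH := hreal.span_cartanCoroot_le
  have h1 := fun x (hx : x ∈ G 1) y (hy : y ∈ G (-1)) => hreal.lie_mem_span_cartanCoroot hx hy
  obtain ⟨-, -, hgr, -, hstep, -⟩ := hG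
  obtain ⟨-, ⟨-, he⟩, ⟨-, hf⟩, hab, -, -, hef, -⟩ := hreal
  refine _root_.coe_lieSpan_eq_iSup_update hgr hstep hH
    (fun x hx y hy => hab x (hH hx) y (hH hy)) h1 ?_
  rw [Submodule.span_le]
  rintro _ ⟨j, rfl⟩
  have hefj : ⁅e j, f j⁆ = cartanCoroot A D γ ε j := by rw [hef, if_pos rfl]; rfl
  exact hefj ▸ LieSubalgebra.lie_mem _
    (LieSubalgebra.subset_lieSpan (Or.inl (he ▸ Submodule.subset_span ⟨j, rfl⟩)))
    (LieSubalgebra.subset_lieSpan (Or.inr (hf ▸ Submodule.subset_span ⟨j, rfl⟩)))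

theorem lieSpan_inf_eq_update (hG : GoodGrading L G B)
    (hreal : RealizesPentad L G B A D γ ε e f) (i : ℤ) :
    (LieSubalgebra.lieSpan ℂ L ((G 1 : Set L) ∪ G (-1))).toSubmodule ⊓ G i =
      Function.update G 0 (Submodule.span ℂ (Set.range (cartanCoroot A D γ ε))) i := by
  rw [hG.coe_lieSpan_eq_iSup_update hreal]
  refine IsModularLattice.iSup_inf_eq_of_iSupIndep hG.1 (fun j => ?_) i
  rcases eq_or_ne j 0 with rfl | hj
  · simpa using hreal.span_cartanCoroot_le
  · simp [hj]

theorem iSup_lieSpan_inf_eq (hG : GoodGrading L G B)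
    (hreal : RealizesPentad L G B A D γ ε e f) :
    ⨆ i, (LieSubalgebra.lieSpan ℂ L ((G 1 : Set L) ∪ G (-1))).toSubmodule ⊓ G i =
      (LieSubalgebra.lieSpan ℂ L ((G 1 : Set L) ∪ G (-1))).toSubmodule := by
  simp only [hG.lieSpan_inf_eq_update hreal]
  exact (hG.coe_lieSpan_eq_iSup_update hreal).symm

theorem zCenter_inf_lieSpan_eq_bot (hG : GoodGrading L G B)
    (hreal : RealizesPentad L G B A D γ ε e f) (hC : IsUnit (cartanC A D γ).det) :
    zCenter L (G 0) (G 1) (G (-1)) ⊓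
      (LieSubalgebra.lieSpan ℂ L ((G 1 : Set L) ∪ G (-1))).toSubmodule = ⊥ := by
  have hZ : zCenter L (G 0) (G 1) (G (-1)) ≤ G 0 := fun x hx => hx.1
  rw [← inf_eq_left.2 hZ, inf_assoc, inf_comm (G 0), hG.lieSpan_inf_eq_update hreal 0,
    Function.update_self, hreal.zCenter_inf_span_cartanCoroot hC]

theorem zCenter_sup_lieSpan_eq_top (hG : GoodGrading L G B)
    (hreal : RealizesPentad L G B A D γ ε e f) (hC : IsUnit (cartanC A D γ).det) :
    zCenter L (G 0) (G 1) (G (-1)) ⊔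
      (LieSubalgebra.lieSpan ℂ L ((G 1 : Set L) ∪ G (-1))).toSubmodule = ⊤ := by
  have hle : ∀ i, Function.update G 0 (Submodule.span ℂ (Set.range (cartanCoroot A D γ ε))) i ≤
      (LieSubalgebra.lieSpan ℂ L ((G 1 : Set L) ∪ G (-1))).toSubmodule := fun i =>
    hG.lieSpan_inf_eq_update hreal i ▸ inf_le_left
  rw [eq_top_iff, ← hG.2.1]
  refine iSup_le fun i => ?_
  rcases eq_or_ne i 0 with rfl | hi
  · calc G 0 = _ := (hreal.zCenter_sup_span_cartanCoroot hC).symm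
      _ ≤ _ := sup_le_sup_left (by simpa using hle 0) _
  · exact le_sup_of_le_right (by simpa [hi] using hle i)

theorem lieSpan_local_part_eq (hG : GoodGrading L G B)
    (hreal : RealizesPentad L G B A D γ ε e f) :
    let L' := LieSubalgebra.lieSpan ℂ L ((G 1 : Set L) ∪ G (-1))
    LieSubalgebra.lieSpan ℂ L (((L'.toSubmodule ⊓ G (-1) : Submodule ℂ L) : Set L)
        ∪ ((L'.toSubmodule ⊓ G 0 : Submodule ℂ L) : Set L)
        ∪ ((L'.toSubmodule ⊓ G 1 : Submodule ℂ L) : Set L)) = L' := by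
  intro L'
  have hloc : ∀ i, i ≠ 0 → L'.toSubmodule ⊓ G i = G i := fun i hi => by
    simpa [hi] using hG.lieSpan_inf_eq_update hreal i
  apply le_antisymm
  · rw [LieSubalgebra.lieSpan_le]
    rintro x ((hx | hx) | hx) <;> exact hx.1
  · refine LieSubalgebra.lieSpan_mono ?_
    rw [hloc 1 one_ne_zero, hloc (-1) (by norm_num)]
    rintro x (hx | hx)
    exacts [Or.inr hx, Or.inl (Or.inl hx)]

theorem isTransitiveGrading_lieSpan_inf (hG : GoodGrading L G B)
    (hreal : RealizesPentad L G B A D γ ε e f) (hC : IsUnit (cartanC A D γ).det) :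
    IsTransitiveGrading fun i =>
      (LieSubalgebra.lieSpan ℂ L ((G 1 : Set L) ∪ G (-1))).toSubmodule ⊓ G i := by
  simp only [hG.lieSpan_inf_eq_update hreal]
  obtain ⟨-, -, -, -, -, -, -, hiv, hv⟩ := hG
  constructor
  · intro i hi x hx hxf
    dsimp only at hx hxf
    rw [Function.update_of_ne (by norm_num)] at hxf
    rcases (by omega : i = 0 ∨ i = 1 ∨ 2 ≤ i) with rfl | rfl | hi2
    · exact hreal.eq_zero_of_mem_span_cartanCoroot_of_lie_neg_one hC (by simpa using hx) hxf
    · exact hreal.eq_zero_of_mem_one_of_lie_neg_one hC (by simpa using hx) hxf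
    · rw [Function.update_of_ne (by omega)] at hx
      exact hiv i hi2 x hx hxf
  · intro i hi x hx hxe
    dsimp only at hx hxe
    rw [Function.update_of_ne one_ne_zero] at hxe
    rcases (by omega : i = 0 ∨ i = -1 ∨ i ≤ -2) with rfl | rfl | hi2
    · exact hreal.eq_zero_of_mem_span_cartanCoroot_of_lie_one hC (by simpa using hx) hxe
    · exact hreal.eq_zero_of_mem_neg_one_of_lie_one hC (by simpa using hx) hxe
    · rw [Function.update_of_ne (by omega)] at hx
      exact hv i hi2 x hx hxe

end GoodGrading

theorem stmt_14_general
    (L : Type) [LieRing L] [LieAlgebra ℂ L]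
    (G : ℤ → Submodule ℂ L)
    (B : LinearMap.BilinForm ℂ L)
    (hG : GoodGrading L G B)
    (r n : ℕ)
    (A : Matrix (Fin r) (Fin r) ℂ)
    (D : Matrix (Fin r) (Fin n) ℂ)
    (γ : Fin n → ℂ)
    (ε : Fin r → L) (e : Fin n → L) (f : Fin n → L)
    (hreal : RealizesPentad L G B A D γ ε e f)
    -- regularity: the Cartan matrix is invertible
    (hC : IsUnit (cartanC A D γ).det) :
    letI hL : Fin n → L := fun i => ∑ k, (Aᵀ * D * Matrix.diagonal γ) k i • ε k
    letI Z : Submodule ℂ L := zCenter L (G 0) (G 1) (G (-1))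
    letI L' : LieSubalgebra ℂ L :=
      LieSubalgebra.lieSpan ℂ L ((G 1 : Set L) ∪ (G (-1) : Set L))
    -- Z is the (r-n)-dimensional center part
    Module.finrank ℂ ↥Z = r - n ∧
    (∀ z ∈ Z, ∀ x : L, ⁅z, x⁆ = 0) ∧
    -- 𝔏 = Z ⊕ 𝔏', a direct sum of ideals
    Z ⊓ L'.toSubmodule = ⊥ ∧
    Z ⊔ L'.toSubmodule = ⊤ ∧
    (∀ x : L, ∀ z ∈ Z, ⁅x, z⁆ ∈ Z) ∧
    (∀ x : L, ∀ y ∈ L', ⁅x, y⁆ ∈ L') ∧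
    -- 𝔏' is graded with degree-0 component span{h₁, …, h_n}
    L'.toSubmodule ⊓ G 0 = Submodule.span ℂ (Set.range hL) ∧
    (⨆ i : ℤ, (L'.toSubmodule ⊓ G i)) = L'.toSubmodule ∧
    -- 𝔏' is generated by its local part
    LieSubalgebra.lieSpan ℂ L (((L'.toSubmodule ⊓ G (-1) : Submodule ℂ L) : Set L)
        ∪ ((L'.toSubmodule ⊓ G 0 : Submodule ℂ L) : Set L)
        ∪ ((L'.toSubmodule ⊓ G 1 : Submodule ℂ L) : Set L)) = L' ∧
    -- 𝔏' is transitive (with components 𝔏'_i = 𝔏' ⊓ G i)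
    (∀ i : ℤ, 0 ≤ i → ∀ x ∈ L'.toSubmodule ⊓ G i,
      (∀ y ∈ L'.toSubmodule ⊓ G (-1), ⁅x, y⁆ = 0) → x = 0) ∧
    (∀ i : ℤ, i ≤ 0 → ∀ x ∈ L'.toSubmodule ⊓ G i,
      (∀ y ∈ L'.toSubmodule ⊓ G 1, ⁅x, y⁆ = 0) → x = 0) ∧
    -- the local part of 𝔏' is the contragredient local Lie algebra of C(A,D,Γ)
    (∀ (i : Fin n) (j : Fin n), ⁅hL i, e j⁆ = cartanC A D γ i j • e j) ∧
    (∀ (i : Fin n) (j : Fin n), ⁅hL i, f j⁆ = (-cartanC A D γ i j) • f j) ∧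
    (∀ i j : Fin n, ⁅e i, f j⁆ = if i = j then hL i else 0) := by
  have ⟨_, _, _, _, _, _, hef, _⟩ := hreal
  have hZ := hG.lie_eq_zero_of_mem_zCenter hreal
  have htop := hG.zCenter_sup_lieSpan_eq_top hreal hC
  have htrans := hG.isTransitiveGrading_lieSpan_inf hreal hC
  refine ⟨hreal.finrank_zCenter hC, hZ, hG.zCenter_inf_lieSpan_eq_bot hreal hC, htop,
    fun x z hz => ?_, fun x y hy => LieSubalgebra.lie_mem_of_sup_eq_top hZ htop x hy,
    (hG.lieSpan_inf_eq_update hreal 0).trans (Function.update_self _ _ _),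
    hG.iSup_lieSpan_inf_eq hreal,
    hG.lieSpan_local_part_eq hreal, htrans.1, htrans.2, hreal.lie_cartanCoroot_e,
    hreal.lie_cartanCoroot_f, hef⟩
  rw [← lie_skew, hZ z hz x, neg_zero]
  exact Submodule.zero_mem _

/-- A graded Lie algebra satisfying (i)–(v) whose local part realizes a
regular pentad of Cartan type `P(r,n;A,D,Γ)` is the direct sum of its `(r-n)`-dimensional
center `Z` and of the ideal `𝔏'` generated by `𝔏₁ ∪ 𝔏₋₁`, which is a transitive graded
Lie algebra whose local part is the contragredient local Lie algebra of the Cartan matrix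
`C(A,D,Γ)`. -/
theorem stmt_14
    (L : Type) [LieRing L] [LieAlgebra ℂ L]
    (G : ℤ → Submodule ℂ L)
    (B : LinearMap.BilinForm ℂ L)
    (hG : GoodGrading L G B)
    (r n : ℕ) (hr : 0 < r) (hn : 0 < n)
    (A : Matrix (Fin r) (Fin r) ℂ) (hA : IsUnit A.det)
    (D : Matrix (Fin r) (Fin n) ℂ)
    (γ : Fin n → ℂ) (hγ : ∀ j, γ j ≠ 0)
    (ε : Fin r → L) (e : Fin n → L) (f : Fin n → L)
    (hreal : RealizesPentad L G B A D γ ε e f)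
    -- regularity: the Cartan matrix is invertible
    (hC : IsUnit (cartanC A D γ).det) :
    letI hL : Fin n → L := fun i => ∑ k, (Aᵀ * D * Matrix.diagonal γ) k i • ε k
    letI Z : Submodule ℂ L := zCenter L (G 0) (G 1) (G (-1))
    letI L' : LieSubalgebra ℂ L :=
      LieSubalgebra.lieSpan ℂ L ((G 1 : Set L) ∪ (G (-1) : Set L))
    -- Z is the (r-n)-dimensional center part
    Module.finrank ℂ ↥Z = r - n ∧
    (∀ z ∈ Z, ∀ x : L, ⁅z, x⁆ = 0) ∧
    -- 𝔏 = Z ⊕ 𝔏', a direct sum of ideals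
    Z ⊓ L'.toSubmodule = ⊥ ∧
    Z ⊔ L'.toSubmodule = ⊤ ∧
    (∀ x : L, ∀ z ∈ Z, ⁅x, z⁆ ∈ Z) ∧
    (∀ x : L, ∀ y ∈ L', ⁅x, y⁆ ∈ L') ∧
    -- 𝔏' is graded with degree-0 component span{h₁, …, h_n}
    L'.toSubmodule ⊓ G 0 = Submodule.span ℂ (Set.range hL) ∧
    (⨆ i : ℤ, (L'.toSubmodule ⊓ G i)) = L'.toSubmodule ∧
    -- 𝔏' is generated by its local part
    LieSubalgebra.lieSpan ℂ L (((L'.toSubmodule ⊓ G (-1) : Submodule ℂ L) : Set L)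
        ∪ ((L'.toSubmodule ⊓ G 0 : Submodule ℂ L) : Set L)
        ∪ ((L'.toSubmodule ⊓ G 1 : Submodule ℂ L) : Set L)) = L' ∧
    -- 𝔏' is transitive (with components 𝔏'_i = 𝔏' ⊓ G i)
    (∀ i : ℤ, 0 ≤ i → ∀ x ∈ L'.toSubmodule ⊓ G i,
      (∀ y ∈ L'.toSubmodule ⊓ G (-1), ⁅x, y⁆ = 0) → x = 0) ∧
    (∀ i : ℤ, i ≤ 0 → ∀ x ∈ L'.toSubmodule ⊓ G i,
      (∀ y ∈ L'.toSubmodule ⊓ G 1, ⁅x, y⁆ = 0) → x = 0) ∧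
    -- the local part of 𝔏' is the contragredient local Lie algebra of C(A,D,Γ)
    (∀ (i : Fin n) (j : Fin n), ⁅hL i, e j⁆ = cartanC A D γ i j • e j) ∧
    (∀ (i : Fin n) (j : Fin n), ⁅hL i, f j⁆ = (-cartanC A D γ i j) • f j) ∧
    (∀ i j : Fin n, ⁅e i, f j⁆ = if i = j then hL i else 0) :=
  stmt_14_general L G B hG r n A D γ ε e f hreal hC
end
end

section
/- Let A ∈ M(r,r;ℂ) and Ã ∈ M(k,k;ℂ) be invertible matrices, Γ ∈ M(r,r;ℂ) an invertible diagonal matrix, D ∈ M(r,r;ℂ) a matrix such that C(A,D,Γ) = Γ·ᵗD·A·D is invertible, and Λ ∈ M(r,k;ℂ) arbitrary. Form the block matrices Ā = [[Ã, O],[O, A]] ∈ M(k+r, k+r;ℂ), D̄ = [[O, I_k],[D, Λ]] ∈ M(r+k, r+k;ℂ) (first block row of sizes k×r and k×k; second of sizes r×r and r×k), and Γ̄ = [[Γ, O],[O, I_k]]. Then the Cartan matrix C(Ā, D̄, Γ̄) = Γ̄·ᵗD̄·Ā·D̄ equals the block matrix [[C(A,D,Γ), Γ·ᵗD·A·Λ],[ᵗΛ·A·D,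 Ã + ᵗΛ·A·Λ]], and this matrix is invertible. -/
noncomputable section

open Matrix

/-- For the block matrices `Ā = [[Ã,O],[O,A]]`, `D̄ = [[O,I_k],[D,Λ]]`,
`Γ̄ = [[Γ,O],[O,I_k]]`, the Cartan matrix `C(Ā,D̄,Γ̄) = Γ̄·ᵗD̄·Ā·D̄` equals the block matrix
`[[C(A,D,Γ), Γ·ᵗD·A·Λ],[ᵗΛ·A·D, Ã + ᵗΛ·A·Λ]]`, and it is invertible. -/
theorem stmt_15 (r k : ℕ)
    (A : Matrix (Fin r) (Fin r) ℂ) (hA : IsUnit A.det)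
    (Aₜ : Matrix (Fin k) (Fin k) ℂ) (hAₜ : IsUnit Aₜ.det)
    (γ : Fin r → ℂ) (hγ : ∀ i, γ i ≠ 0)
    (D : Matrix (Fin r) (Fin r) ℂ)
    (hC : IsUnit (cartanC A D γ).det)
    (Λ : Matrix (Fin r) (Fin k) ℂ) :
    (Matrix.fromBlocks (Matrix.diagonal γ) 0 0 (1 : Matrix (Fin k) (Fin k) ℂ))
        * (Matrix.fromBlocks (0 : Matrix (Fin k) (Fin r) ℂ) (1 : Matrix (Fin k) (Fin k) ℂ) D Λ)ᵀ
        * (Matrix.fromBlocks Aₜ 0 0 A)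
        * (Matrix.fromBlocks (0 : Matrix (Fin k) (Fin r) ℂ) (1 : Matrix (Fin k) (Fin k) ℂ) D Λ)
      = Matrix.fromBlocks (cartanC A D γ) (Matrix.diagonal γ * Dᵀ * A * Λ)
          (Λᵀ * A * D) (Aₜ + Λᵀ * A * Λ) ∧
    IsUnit ((Matrix.fromBlocks (Matrix.diagonal γ) 0 0 (1 : Matrix (Fin k) (Fin k) ℂ))
        * (Matrix.fromBlocks (0 : Matrix (Fin k) (Fin r) ℂ) (1 : Matrix (Fin k) (Fin k) ℂ) D Λ)ᵀ
        * (Matrix.fromBlocks Aₜ 0 0 A)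
        * (Matrix.fromBlocks (0 : Matrix (Fin k) (Fin r) ℂ) (1 : Matrix (Fin k) (Fin k) ℂ) D Λ)).det := by
  have heq : (Matrix.fromBlocks (Matrix.diagonal γ) 0 0 (1 : Matrix (Fin k) (Fin k) ℂ))
        * (Matrix.fromBlocks (0 : Matrix (Fin k) (Fin r) ℂ) (1 : Matrix (Fin k) (Fin k) ℂ) D Λ)ᵀ
        * (Matrix.fromBlocks Aₜ 0 0 A)
        * (Matrix.fromBlocks (0 : Matrix (Fin k) (Fin r) ℂ) (1 : Matrix (Fin k) (Fin k) ℂ) D Λ)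
      = Matrix.fromBlocks (cartanC A D γ) (Matrix.diagonal γ * Dᵀ * A * Λ)
          (Λᵀ * A * D) (Aₜ + Λᵀ * A * Λ) := by
    rw [Matrix.fromBlocks_transpose]
    simp [Matrix.fromBlocks_multiply, cartanC, Matrix.mul_assoc]
  have hD : IsUnit D.det := by
    have h := hC
    unfold cartanC at h
    simp only [Matrix.det_mul] at h
    exact isUnit_of_mul_isUnit_right h
  refine ⟨heq, ?_⟩
  rw [heq]
  have hfact : Matrix.fromBlocks (cartanC A D γ) (Matrix.diagonal γ * Dᵀ * A * Λ)
          (Λᵀ * A * D) (Aₜ + Λᵀ * A * Λ)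
      = (Matrix.fromBlocks (Matrix.diagonal γ) 0 0 (1 : Matrix (Fin k) (Fin k) ℂ))
        * (Matrix.fromBlocks D Λ (0 : Matrix (Fin k) (Fin r) ℂ)
            (1 : Matrix (Fin k) (Fin k) ℂ))ᵀ
        * (Matrix.fromBlocks A 0 0 Aₜ)
        * (Matrix.fromBlocks D Λ (0 : Matrix (Fin k) (Fin r) ℂ)
            (1 : Matrix (Fin k) (Fin k) ℂ)) := by
    rw [Matrix.fromBlocks_transpose]
    simp [Matrix.fromBlocks_multiply, cartanC, Matrix.mul_assoc, add_comm]
  rw [hfact]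
  simp only [Matrix.det_mul, Matrix.det_transpose]
  have hΓbar : IsUnit (Matrix.fromBlocks (Matrix.diagonal γ) 0 0
      (1 : Matrix (Fin k) (Fin k) ℂ)).det := by
    rw [Matrix.det_fromBlocks_zero₁₂, Matrix.det_diagonal, Matrix.det_one, mul_one]
    exact isUnit_iff_ne_zero.mpr (Finset.prod_ne_zero_iff.mpr fun i _ => hγ i)
  have hDbar : IsUnit (Matrix.fromBlocks D Λ (0 : Matrix (Fin k) (Fin r) ℂ)
      (1 : Matrix (Fin k) (Fin k) ℂ)).det := by
    rw [Matrix.det_fromBlocks_zero₂₁, Matrix.det_one, mul_one]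
    exact hD
  have hAbar : IsUnit (Matrix.fromBlocks A 0 0 Aₜ).det := by
    rw [Matrix.det_fromBlocks_zero₁₂]
    exact hA.mul hAₜ
  exact ((hΓbar.mul hDbar).mul hAbar).mul hDbar

end
end

section
/- Let L = ⊕_{n∈ℤ} L_n be a graded Lie algebra over ℂ generated by its local part L_{−1} ⊕ L₀ ⊕ L₁. (a) Let V = ⊕_{m≤0} V_m be an L-module with a compatible gradation (L_j·V_m ⊆ V_{m+j}, and V_m = 0 for m > 0) with V₀ ≠ 0. If V is irreducible as an L-module, then V is transitive: for every m ≤ −1 and v ∈ V_m, L₁·v = 0 implies v = 0. (b) Dually, let U = ⊕_{m≥0} U_m be an L-module with a compatible gradation (L_j·U_m ⊆ U_{m+j}, and U_m = 0 for m < 0) with U₀ ≠ 0. If U is irreducible as an L-module, then for every m ≥ 1 and u ∈ U_m, L_{−1}·u = 0 implies u = 0. -/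
section Aux

variable {L V : Type} [LieRing L] [LieAlgebra ℂ L]
  [AddCommGroup V] [Module ℂ V] [LieRingModule L V] [LieModule ℂ L V]

/-- Orbit of `v` under repeated bracketing by elements of `A`. -/
inductive MyOrbit (A : Set L) (v : V) : V → Prop
  | base : MyOrbit A v v
  | step : ∀ y ∈ A, ∀ u : V, MyOrbit A v u → MyOrbit A v ⁅y, u⁆

theorem aux_transitive
    (G : ℤ → Submodule ℂ L)
    (hbrack : ∀ i j : ℤ, ∀ x ∈ G i, ∀ y ∈ G j, ⁅x, y⁆ ∈ G (i + j))
    (hgen : LieSubalgebra.lieSpan ℂ L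
      ((G (-1) : Set L) ∪ (G 0 : Set L) ∪ (G 1 : Set L)) = ⊤)
    (W : ℤ → Submodule ℂ V)
    (hindep : iSupIndep W)
    (hbrackW : ∀ j m : ℤ, ∀ x ∈ G j, ∀ v ∈ W m, ⁅x, v⁆ ∈ W (m + j))
    (hW0 : W 0 ≠ ⊥)
    (hirr : ∀ N : LieSubmodule ℂ L V, N = ⊥ ∨ N = ⊤)
    (m : ℤ) (hm : m ≤ -1) (v : V) (hv : v ∈ W m)
    (hann : ∀ x ∈ G 1, ⁅x, v⁆ = 0) : v = 0 := by
  set A : Set L := (G (-1) : Set L) ∪ (G 0 : Set L) with hA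
  set M : Submodule ℂ V := Submodule.span ℂ {u | MyOrbit A v u} with hM
  have key : ∀ y : L, (∀ u, MyOrbit A v u → ⁅y, u⁆ ∈ M) → ∀ u ∈ M, ⁅y, u⁆ ∈ M := by
    intro y hy u hu
    have hmap : Submodule.map (LieModule.toEnd ℂ L V y) M ≤ M := by
      rw [hM, Submodule.map_span, Submodule.span_le]
      rintro _ ⟨u, hu, rfl⟩
      simpa using hy u hu
    exact hmap ⟨u, hu, rfl⟩
  have stabA : ∀ y ∈ A, ∀ u ∈ M, ⁅y, u⁆ ∈ M := fun y hy =>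
    key y (fun u hu => Submodule.subset_span (MyOrbit.step y hy u hu))
  have hG1orbit : ∀ u, MyOrbit A v u → ∀ z ∈ G 1, ⁅z, u⁆ ∈ M := by
    intro u hu
    induction hu with
    | base =>
      intro z hz
      rw [hann z hz]; exact M.zero_mem
    | step y hy u' hu' ih =>
      intro z hz
      rw [leibniz_lie]
      refine M.add_mem ?_ (stabA y hy _ (ih z hz))
      rcases hy with hy | hy
      · have h0 : ⁅z, y⁆ ∈ G 0 := by
          have := hbrack 1 (-1) z hz y hy
          norm_num at this; exact this
        exact Submodule.subset_span (MyOrbit.step ⁅z, y⁆ (Or.inr h0) u' hu')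
      · have h1 : ⁅z, y⁆ ∈ G 1 := by
          have := hbrack 1 0 z hz y hy
          norm_num at this; exact this
        exact ih _ h1
  have stabG1 : ∀ z ∈ G 1, ∀ u ∈ M, ⁅z, u⁆ ∈ M := fun z hz =>
    key z (fun u hu => hG1orbit u hu z hz)
  -- stabilizer subalgebra
  set St : LieSubalgebra ℂ L :=
    { carrier := {x | ∀ u ∈ M, ⁅x, u⁆ ∈ M}
      add_mem' := fun hx hy u hu => by
        rw [add_lie]; exact M.add_mem (hx u hu) (hy u hu)
      zero_mem' := fun u hu => by rw [zero_lie]; exact M.zero_mem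
      smul_mem' := fun c x hx u hu => by
        rw [smul_lie]; exact M.smul_mem c (hx u hu)
      lie_mem' := fun {x y} hx hy u hu => by
        rw [lie_lie]; exact M.sub_mem (hx _ (hy u hu)) (hy _ (hx u hu)) } with hSt
  have hsub : ((G (-1) : Set L) ∪ (G 0 : Set L) ∪ (G 1 : Set L)) ⊆ (St : Set L) := by
    rintro x ((hx | hx) | hx)
    · exact fun u hu => stabA x (Or.inl hx) u hu
    · exact fun u hu => stabA x (Or.inr hx) u hu
    · exact fun u hu => stabG1 x hx u hu
  have hStTop : ∀ x : L, ∀ u ∈ M, ⁅x, u⁆ ∈ M := by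
    intro x
    have : x ∈ LieSubalgebra.lieSpan ℂ L
        ((G (-1) : Set L) ∪ (G 0 : Set L) ∪ (G 1 : Set L)) := by
      rw [hgen]; exact LieSubalgebra.mem_top x
    exact (LieSubalgebra.lieSpan_le.mpr hsub) this
  set N : LieSubmodule ℂ L V :=
    { M with lie_mem := fun {x u} hu => hStTop x u hu } with hN
  have hvN : v ∈ N := Submodule.subset_span MyOrbit.base
  -- degree bound
  set X : Submodule ℂ V := ⨆ j : {j : ℤ // j ≤ -1}, W j.val with hX
  have hWleX : ∀ j : ℤ, j ≤ -1 → W j ≤ X := fun j hj => le_iSup (fun j : {j : ℤ // j ≤ -1} => W j.val) ⟨j, hj⟩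
  have hXstab : ∀ d : ℤ, d ≤ 0 → ∀ y ∈ G d, ∀ u ∈ X, ⁅y, u⁆ ∈ X := by
    intro d hd y hy u hu
    have hmap : Submodule.map (LieModule.toEnd ℂ L V y) X ≤ X := by
      rw [hX, Submodule.map_iSup]
      refine iSup_le fun j => ?_
      refine le_trans ?_ (hWleX (j.val + d) (by have := j.2; omega))
      rw [Submodule.map_le_iff_le_comap]
      intro w hw
      simpa using hbrackW d j.val y hy w hw
    exact hmap ⟨u, hu, rfl⟩
  have horbX : ∀ u, MyOrbit A v u → u ∈ X := by
    intro u hu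
    induction hu with
    | base => exact hWleX m hm hv
    | step y hy u' hu' ih =>
      rcases hy with hy | hy
      · exact hXstab (-1) (by norm_num) y hy u' ih
      · exact hXstab 0 le_rfl y hy u' ih
  have hMX : M ≤ X := by
    rw [hM, Submodule.span_le]; exact horbX
  rcases hirr N with hbot | htop
  · have : v ∈ (⊥ : LieSubmodule ℂ L V) := hbot ▸ hvN
    simpa using this
  · exfalso
    apply hW0
    have hW0X : W 0 ≤ X := by
      intro w hw
      have hwN : w ∈ N := htop ▸ LieSubmodule.mem_top w
      exact hMX hwN
    have hXle : X ≤ ⨆ j ≠ (0 : ℤ), W j := by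
      refine iSup_le fun j => ?_
      exact le_iSup₂ (f := fun j _ => W j) j.val (by have := j.2; omega)
    have hdisj := hindep 0
    rw [eq_bot_iff]
    exact hdisj.le_bot.trans' (le_inf le_rfl (hW0X.trans hXle))

end Aux


/-- Over a graded Lie algebra generated by its local part, an irreducible
negatively graded module (with nonzero base space) is transitive; dually for positively
graded modules. -/
theorem stmt_16
    (L : Type) [LieRing L] [LieAlgebra ℂ L]
    (G : ℤ → Submodule ℂ L)
    (hindep : iSupIndep G)
    (hsup : (⨆ i, G i) = ⊤)
    (hbrack : ∀ i j : ℤ, ∀ x ∈ G i, ∀ y ∈ G j, ⁅x, y⁆ ∈ G (i + j))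
    (hgen : LieSubalgebra.lieSpan ℂ L
      ((G (-1) : Set L) ∪ (G 0 : Set L) ∪ (G 1 : Set L)) = ⊤)
    -- a negatively graded module V
    (V : Type) [AddCommGroup V] [Module ℂ V] [LieRingModule L V] [LieModule ℂ L V]
    (W : ℤ → Submodule ℂ V)
    -- a positively graded module U
    (U : Type) [AddCommGroup U] [Module ℂ U] [LieRingModule L U] [LieModule ℂ L U]
    (W' : ℤ → Submodule ℂ U) :
    -- (a)
    ((iSupIndep W ∧ (⨆ m, W m) = ⊤ ∧
      (∀ j m : ℤ, ∀ x ∈ G j, ∀ v ∈ W m, ⁅x, v⁆ ∈ W (m + j)) ∧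
      (∀ m : ℤ, 0 < m → W m = ⊥) ∧ W 0 ≠ ⊥ ∧
      (∀ N : LieSubmodule ℂ L V, N = ⊥ ∨ N = ⊤)) →
      ∀ m : ℤ, m ≤ -1 → ∀ v ∈ W m, (∀ x ∈ G 1, ⁅x, v⁆ = 0) → v = 0) ∧
    -- (b)
    ((iSupIndep W' ∧ (⨆ m, W' m) = ⊤ ∧
      (∀ j m : ℤ, ∀ x ∈ G j, ∀ u ∈ W' m, ⁅x, u⁆ ∈ W' (m + j)) ∧
      (∀ m : ℤ, m < 0 → W' m = ⊥) ∧ W' 0 ≠ ⊥ ∧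
      (∀ N : LieSubmodule ℂ L U, N = ⊥ ∨ N = ⊤)) →
      ∀ m : ℤ, 1 ≤ m → ∀ u ∈ W' m, (∀ x ∈ G (-1), ⁅x, u⁆ = 0) → u = 0) := by
  constructor
  · rintro ⟨hindepW, -, hbrackW, -, hW0, hirr⟩ m hm v hv hann
    exact aux_transitive G hbrack hgen W hindepW hbrackW hW0 hirr m hm v hv hann
  · rintro ⟨hindepW', -, hbrackW', -, hW0', hirr'⟩ m hm u hu hann
    set Gn : ℤ → Submodule ℂ L := fun j => G (-j) with hGn
    set Wn : ℤ → Submodule ℂ U := fun j => W' (-j) with hWn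
    have hbrackn : ∀ i j : ℤ, ∀ x ∈ Gn i, ∀ y ∈ Gn j, ⁅x, y⁆ ∈ Gn (i + j) := by
      intro i j x hx y hy
      have h := hbrack (-i) (-j) x hx y hy
      rw [show -i + -j = -(i + j) by ring] at h
      exact h
    have hgenn : LieSubalgebra.lieSpan ℂ L
        ((Gn (-1) : Set L) ∪ (Gn 0 : Set L) ∪ (Gn 1 : Set L)) = ⊤ := by
      have hset : ((Gn (-1) : Set L) ∪ (Gn 0 : Set L) ∪ (Gn 1 : Set L))
          = ((G (-1) : Set L) ∪ (G 0 : Set L) ∪ (G 1 : Set L)) := by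
        have h1 : Gn (-1) = G 1 := by simp [hGn]
        have h2 : Gn 0 = G 0 := by simp [hGn]
        have h3 : Gn 1 = G (-1) := by simp [hGn]
        rw [h1, h2, h3]
        ext x; simp only [Set.mem_union]; tauto
      rw [hset]; exact hgen
    have hindepn : iSupIndep Wn := by
      intro i
      have h := hindepW' (-i)
      refine h.mono_right ?_
      refine iSup₂_le fun j hj => ?_
      exact le_iSup₂ (f := fun k _ => W' k) (-j) (by omega)
    have hbrackWn : ∀ j m : ℤ, ∀ x ∈ Gn j, ∀ u ∈ Wn m, ⁅x, u⁆ ∈ Wn (m + j) := by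
      intro j k x hx w hw
      have h := hbrackW' (-j) (-k) x hx w hw
      rw [show -k + -j = -(k + j) by ring] at h
      exact h
    have hW0n : Wn 0 ≠ ⊥ := by simpa [hWn] using hW0'
    have hun : u ∈ Wn (-m) := by simpa [hWn] using hu
    have hannn : ∀ x ∈ Gn 1, ⁅x, u⁆ = 0 := by
      intro x hx
      exact hann x (by simpa [hGn] using hx)
    exact aux_transitive Gn hbrackn hgenn Wn hindepn hbrackWn hW0n hirr'
      (-m) (by omega) u hun hannn
end

section
/- Let 𝔏 = ⊕_{m∈ℤ} 𝔏_m be a graded Lie algebra over ℂ with a bilinear form B on its local part satisfying conditions (i)–(v), whose local part realizes the pentad of Cartan type P(r,n;A,D,Γ). Then 𝔏 is transitive if and only if the matrix D ∈ M(r,n;ℂ) has rank r and has no zero column. In particular, when r = n, 𝔏 is transitive if and only if the square matrix D is invertible. -/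
/-!
By (iv) and (v), transitivity only has to be checked in degrees `0` and `±1`, where everything
is explicit in the bases `ε`, `e`, `f`. An element `∑ cᵢ εᵢ` of `𝔏₀` acts on `e_j` and `f_j` by
the scalars `±(cᵀ D)_j`, so `𝔏₀` acts faithfully on `𝔏_{±1}` iff the rows of `D` are independent,
i.e. `rank D = r`. An element `∑ c_j e_j` of `𝔏₁` sends `f_k` to `c_k h_k` (and dually for
`𝔏₋₁`), so `𝔏_{±1}` acts faithfully iff every `h_k` is nonzero; since `ᵗA` and `Γ` are invertible,
`h_k = 0` exactly when the `k`-th column of `D` vanishes. For square `D`, full rank already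
excludes zero columns and amounts to `det D ≠ 0`.
-/

noncomputable section

open Matrix

namespace Matrix

variable {K m n : Type*} [Field K] [Fintype m] [Fintype n]

theorem rank_eq_card_height_iff {D : Matrix m n K} :
    D.rank = Fintype.card m ↔ ∀ c : m → K, c ᵥ* D = 0 → c = 0 := by
  rw [rank_eq_finrank_span_row, ← Set.finrank, eq_comm,
    ← linearIndependent_iff_card_eq_finrank_span, ← vecMul_injective_iff, ← coe_vecMulLinear,
    injective_iff_map_eq_zero]
  rfl

theorem exists_mul_mul_diagonal_ne_zero_iff [DecidableEq m] [DecidableEq n] {P : Matrix m m K}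
    (hP : IsUnit P.det) (D : Matrix m n K) {γ : n → K} {k : n} (hγ : γ k ≠ 0) :
    (∃ i, (P * D * diagonal γ) i k ≠ 0) ↔ ∃ i, D i k ≠ 0 := by
  have hinj : Function.Injective P.mulVec :=
    mulVec_injective_iff_isUnit.mpr ((isUnit_iff_isUnit_det P).mpr hP)
  have hcol : (fun i => (P * D) i k) = 0 ↔ (fun i => D i k) = 0 :=
    hinj.eq_iff' (mulVec_zero P)
  simp only [mul_diagonal, ne_eq, mul_eq_zero, hγ, or_false]
  simpa only [funext_iff, Pi.zero_apply, not_forall] using not_congr hcol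

theorem rank_eq_card_and_exists_ne_zero_iff_isUnit_det [DecidableEq m] {D : Matrix m m K} :
    (D.rank = Fintype.card m ∧ ∀ j, ∃ i, D i j ≠ 0) ↔ IsUnit D.det := by
  have hrank : D.rank = Fintype.card m ↔ IsUnit D.det := by
    rw [rank_eq_card_height_iff, ← isUnit_iff_isUnit_det, ← vecMul_injective_iff_isUnit,
      ← coe_vecMulLinear, injective_iff_map_eq_zero]
    rfl
  refine ⟨fun h => hrank.mp h.1, fun h => ⟨hrank.mpr h, fun j => ?_⟩⟩
  by_contra! hj
  exact not_isUnit_zero (det_eq_zero_of_column_eq_zero j hj ▸ h)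

end Matrix

section BracketFaithful

variable {K L : Type*} [Field K] [LieRing L] [LieAlgebra K L]

def BracketFaithful (U V : Submodule K L) : Prop :=
  ∀ x ∈ U, (∀ y ∈ V, ⁅x, y⁆ = 0) → x = 0

theorem forall_mem_span_lie_eq_zero_iff {x : L} {s : Set L} :
    (∀ y ∈ Submodule.span K s, ⁅x, y⁆ = 0) ↔ ∀ y ∈ s, ⁅x, y⁆ = 0 :=
  Submodule.span_le (p := LinearMap.ker (LieAlgebra.ad K L x))

theorem bracketFaithful_span_iff {ι κ : Type*} [Fintype ι] {b : ι → L}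
    (hb : LinearIndependent K b) (v : κ → L) :
    BracketFaithful (Submodule.span K (Set.range b)) (Submodule.span K (Set.range v)) ↔
      ∀ c : ι → K, (∀ j, ⁅∑ i, c i • b i, v j⁆ = 0) → c = 0 := by
  simp only [BracketFaithful, Submodule.mem_span_range_iff_exists_fun, forall_exists_index,
    forall_apply_eq_imp_iff, forall_mem_span_lie_eq_zero_iff, Set.forall_mem_range]
  refine forall_congr' fun c => imp_congr_right fun _ => ?_
  exact ⟨fun h => Fintype.linearIndependent_iff.mp hb c h |> funext, fun h => by simp [h]⟩

theorem bracketFaithful_span_iff_of_lie_eq_smul {ι κ : Type*} [Fintype ι] {b : ι → L}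
    (hb : LinearIndependent K b) {v : κ → L} (hv : ∀ j, v j ≠ 0) {W : Matrix ι κ K}
    (hW : ∀ i j, ⁅b i, v j⁆ = W i j • v j) :
    BracketFaithful (Submodule.span K (Set.range b)) (Submodule.span K (Set.range v)) ↔
      ∀ c : ι → K, c ᵥ* W = 0 → c = 0 := by
  have hsum (c : ι → K) (j : κ) : ⁅∑ i, c i • b i, v j⁆ = (c ᵥ* W) j • v j := by
    simp only [sum_lie, smul_lie, hW, smul_smul, ← Finset.sum_smul, vecMul, dotProduct]
  simp only [bracketFaithful_span_iff hb, hsum, smul_eq_zero, hv, or_false, funext_iff,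
    Pi.zero_apply]

theorem bracketFaithful_span_iff_of_lie_eq_zero_of_ne {ι : Type*} [Fintype ι] {b v : ι → L}
    (hb : LinearIndependent K b) (hbv : ∀ i k, i ≠ k → ⁅b i, v k⁆ = 0) :
    BracketFaithful (Submodule.span K (Set.range b)) (Submodule.span K (Set.range v)) ↔
      ∀ k, ⁅b k, v k⁆ ≠ 0 := by
  classical
  have hsum (c : ι → K) (k : ι) : ⁅∑ i, c i • b i, v k⁆ = c k • ⁅b k, v k⁆ := by
    rw [sum_lie, Finset.sum_eq_single_of_mem k (Finset.mem_univ k) fun i _ hik => by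
      rw [smul_lie, hbv i k hik, smul_zero], smul_lie]
  simp only [bracketFaithful_span_iff hb, hsum, smul_eq_zero]
  refine ⟨fun h k hk => ?_, fun h c hc => funext fun k => (hc k).resolve_right (h k)⟩
  simpa using congrFun (h (Pi.single k 1) fun j => by
    by_cases hjk : j = k <;> simp [hjk, hk]) k

end BracketFaithful

theorem transitiveGr_iff_bracketFaithful {L : Type} [LieRing L] [LieAlgebra ℂ L]
    {G : ℤ → Submodule ℂ L}
    (hpos : ∀ i : ℤ, 2 ≤ i → ∀ x ∈ G i, (∀ y ∈ G (-1), ⁅x, y⁆ = 0) → x = 0)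
    (hneg : ∀ i : ℤ, i ≤ -2 → ∀ x ∈ G i, (∀ y ∈ G 1, ⁅x, y⁆ = 0) → x = 0) :
    TransitiveGr L G ↔ (BracketFaithful (G 0) (G (-1)) ∧ BracketFaithful (G 1) (G (-1))) ∧
      BracketFaithful (G 0) (G 1) ∧ BracketFaithful (G (-1)) (G 1) := by
  refine ⟨fun ⟨h₁, h₂⟩ => ⟨⟨h₁ 0 le_rfl, h₁ 1 zero_le_one⟩, h₂ 0 le_rfl, h₂ (-1) (by norm_num)⟩,
    fun ⟨⟨h₀₁, h₁₁⟩, h₀₂, h₁₂⟩ => ⟨fun i hi => ?_, fun i hi => ?_⟩⟩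
  · obtain rfl | rfl | h := show i = 0 ∨ i = 1 ∨ 2 ≤ i by omega
    exacts [h₀₁, h₁₁, hpos i h]
  · obtain rfl | rfl | h := show i = 0 ∨ i = -1 ∨ i ≤ -2 by omega
    exacts [h₀₂, h₁₂, hneg i h]

namespace RealizesPentad

variable {L : Type} [LieRing L] [LieAlgebra ℂ L] {G : ℤ → Submodule ℂ L}
  {B : LinearMap.BilinForm ℂ L} {r n : ℕ} {A : Matrix (Fin r) (Fin r) ℂ}
  {D : Matrix (Fin r) (Fin n) ℂ} {γ : Fin n → ℂ} {ε : Fin r → L} {e f : Fin n → L}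
  (hreal : RealizesPentad L G B A D γ ε e f)
include hreal

theorem bracketFaithful_zero_neg_one_iff :
    BracketFaithful (G 0) (G (-1)) ↔ ∀ c : Fin r → ℂ, c ᵥ* D = 0 → c = 0 := by
  obtain ⟨⟨hε, hε_span⟩, -, ⟨hf, hf_span⟩, -, -, hεf, -⟩ := hreal
  rw [← hε_span, ← hf_span, bracketFaithful_span_iff_of_lie_eq_smul hε hf.ne_zero
    (W := -D) fun i j => hεf i j]
  simp only [vecMul_neg, neg_eq_zero]

theorem bracketFaithful_zero_one_iff :
    BracketFaithful (G 0) (G 1) ↔ ∀ c : Fin r → ℂ, c ᵥ* D = 0 → c = 0 := by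
  obtain ⟨⟨hε, hε_span⟩, ⟨he, he_span⟩, -, -, hεe, -⟩ := hreal
  rw [← hε_span, ← he_span, bracketFaithful_span_iff_of_lie_eq_smul hε he.ne_zero hεe]

theorem lie_e_f_self_ne_zero_iff (hA : IsUnit A.det) (hγ : ∀ j, γ j ≠ 0) (k : Fin n) :
    ⁅e k, f k⁆ ≠ 0 ↔ ∃ i, D i k ≠ 0 := by
  obtain ⟨⟨hε, -⟩, -, -, -, -, -, hef, -⟩ := hreal
  have hAt : IsUnit Aᵀ.det := by rwa [det_transpose]
  rw [hef, if_pos rfl, ← Matrix.exists_mul_mul_diagonal_ne_zero_iff hAt D (hγ k), Ne,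
    ← not_forall, not_iff_not]
  exact ⟨Fintype.linearIndependent_iff.mp hε _, fun h => by simp [h]⟩

theorem bracketFaithful_one_neg_one_iff (hA : IsUnit A.det) (hγ : ∀ j, γ j ≠ 0) :
    BracketFaithful (G 1) (G (-1)) ↔ ∀ k, ∃ i, D i k ≠ 0 := by
  have hself := hreal.lie_e_f_self_ne_zero_iff hA hγ
  obtain ⟨⟨-, -⟩, ⟨he, he_span⟩, ⟨-, hf_span⟩, -, -, -, hef, -⟩ := hreal
  rw [← he_span, ← hf_span, bracketFaithful_span_iff_of_lie_eq_zero_of_ne he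
    fun i k hik => by rw [hef, if_neg hik]]
  exact forall_congr' hself

theorem bracketFaithful_neg_one_one_iff (hA : IsUnit A.det) (hγ : ∀ j, γ j ≠ 0) :
    BracketFaithful (G (-1)) (G 1) ↔ ∀ k, ∃ i, D i k ≠ 0 := by
  have hself := hreal.lie_e_f_self_ne_zero_iff hA hγ
  obtain ⟨⟨-, -⟩, ⟨-, he_span⟩, ⟨hf, hf_span⟩, -, -, -, hef, -⟩ := hreal
  rw [← he_span, ← hf_span, bracketFaithful_span_iff_of_lie_eq_zero_of_ne hf
    fun i k hik => by rw [← lie_skew, hef, if_neg (Ne.symm hik), neg_zero]]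
  refine forall_congr' fun k => ?_
  rw [← lie_skew, neg_ne_zero, hself]

end RealizesPentad

theorem stmt_17_general
    (L : Type) [LieRing L] [LieAlgebra ℂ L]
    (G : ℤ → Submodule ℂ L)
    (B : LinearMap.BilinForm ℂ L)
    (hG : GoodGrading L G B)
    (r n : ℕ)
    (A : Matrix (Fin r) (Fin r) ℂ) (hA : IsUnit A.det)
    (D : Matrix (Fin r) (Fin n) ℂ)
    (γ : Fin n → ℂ) (hγ : ∀ j, γ j ≠ 0)
    (ε : Fin r → L) (e : Fin n → L) (f : Fin n → L)
    (hreal : RealizesPentad L G B A D γ ε e f) :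
    (TransitiveGr L G ↔ (D.rank = r ∧ ∀ j : Fin n, ∃ i : Fin r, D i j ≠ 0)) ∧
    (∀ hrn : r = n, TransitiveGr L G
      ↔ IsUnit (Matrix.reindex (Equiv.refl (Fin r)) (finCongr hrn.symm) D).det) := by
  obtain ⟨-, -, -, -, -, -, -, hpos, hneg⟩ := hG
  have hrank : D.rank = r ↔ ∀ c : Fin r → ℂ, c ᵥ* D = 0 → c = 0 := by
    simpa using Matrix.rank_eq_card_height_iff (D := D)
  have htrans : TransitiveGr L G ↔ D.rank = r ∧ ∀ j : Fin n, ∃ i : Fin r, D i j ≠ 0 := by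
    rw [transitiveGr_iff_bracketFaithful hpos hneg, hreal.bracketFaithful_zero_neg_one_iff,
      hreal.bracketFaithful_one_neg_one_iff hA hγ, hreal.bracketFaithful_zero_one_iff,
      hreal.bracketFaithful_neg_one_one_iff hA hγ, hrank, and_self]
  refine ⟨htrans, fun hrn => ?_⟩
  subst hrn
  simpa [htrans] using Matrix.rank_eq_card_and_exists_ne_zero_iff_isUnit_det (D := D)

/-- A graded Lie algebra satisfying (i)–(v) whose local part realizes the
pentad of Cartan type `P(r,n;A,D,Γ)` is transitive iff `rank D = r` and `D` has no zero
column; when `r = n` this says `D` is invertible. -/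
theorem stmt_17
    (L : Type) [LieRing L] [LieAlgebra ℂ L]
    (G : ℤ → Submodule ℂ L)
    (B : LinearMap.BilinForm ℂ L)
    (hG : GoodGrading L G B)
    (r n : ℕ) (hr : 0 < r) (hn : 0 < n)
    (A : Matrix (Fin r) (Fin r) ℂ) (hA : IsUnit A.det)
    (D : Matrix (Fin r) (Fin n) ℂ)
    (γ : Fin n → ℂ) (hγ : ∀ j, γ j ≠ 0)
    (ε : Fin r → L) (e : Fin n → L) (f : Fin n → L)
    (hreal : RealizesPentad L G B A D γ ε e f) :
    (TransitiveGr L G ↔ (D.rank = r ∧ ∀ j : Fin n, ∃ i : Fin r, D i j ≠ 0)) ∧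
    (∀ hrn : r = n, TransitiveGr L G
      ↔ IsUnit (Matrix.reindex (Equiv.refl (Fin r)) (finCongr hrn.symm) D).det) :=
  stmt_17_general L G B hG r n A hA D γ hγ ε e f hreal

end
end
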